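/- arXiv:2501.13906 — 6 statements merged into one kernel-verified Lean document; each statement's English description precedes it below -/
import Mathlib

section
/- Every finite set C ⊆ S^{22} ⊆ ℝ^{23} such that ⟨x,y⟩ ∈ [−1, 11/23] \ ((−13/23, −7/23) ∪ (5/23, 6/23)) for all distinct x, y ∈ C satisfies |C| ≤ 48600. -/
open scoped Classical
open MeasureTheory Finset

namespace Cert

open MvPolynomial

abbrev P23 := MvPolynomial (Fin 23) ℝ

noncomputable def w (α : Fin 23 →₀ ℕ) : ℝ := ∏ j, (Nat.factorial (α j) : ℝ)

lemma w_nonneg (α) : 0 ≤ w α :=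
  Finset.prod_nonneg fun _ _ => by positivity

noncomputable def Fp (p q : P23) : ℝ := ∑ α ∈ p.support, w α * p.coeff α * q.coeff α

lemma Fp_eq_of_subset {p : P23} {s : Finset (Fin 23 →₀ ℕ)} (h : p.support ⊆ s) (q : P23) :
    Fp p q = ∑ α ∈ s, w α * p.coeff α * q.coeff α := by
  refine Finset.sum_subset h fun α _ hα => ?_
  rw [MvPolynomial.notMem_support_iff.mp hα]; ring

lemma Fp_comm (p q : P23) : Fp p q = Fp q p := by
  classical
  rw [Fp_eq_of_subset (Finset.subset_union_left : p.support ⊆ p.support ∪ q.support) q,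
    Fp_eq_of_subset (Finset.subset_union_right : q.support ⊆ p.support ∪ q.support) p]
  exact Finset.sum_congr rfl fun α _ => by ring

lemma Fp_nonneg (p : P23) : 0 ≤ Fp p p := by
  refine Finset.sum_nonneg fun α _ => ?_
  have := w_nonneg α
  nlinarith [sq_nonneg (p.coeff α)]

lemma Fp_add_left (p p' q : P23) : Fp (p + p') q = Fp p q + Fp p' q := by
  classical
  set s := p.support ∪ p'.support ∪ (p + p').support with hs
  rw [Fp_eq_of_subset (Finset.subset_union_right : _ ⊆ s) q,
    Fp_eq_of_subset ((Finset.subset_union_left).trans Finset.subset_union_left : p.support ⊆ s) q,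
    Fp_eq_of_subset ((Finset.subset_union_right).trans Finset.subset_union_left : p'.support ⊆ s) q,
    ← Finset.sum_add_distrib]
  exact Finset.sum_congr rfl fun α _ => by rw [MvPolynomial.coeff_add]; ring

lemma Fp_add_right (p q q' : P23) : Fp p (q + q') = Fp p q + Fp p q' := by
  unfold Fp
  rw [← Finset.sum_add_distrib]
  exact Finset.sum_congr rfl fun α _ => by rw [MvPolynomial.coeff_add]; ring

lemma Fp_zero_left (q : P23) : Fp 0 q = 0 := by simp [Fp]

lemma Fp_zero_right (p : P23) : Fp p 0 = 0 := by simp [Fp]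

lemma Fp_C_mul_left (a : ℝ) (p q : P23) : Fp (C a * p) q = a * Fp p q := by
  classical
  rw [Fp_eq_of_subset (show (C a * p).support ⊆ p.support by
    rw [← MvPolynomial.smul_eq_C_mul]; exact Finsupp.support_smul) q, Fp, Finset.mul_sum]
  exact Finset.sum_congr rfl fun α _ => by
    rw [← MvPolynomial.smul_eq_C_mul, MvPolynomial.coeff_smul, smul_eq_mul]; ring

lemma Fp_C_mul_right (a : ℝ) (p q : P23) : Fp p (C a * q) = a * Fp p q := by
  rw [Fp_comm, Fp_C_mul_left, Fp_comm]

lemma Fp_sum_left {ι : Type*} (s : Finset ι) (f : ι → P23) (q : P23) :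
    Fp (∑ i ∈ s, f i) q = ∑ i ∈ s, Fp (f i) q := by
  classical
  induction s using Finset.induction_on with
  | empty => simp [Fp_zero_left]
  | insert _ _ h ih => rw [Finset.sum_insert h, Fp_add_left, ih, Finset.sum_insert h]

lemma Fp_sum_right {ι : Type*} (s : Finset ι) (p : P23) (f : ι → P23) :
    Fp p (∑ i ∈ s, f i) = ∑ i ∈ s, Fp p (f i) := by
  classical
  induction s using Finset.induction_on with
  | empty => simp [Fp_zero_right]
  | insert _ _ h ih => rw [Finset.sum_insert h, Fp_add_right, ih, Finset.sum_insert h]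

lemma Fp_monomial_right (p : P23) (u : Fin 23 →₀ ℕ) (b : ℝ) :
    Fp p (monomial u b) = w u * p.coeff u * b := by
  classical
  unfold Fp
  simp only [MvPolynomial.coeff_monomial]
  rw [Finset.sum_eq_single u (fun α _ hα => by rw [if_neg (fun h => hα h.symm)]; ring)
    (fun hu => by rw [MvPolynomial.notMem_support_iff.mp hu]; ring)]
  rw [if_pos rfl]


lemma w_sub_single {u : Fin 23 →₀ ℕ} {i : Fin 23} (h : u i ≠ 0) :
    w u = w (u - Finsupp.single i 1) * (u i : ℝ) := by
  unfold w
  have e1 := Finset.prod_eq_prod_diff_singleton_mul (Finset.mem_univ i)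
      (fun j => ((Nat.factorial (u j) : ℝ)))
  have e2 := Finset.prod_eq_prod_diff_singleton_mul (Finset.mem_univ i)
      (fun j => ((Nat.factorial ((u - Finsupp.single i 1 : Fin 23 →₀ ℕ) j) : ℝ)))
  rw [e1, e2]
  have h1 : ∀ j ∈ Finset.univ \ {i}, ((Nat.factorial ((u - Finsupp.single i 1 : Fin 23 →₀ ℕ) j) : ℝ))
      = (Nat.factorial (u j) : ℝ) := by
    intro j hj
    rw [Finset.mem_sdiff, Finset.mem_singleton] at hj
    rw [Finsupp.tsub_apply, Finsupp.single_apply, if_neg (fun hh => hj.2 hh.symm)]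
    norm_num
  rw [Finset.prod_congr rfl h1, mul_assoc]
  congr 1
  rw [Finsupp.tsub_apply, Finsupp.single_eq_same]
  rw [← Nat.cast_mul, Nat.mul_comm, Nat.mul_factorial_pred h]

lemma Fp_X_mul (i : Fin 23) (p q : P23) : Fp (X i * p) q = Fp p (pderiv i q) := by
  classical
  induction q using MvPolynomial.induction_on' with
  | add q q' hq hq' => rw [Fp_add_right, map_add, Fp_add_right, hq, hq']
  | monomial u b =>
    rw [Fp_monomial_right, pderiv_monomial, Fp_monomial_right, coeff_X_mul']
    by_cases h : i ∈ u.support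
    · rw [if_pos h]
      have hu : u i ≠ 0 := Finsupp.mem_support_iff.mp h
      rw [w_sub_single hu]
      push_cast
      ring
    · rw [if_neg h]
      have hu : u i = 0 := Finsupp.notMem_support_iff.mp h
      rw [hu]
      simp

noncomputable def Lp (x : Fin 23 → ℝ) : P23 := ∑ j, C (x j) * X j
noncomputable def Rp : P23 := ∑ j : Fin 23, X j * X j
noncomputable def Lap (q : P23) : P23 := ∑ j, pderiv j (pderiv j q)
noncomputable def Dop (x : Fin 23 → ℝ) (q : P23) : P23 := ∑ j, C (x j) * pderiv j q
noncomputable def Ep (q : P23) : P23 := ∑ j, X j * pderiv j q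

lemma Fp_Lp_mul (x : Fin 23 → ℝ) (p q : P23) : Fp (Lp x * p) q = Fp p (Dop x q) := by
  rw [Lp, Finset.sum_mul, Fp_sum_left, Dop, Fp_sum_right]
  exact Finset.sum_congr rfl fun j _ => by
    rw [mul_assoc, Fp_C_mul_left, Fp_X_mul, Fp_C_mul_right]

lemma Fp_Rp_mul (p q : P23) : Fp (Rp * p) q = Fp p (Lap q) := by
  rw [Rp, Finset.sum_mul, Fp_sum_left, Lap, Fp_sum_right]
  exact Finset.sum_congr rfl fun j _ => by
    rw [mul_assoc, Fp_X_mul, Fp_X_mul]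

lemma pderiv_Lp (x : Fin 23 → ℝ) (j : Fin 23) : pderiv j (Lp x) = C (x j) := by
  classical
  rw [Lp, map_sum]
  rw [Finset.sum_eq_single j (fun i _ hne => by
      rw [pderiv_mul, pderiv_C, pderiv_X_of_ne hne]; simp) (by simp)]
  rw [pderiv_mul, pderiv_C, pderiv_X_self]
  simp

lemma pderiv_Rp (j : Fin 23) : pderiv j Rp = 2 * X j := by
  classical
  rw [Rp, map_sum]
  rw [Finset.sum_eq_single j (fun i _ hne => by
      rw [pderiv_mul, pderiv_X_of_ne hne]; simp) (by simp)]
  rw [pderiv_mul, pderiv_X_self]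
  ring

lemma pderiv_pow (i : Fin 23) (a : P23) (n : ℕ) :
    pderiv i (a ^ n) = (n : ℝ) • (a ^ (n - 1) * pderiv i a) := by
  rw [(pderiv i).leibniz_pow, smul_eq_mul, ← Nat.cast_smul_eq_nsmul ℝ]

lemma Lap_add (p q : P23) : Lap (p + q) = Lap p + Lap q := by
  unfold Lap; rw [← Finset.sum_add_distrib]; simp [map_add]

lemma Lap_smul (a : ℝ) (p : P23) : Lap (a • p) = a • Lap p := by
  unfold Lap; rw [Finset.smul_sum]; simp [_root_.map_smul]

lemma two_P23 : (2 : P23) = C (2:ℝ) := (map_ofNat C 2).symm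

lemma Lap_mul (p q : P23) : Lap (p * q) =
    Lap p * q + (2:ℝ) • (∑ j, pderiv j p * pderiv j q) + p * Lap q := by
  unfold Lap
  rw [Finset.sum_mul, Finset.smul_sum, Finset.mul_sum, ← Finset.sum_add_distrib,
    ← Finset.sum_add_distrib]
  refine Finset.sum_congr rfl fun j _ => ?_
  rw [pderiv_mul, map_add, pderiv_mul, pderiv_mul]
  rw [smul_eq_C_mul, ← two_P23]
  ring

lemma Lap_Rp : Lap Rp = (46:ℝ) • (1 : P23) := by
  unfold Lap
  have h : ∀ j : Fin 23, pderiv j (pderiv j Rp) = (2 : P23) := fun j => by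
    rw [pderiv_Rp, two_P23, pderiv_mul, pderiv_C, pderiv_X_self]; ring
  rw [Finset.sum_congr rfl fun j _ => h j, Finset.sum_const]
  simp only [Finset.card_univ, Fintype.card_fin, nsmul_eq_mul, smul_eq_C_mul, mul_one]
  rw [map_ofNat]
  norm_num

lemma Bc_Rp (q : P23) : (∑ j, pderiv j Rp * pderiv j q) = (2:ℝ) • Ep q := by
  unfold Ep; rw [Finset.smul_sum]
  refine Finset.sum_congr rfl fun j _ => ?_
  rw [pderiv_Rp, two_P23, smul_eq_C_mul]; ring

lemma Lap_Rp_mul (q : P23) : Lap (Rp * q) = (46 : ℝ) • q + (4 : ℝ) • Ep q + Rp * Lap q := by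
  rw [Lap_mul, Bc_Rp, Lap_Rp, smul_mul_assoc, one_mul]
  module

lemma Ep_mul (p q : P23) : Ep (p * q) = Ep p * q + p * Ep q := by
  unfold Ep
  rw [Finset.sum_mul, Finset.mul_sum, ← Finset.sum_add_distrib]
  exact Finset.sum_congr rfl fun j _ => by rw [pderiv_mul]; ring

lemma Ep_Lp_pow (y : Fin 23 → ℝ) (m : ℕ) : Ep (Lp y ^ m) = (m : ℝ) • Lp y ^ m := by
  unfold Ep
  have h : ∀ j : Fin 23, X j * pderiv j (Lp y ^ m)
      = (m : ℝ) • (Lp y ^ (m - 1) * (C (y j) * X j)) := by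
    intro j; rw [pderiv_pow, pderiv_Lp, mul_smul_comm]; ring_nf
  rw [Finset.sum_congr rfl fun j _ => h j, ← Finset.smul_sum, ← Finset.mul_sum, ← Lp]
  cases m with
  | zero => simp
  | succ m => rw [Nat.succ_sub_one, ← pow_succ]

lemma Ep_Rp_pow (a : ℕ) : Ep (Rp ^ (a+1)) = (2 * (a+1) : ℝ) • Rp ^ (a+1) := by
  unfold Ep
  have h : ∀ j : Fin 23, X j * pderiv j (Rp ^ (a+1))
      = ((a+1 : ℕ) : ℝ) • (Rp ^ a * (2 * (X j * X j))) := by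
    intro j; rw [pderiv_pow, pderiv_Rp, mul_smul_comm, Nat.succ_sub_one]; ring_nf
  rw [Finset.sum_congr rfl fun j _ => h j, ← Finset.smul_sum, ← Finset.mul_sum]
  rw [show (∑ i : Fin 23, 2 * (X i * X i) : P23) = 2 * Rp by rw [Rp, Finset.mul_sum]]
  rw [show (Rp ^ a * (2 * Rp) : P23) = (2:ℝ) • Rp ^ (a+1) by
    rw [pow_succ, smul_eq_C_mul, ← two_P23]; ring]
  rw [smul_smul]
  push_cast
  ring_nf

lemma pderiv_Lp' (x : Fin 23 → ℝ) (j : Fin 23) : pderiv j (Lp x) = (x j) • 1 := by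
  rw [pderiv_Lp, C_eq_smul_one]

lemma Lap_Lp (y : Fin 23 → ℝ) : Lap (Lp y) = 0 := by
  unfold Lap
  rw [Finset.sum_congr rfl fun j _ => by rw [pderiv_Lp, pderiv_C]]
  simp

lemma Lap_one : Lap (1 : P23) = 0 := by
  unfold Lap
  rw [Finset.sum_congr rfl fun j _ => by rw [pderiv_one, map_zero]]
  simp

lemma Lap_Lp_pow (y : Fin 23 → ℝ) (m : ℕ) : Lap (Lp y ^ (m+2)) =
    (((m:ℝ)+2) * ((m:ℝ)+1) * (∑ j, (y j)^2)) • Lp y ^ m := by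
  unfold Lap
  have h1 : ∀ j : Fin 23, pderiv j (pderiv j (Lp y ^ (m+2)))
      = (((m:ℝ)+2) * ((m:ℝ)+1) * (y j)^2) • Lp y ^ m := by
    intro j
    simp only [pderiv_pow, pderiv_Lp', Derivation.map_smul, mul_smul_comm, mul_one,
      smul_smul, Nat.add_sub_cancel]
    congr 1
    push_cast
    ring
  rw [Finset.sum_congr rfl fun j _ => h1 j, ← Finset.sum_smul]
  congr 1
  rw [← Finset.mul_sum]

lemma Dop_Lp_pow (x y : Fin 23 → ℝ) (m : ℕ) : Dop x (Lp y ^ (m+1)) =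
    (((m:ℝ)+1) * (∑ j, x j * y j)) • Lp y ^ m := by
  unfold Dop
  have h1 : ∀ j : Fin 23, C (x j) * pderiv j (Lp y ^ (m+1))
      = (((m:ℝ)+1) * (x j * y j)) • Lp y ^ m := by
    intro j
    rw [C_eq_smul_one]
    simp only [pderiv_pow, pderiv_Lp', mul_smul_comm, smul_mul_assoc, one_mul, mul_one,
      smul_smul, Nat.add_sub_cancel]
    congr 1
    push_cast
    ring
  rw [Finset.sum_congr rfl fun j _ => h1 j, ← Finset.sum_smul]
  congr 1
  rw [← Finset.mul_sum]

lemma Fp_one_one : Fp (1 : P23) 1 = 1 := by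
  have h := Fp_monomial_right (1 : P23) 0 1
  rw [show ((monomial (0 : Fin 23 →₀ ℕ)) (1:ℝ) : P23) = 1 from by
    rw [monomial_zero']; norm_num] at h
  rw [h]
  simp [w]

lemma Fp_Lp_pow (x y : Fin 23 → ℝ) (m : ℕ) :
    Fp (Lp x ^ m) (Lp y ^ m) = (Nat.factorial m : ℝ) * (∑ j, x j * y j) ^ m := by
  induction m with
  | zero => simpa using Fp_one_one
  | succ m ih =>
    rw [pow_succ, mul_comm (Lp x ^ m), Fp_Lp_mul, Dop_Lp_pow, smul_eq_C_mul,
      Fp_C_mul_right, ih, Nat.factorial_succ]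
    push_cast
    ring

noncomputable def Z1 (y : Fin 23 → ℝ) : P23 := Lp y
noncomputable def Z2 (y : Fin 23 → ℝ) : P23 := (23:ℝ) • Lp y ^ 2 - Rp * 1
noncomputable def Z3 (y : Fin 23 → ℝ) : P23 := (25:ℝ) • Lp y ^ 3 - (3:ℝ) • (Rp * Lp y)
noncomputable def Z4 (y : Fin 23 → ℝ) : P23 :=
  (225:ℝ) • Lp y ^ 4 - (50:ℝ) • (Rp * Lp y ^ 2) + Rp * (Rp * 1)
noncomputable def Z5 (y : Fin 23 → ℝ) : P23 :=
  (261:ℝ) • Lp y ^ 5 - (90:ℝ) • (Rp * Lp y ^ 3) + (5:ℝ) • (Rp * (Rp * Lp y))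
noncomputable def Z7 (y : Fin 23 → ℝ) : P23 :=
  (9889:ℝ) • Lp y ^ 7 - (6293:ℝ) • (Rp * Lp y ^ 5) + (1015:ℝ) • (Rp * (Rp * Lp y ^ 3))
    - (35:ℝ) • (Rp * (Rp * (Rp * Lp y)))



lemma Ep_one : Ep (1 : P23) = 0 := by
  have h := Ep_Lp_pow (fun _ => (0:ℝ)) 0
  simpa using h

lemma epRp : Ep Rp = (2:ℝ) • Rp := by
  have h := Ep_Rp_pow 0
  norm_num at h
  exact h

lemma epL (y : Fin 23 → ℝ) (m : ℕ) : Ep (Lp y ^ m) = (m : ℝ) • Lp y ^ m := Ep_Lp_pow y m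

lemma epL1 (y : Fin 23 → ℝ) : Ep (Lp y) = (1:ℝ) • Lp y := by
  have h := epL y 1
  rw [pow_one] at h
  norm_num at h
  norm_num
  exact h

lemma epR1 : Ep (Rp * 1) = (2:ℝ) • (Rp * 1) := by
  rw [Ep_mul, epRp, Ep_one, mul_zero, smul_mul_assoc]
  module

lemma lapR1 : Lap (Rp * 1) = (46:ℝ) • (1:P23) := by
  rw [Lap_Rp_mul, Lap_one, mul_zero, Ep_one]
  module

variable {y : Fin 23 → ℝ}

lemma lapL2 (hy : ∑ j, (y j)^2 = 1) : Lap (Lp y ^ 2) = (2:ℝ) • (1:P23) := by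
  have h := Lap_Lp_pow y 0
  rw [hy] at h
  norm_num at h
  exact h

lemma lapL3 (hy : ∑ j, (y j)^2 = 1) : Lap (Lp y ^ 3) = (6:ℝ) • Lp y := by
  have h := Lap_Lp_pow y 1
  rw [hy] at h
  norm_num at h
  exact h

lemma lapL4 (hy : ∑ j, (y j)^2 = 1) : Lap (Lp y ^ 4) = (12:ℝ) • Lp y ^ 2 := by
  have h := Lap_Lp_pow y 2
  rw [hy] at h
  norm_num at h
  exact h

lemma lapL5 (hy : ∑ j, (y j)^2 = 1) : Lap (Lp y ^ 5) = (20:ℝ) • Lp y ^ 3 := by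
  have h := Lap_Lp_pow y 3
  rw [hy] at h
  norm_num at h
  exact h

lemma lapL7 (hy : ∑ j, (y j)^2 = 1) : Lap (Lp y ^ 7) = (42:ℝ) • Lp y ^ 5 := by
  have h := Lap_Lp_pow y 5
  rw [hy] at h
  norm_num at h
  exact h

lemma lapRL1 (hy : ∑ j, (y j)^2 = 1) : Lap (Rp * Lp y) = (50:ℝ) • Lp y := by
  rw [Lap_Rp_mul, Lap_Lp, mul_zero, epL1]
  module

lemma lapRL2 (hy : ∑ j, (y j)^2 = 1) :
    Lap (Rp * Lp y ^ 2) = (54:ℝ) • Lp y ^ 2 + (2:ℝ) • (Rp * 1) := by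
  rw [Lap_Rp_mul, lapL2 hy, epL, mul_smul_comm, mul_one]
  norm_num
  module

lemma lapRL3 (hy : ∑ j, (y j)^2 = 1) :
    Lap (Rp * Lp y ^ 3) = (58:ℝ) • Lp y ^ 3 + (6:ℝ) • (Rp * Lp y) := by
  rw [Lap_Rp_mul, lapL3 hy, epL, mul_smul_comm]
  norm_num
  module

lemma lapRL5 (hy : ∑ j, (y j)^2 = 1) :
    Lap (Rp * Lp y ^ 5) = (66:ℝ) • Lp y ^ 5 + (20:ℝ) • (Rp * Lp y ^ 3) := by
  rw [Lap_Rp_mul, lapL5 hy, epL, mul_smul_comm]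
  norm_num
  module

lemma epRL1 : Ep (Rp * Lp y) = (3:ℝ) • (Rp * Lp y) := by
  rw [Ep_mul, epRp, epL1, smul_mul_assoc, mul_smul_comm]
  module

lemma epRL3 : Ep (Rp * Lp y ^ 3) = (5:ℝ) • (Rp * Lp y ^ 3) := by
  rw [Ep_mul, epRp, epL, smul_mul_assoc, mul_smul_comm]
  norm_num
  module

lemma epRR1 : Ep (Rp * (Rp * Lp y)) = (5:ℝ) • (Rp * (Rp * Lp y)) := by
  rw [Ep_mul, epRp, epRL1, smul_mul_assoc, mul_smul_comm]
  module

lemma lapRR1 (hy : ∑ j, (y j)^2 = 1) :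
    Lap (Rp * (Rp * Lp y)) = (108:ℝ) • (Rp * Lp y) := by
  rw [Lap_Rp_mul, lapRL1 hy, epRL1, mul_smul_comm]
  module

lemma lapRR3 (hy : ∑ j, (y j)^2 = 1) : Lap (Rp * (Rp * Lp y ^ 3)) =
    (124:ℝ) • (Rp * Lp y ^ 3) + (6:ℝ) • (Rp * (Rp * Lp y)) := by
  rw [Lap_Rp_mul, lapRL3 hy, epRL3, mul_add, mul_smul_comm, mul_smul_comm]
  module

lemma lapRRR1 (hy : ∑ j, (y j)^2 = 1) :
    Lap (Rp * (Rp * (Rp * Lp y))) = (174:ℝ) • (Rp * (Rp * Lp y)) := by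
  rw [Lap_Rp_mul, lapRR1 hy, epRR1, mul_smul_comm]
  module

lemma Lap_sub (p q : P23) : Lap (p - q) = Lap p - Lap q := by
  rw [sub_eq_add_neg, sub_eq_add_neg, ← neg_one_smul ℝ q, Lap_add, Lap_smul, neg_one_smul]

lemma Lap_Z1 : Lap (Z1 y) = 0 := Lap_Lp y

lemma Lap_Z2 (hy : ∑ j, (y j)^2 = 1) : Lap (Z2 y) = 0 := by
  rw [Z2, Lap_sub, Lap_smul, lapL2 hy, lapR1]
  module

lemma Lap_Z3 (hy : ∑ j, (y j)^2 = 1) : Lap (Z3 y) = 0 := by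
  rw [Z3, Lap_sub, Lap_smul, Lap_smul, lapL3 hy, lapRL1 hy]
  module

lemma Lap_Z4 (hy : ∑ j, (y j)^2 = 1) : Lap (Z4 y) = 0 := by
  rw [Z4, Lap_add, Lap_sub, Lap_smul, Lap_smul, lapL4 hy, lapRL2 hy]
  rw [show Lap (Rp * (Rp * 1)) = (100:ℝ) • (Rp * 1) from by
    rw [Lap_Rp_mul, lapR1, epR1, mul_smul_comm]
    module]
  module

lemma Lap_Z5 (hy : ∑ j, (y j)^2 = 1) : Lap (Z5 y) = 0 := by
  rw [Z5, Lap_add, Lap_sub, Lap_smul, Lap_smul, Lap_smul, lapL5 hy, lapRL3 hy, lapRR1 hy]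
  module

lemma Lap_Z7 (hy : ∑ j, (y j)^2 = 1) : Lap (Z7 y) = 0 := by
  rw [Z7, Lap_sub, Lap_add, Lap_sub, Lap_smul, Lap_smul, Lap_smul, Lap_smul,
    lapL7 hy, lapRL5 hy, lapRR3 hy, lapRRR1 hy]
  module


lemma Fp_smul_left (a : ℝ) (p q : P23) : Fp (a • p) q = a * Fp p q := by
  rw [smul_eq_C_mul, Fp_C_mul_left]

lemma Fp_smul_right (a : ℝ) (p q : P23) : Fp p (a • q) = a * Fp p q := by
  rw [Fp_comm, Fp_smul_left, Fp_comm]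

lemma Fp_sub_left (p p' q : P23) : Fp (p - p') q = Fp p q - Fp p' q := by
  rw [sub_eq_add_neg, ← neg_one_smul ℝ p', Fp_add_left, Fp_smul_left]; ring

lemma Fp_sub_right (p q q' : P23) : Fp p (q - q') = Fp p q - Fp p q' := by
  rw [Fp_comm, Fp_sub_left, Fp_comm p q, Fp_comm p q']

section vals
variable {x y : Fin 23 → ℝ}

lemma tsym : (∑ j, y j * x j) = ∑ j, x j * y j :=
  Finset.sum_congr rfl fun j _ => mul_comm _ _

lemma fpLL (m : ℕ) : Fp (Lp y ^ m) (Lp x ^ m)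
    = (Nat.factorial m : ℝ) * (∑ j, x j * y j) ^ m := by
  rw [Fp_Lp_pow, tsym]

lemma fpLL1 : Fp (Lp y) (Lp x) = ∑ j, x j * y j := by
  have h := fpLL (x := x) (y := y) 1
  rw [pow_one, pow_one] at h
  norm_num at h
  exact h

-- value lemmas
variable (hx : ∑ j, (x j)^2 = 1) (hy : ∑ j, (y j)^2 = 1)

lemma FpZ1 : Fp (Z1 x) (Z1 y) = (∑ j, x j * y j) := by
  rw [Z1, Z1, Fp_comm, fpLL1]

include hx hy

set_option maxHeartbeats 1000000 in
lemma FpZ2 : Fp (Z2 x) (Z2 y) = 1058 * (∑ j, x j * y j)^2 - 46 := by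
  rw [Z2, Fp_sub_left, Fp_Rp_mul, Lap_Z2 hy, Fp_zero_right, Fp_smul_left]
  rw [Z2, Fp_sub_right, Fp_smul_right, Fp_Lp_pow]
  rw [Fp_comm _ (Rp * 1), Fp_Rp_mul, lapL2 hx, Fp_smul_right, Fp_one_one]
  norm_num [Nat.factorial]
  ring

set_option maxHeartbeats 1000000 in
lemma FpZ3 : Fp (Z3 x) (Z3 y) = 3750 * (∑ j, x j * y j)^3 - 450 * (∑ j, x j * y j) := by
  rw [Z3, Fp_sub_left, Fp_smul_left, Fp_smul_left, Fp_Rp_mul, Lap_Z3 hy, Fp_zero_right]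
  rw [Z3, Fp_sub_right, Fp_smul_right, Fp_Lp_pow, Fp_smul_right]
  rw [Fp_comm _ (Rp * Lp y), Fp_Rp_mul, lapL3 hx, Fp_smul_right, fpLL1]
  norm_num [Nat.factorial]
  ring

set_option maxHeartbeats 1000000 in
lemma FpZ4 : Fp (Z4 x) (Z4 y) = 1215000 * (∑ j, x j * y j)^4
    - 270000 * (∑ j, x j * y j)^2 + 5400 := by
  rw [Z4, Fp_add_left, Fp_sub_left, Fp_smul_left, Fp_smul_left,
    Fp_Rp_mul, Lap_Z4 hy, Fp_zero_right, Fp_Rp_mul, Lap_Z4 hy, Fp_zero_right]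
  rw [Z4, Fp_add_right, Fp_sub_right, Fp_smul_right, Fp_Lp_pow, Fp_smul_right]
  rw [Fp_comm _ (Rp * Lp y ^ 2), Fp_Rp_mul, lapL4 hx, Fp_smul_right, fpLL]
  rw [Fp_comm _ (Rp * (Rp * 1)), Fp_Rp_mul, lapL4 hx, Fp_smul_right,
    Fp_Rp_mul, lapL2 hx, Fp_smul_right, Fp_one_one]
  norm_num [Nat.factorial]
  ring

set_option maxHeartbeats 1000000 in
lemma FpZ5 : Fp (Z5 x) (Z5 y) = 8174520 * (∑ j, x j * y j)^5
    - 2818800 * (∑ j, x j * y j)^3 + 156600 * (∑ j, x j * y j) := by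
  rw [Z5, Fp_add_left, Fp_sub_left, Fp_smul_left, Fp_smul_left, Fp_smul_left,
    Fp_Rp_mul, Lap_Z5 hy, Fp_zero_right, Fp_Rp_mul, Lap_Z5 hy, Fp_zero_right]
  rw [Z5, Fp_add_right, Fp_sub_right, Fp_smul_right, Fp_Lp_pow, Fp_smul_right, Fp_smul_right]
  rw [Fp_comm _ (Rp * Lp y ^ 3), Fp_Rp_mul, lapL5 hx, Fp_smul_right, fpLL]
  rw [Fp_comm _ (Rp * (Rp * Lp y)), Fp_Rp_mul, lapL5 hx, Fp_smul_right,
    Fp_Rp_mul, lapL3 hx, Fp_smul_right, fpLL1]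
  norm_num [Nat.factorial]
  ring

set_option maxHeartbeats 1000000 in
lemma FpZ7 : Fp (Z7 x) (Z7 y) = 492873297840 * (∑ j, x j * y j)^7
    - 313646644080 * (∑ j, x j * y j)^5 + 50588168400 * (∑ j, x j * y j)^3
    - 1744419600 * (∑ j, x j * y j) := by
  rw [Z7, Fp_sub_left, Fp_add_left, Fp_sub_left, Fp_smul_left, Fp_smul_left, Fp_smul_left,
    Fp_smul_left, Fp_Rp_mul, Lap_Z7 hy, Fp_zero_right, Fp_Rp_mul, Lap_Z7 hy, Fp_zero_right,
    Fp_Rp_mul, Lap_Z7 hy, Fp_zero_right]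
  rw [Z7, Fp_sub_right, Fp_add_right, Fp_sub_right, Fp_smul_right, Fp_Lp_pow,
    Fp_smul_right, Fp_smul_right, Fp_smul_right]
  rw [Fp_comm _ (Rp * Lp y ^ 5), Fp_Rp_mul, lapL7 hx, Fp_smul_right, fpLL]
  rw [Fp_comm _ (Rp * (Rp * Lp y ^ 3)), Fp_Rp_mul, lapL7 hx, Fp_smul_right,
    Fp_Rp_mul, lapL5 hx, Fp_smul_right, fpLL]
  rw [Fp_comm _ (Rp * (Rp * (Rp * Lp y))), Fp_Rp_mul, lapL7 hx, Fp_smul_right,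
    Fp_Rp_mul, lapL5 hx, Fp_smul_right, Fp_Rp_mul, lapL3 hx, Fp_smul_right, fpLL1]
  norm_num [Nat.factorial]
  ring


end vals

/-- abstract moment positivity -/
lemma moment_nonneg {E : Type*} (C : Finset E) (Z : E → P23) (val : E → E → ℝ)
    (h : ∀ x ∈ C, ∀ y ∈ C, Fp (Z x) (Z y) = val x y) :
    0 ≤ ∑ x ∈ C, ∑ y ∈ C, val x y := by
  have h0 := Fp_nonneg (∑ x ∈ C, Z x)
  rw [Fp_sum_left] at h0
  calc (0:ℝ) ≤ ∑ x ∈ C, Fp (Z x) (∑ y ∈ C, Z y) := h0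
    _ = ∑ x ∈ C, ∑ y ∈ C, val x y := by
        refine Finset.sum_congr rfl fun x hxm => ?_
        rw [Fp_sum_right]
        exact Finset.sum_congr rfl fun y hym => h x hxm y hym


variable (CC : Finset (EuclideanSpace ℝ (Fin 23)))

lemma MomA (h : ∀ x ∈ CC, ∑ j, (x j)^2 = 1) :
    0 ≤ ∑ x ∈ CC, ∑ y ∈ CC, (∑ j, x j * y j) :=
  moment_nonneg CC (fun x => Z1 (fun j => x j)) _ (fun x _ y _ => FpZ1)

lemma MomB (h : ∀ x ∈ CC, ∑ j, (x j)^2 = 1) :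
    0 ≤ ∑ x ∈ CC, ∑ y ∈ CC, (1058 * (∑ j, x j * y j)^2 - 46) :=
  moment_nonneg CC (fun x => Z2 (fun j => x j)) _
    (fun x hx y hy => FpZ2 (h x hx) (h y hy))

lemma MomC (h : ∀ x ∈ CC, ∑ j, (x j)^2 = 1) :
    0 ≤ ∑ x ∈ CC, ∑ y ∈ CC, (3750 * (∑ j, x j * y j)^3 - 450 * (∑ j, x j * y j)) :=
  moment_nonneg CC (fun x => Z3 (fun j => x j)) _
    (fun x hx y hy => FpZ3 (h x hx) (h y hy))

lemma MomD (h : ∀ x ∈ CC, ∑ j, (x j)^2 = 1) :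
    0 ≤ ∑ x ∈ CC, ∑ y ∈ CC,
      (1215000 * (∑ j, x j * y j)^4 - 270000 * (∑ j, x j * y j)^2 + 5400) :=
  moment_nonneg CC (fun x => Z4 (fun j => x j)) _
    (fun x hx y hy => FpZ4 (h x hx) (h y hy))

lemma MomE (h : ∀ x ∈ CC, ∑ j, (x j)^2 = 1) :
    0 ≤ ∑ x ∈ CC, ∑ y ∈ CC, (8174520 * (∑ j, x j * y j)^5
      - 2818800 * (∑ j, x j * y j)^3 + 156600 * (∑ j, x j * y j)) :=
  moment_nonneg CC (fun x => Z5 (fun j => x j)) _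
    (fun x hx y hy => FpZ5 (h x hx) (h y hy))

lemma MomF (h : ∀ x ∈ CC, ∑ j, (x j)^2 = 1) :
    0 ≤ ∑ x ∈ CC, ∑ y ∈ CC, (492873297840 * (∑ j, x j * y j)^7
      - 313646644080 * (∑ j, x j * y j)^5 + 50588168400 * (∑ j, x j * y j)^3
      - 1744419600 * (∑ j, x j * y j)) :=
  moment_nonneg CC (fun x => Z7 (fun j => x j)) _
    (fun x hx y hy => FpZ7 (h x hx) (h y hy))


end Cert

open Cert

noncomputable def fcert (s : ℝ) : ℝ :=
  (s+13/23)*(s+7/23)*(s+1/23)^2*(s-5/23)*(s-6/23)*(s-11/23)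

lemma fcert_identity (s : ℝ) : fcert s =
    235008/17024127235
    + (125781728/965934175725) * s
    + (85640/30643429023) * (1058 * s^2 - 46)
    + (650016/157235661875) * (3750 * s^3 - 450 * s)
    + (29/1478290500) * (1215000 * s^4 - 270000 * s^2 + 5400)
    + (373/11891882970) * (8174520 * s^5 - 2818800 * s^3 + 156600 * s)
    + (1/492873297840) * (492873297840 * s^7 - 313646644080 * s^5
        + 50588168400 * s^3 - 1744419600 * s) := by
  unfold fcert
  ring


lemma fcert_nonpos {s : ℝ} (h1 : -1 ≤ s) (h2 : s ≤ 11/23)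
    (h3 : s ≤ -13/23 ∨ -7/23 ≤ s) (h4 : s ≤ 5/23 ∨ 6/23 ≤ s) : fcert s ≤ 0 := by
  unfold fcert
  rcases h3 with h3 | h3
  · -- s ≤ -13/23, then s ≤ 5/23 automatically
    have hA : s + 13/23 ≤ 0 := by linarith
    have hB : s + 7/23 ≤ 0 := by linarith
    have hD : s - 5/23 ≤ 0 := by linarith
    have hE : s - 6/23 ≤ 0 := by linarith
    have hF : s - 11/23 ≤ 0 := by linarith
    have p1 : 0 ≤ (s+13/23)*(s+7/23) := by nlinarith
    have p2 : 0 ≤ (s+13/23)*(s+7/23)*(s+1/23)^2 := mul_nonneg p1 (sq_nonneg _)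
    have p3 : (s+13/23)*(s+7/23)*(s+1/23)^2*(s-5/23) ≤ 0 :=
      mul_nonpos_of_nonneg_of_nonpos p2 hD
    have p4 : 0 ≤ (s+13/23)*(s+7/23)*(s+1/23)^2*(s-5/23)*(s-6/23) :=
      by nlinarith
    exact mul_nonpos_of_nonneg_of_nonpos p4 hF
  · rcases h4 with h4 | h4
    · have hA : 0 ≤ s + 13/23 := by linarith
      have hB : 0 ≤ s + 7/23 := by linarith
      have hD : s - 5/23 ≤ 0 := by linarith
      have hE : s - 6/23 ≤ 0 := by linarith
      have hF : s - 11/23 ≤ 0 := by linarith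
      have p2 : 0 ≤ (s+13/23)*(s+7/23)*(s+1/23)^2 :=
        mul_nonneg (mul_nonneg hA hB) (sq_nonneg _)
      have p3 : (s+13/23)*(s+7/23)*(s+1/23)^2*(s-5/23) ≤ 0 :=
        mul_nonpos_of_nonneg_of_nonpos p2 hD
      have p4 : 0 ≤ (s+13/23)*(s+7/23)*(s+1/23)^2*(s-5/23)*(s-6/23) :=
        by nlinarith
      exact mul_nonpos_of_nonneg_of_nonpos p4 hF
    · have hA : 0 ≤ s + 13/23 := by linarith
      have hB : 0 ≤ s + 7/23 := by linarith
      have hD : 0 ≤ s - 5/23 := by linarith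
      have hE : 0 ≤ s - 6/23 := by linarith
      have hF : s - 11/23 ≤ 0 := by linarith
      have p4 : 0 ≤ (s+13/23)*(s+7/23)*(s+1/23)^2*(s-5/23)*(s-6/23) :=
        mul_nonneg (mul_nonneg (mul_nonneg (mul_nonneg hA hB) (sq_nonneg _)) hD) hE
      exact mul_nonpos_of_nonneg_of_nonpos p4 hF



theorem statement7 (C : Finset (EuclideanSpace ℝ (Fin 23))) (hC : ∀ x ∈ C, ‖x‖ = 1)
    (hI : ∀ x ∈ C, ∀ y ∈ C, x ≠ y → (inner ℝ x y : ℝ) ∈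
      Set.Icc (-1 : ℝ) (11/23) \ (Set.Ioo (-13/23 : ℝ) (-7/23) ∪ Set.Ioo (5/23 : ℝ) (6/23))) :
    C.card ≤ 48600 := by
  have hinner : ∀ x y : EuclideanSpace ℝ (Fin 23), (inner ℝ x y : ℝ) = ∑ j, x j * y j := by
    intro x y
    simp [PiLp.inner_apply, RCLike.inner_apply, conj_trivial]
    exact Finset.sum_congr rfl fun j _ => mul_comm _ _
  have hunit : ∀ x ∈ C, ∑ j, (x j)^2 = 1 := by
    intro x hx
    have hn := hC x hx
    rw [EuclideanSpace.norm_eq] at hn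
    have h0 : (0:ℝ) ≤ ∑ j, ‖x j‖ ^ 2 := Finset.sum_nonneg fun j _ => by positivity
    have := Real.sqrt_eq_one.mp hn
    calc ∑ j, (x j)^2 = ∑ j, ‖x j‖^2 := by
          exact Finset.sum_congr rfl fun j _ => by rw [Real.norm_eq_abs, sq_abs]
      _ = 1 := this
  set Nr : ℝ := (C.card : ℝ) with hNr
  have hNr0 : 0 ≤ Nr := Nat.cast_nonneg _
  -- the big sum
  set S : ℝ := ∑ x ∈ C, ∑ y ∈ C, fcert (∑ j, x j * y j) with hS
  -- lower bound via moments
  have hlow : (235008/17024127235 : ℝ) * Nr^2 ≤ S := by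
    have e : S = (235008/17024127235 : ℝ) * Nr^2
        + ((125781728/965934175725) * (∑ x ∈ C, ∑ y ∈ C, (∑ j, x j * y j))
        + (85640/30643429023) * (∑ x ∈ C, ∑ y ∈ C, (1058 * (∑ j, x j * y j)^2 - 46))
        + (650016/157235661875) * (∑ x ∈ C, ∑ y ∈ C,
            (3750 * (∑ j, x j * y j)^3 - 450 * (∑ j, x j * y j)))
        + (29/1478290500) * (∑ x ∈ C, ∑ y ∈ C,
            (1215000 * (∑ j, x j * y j)^4 - 270000 * (∑ j, x j * y j)^2 + 5400))
        + (373/11891882970) * (∑ x ∈ C, ∑ y ∈ C, (8174520 * (∑ j, x j * y j)^5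
            - 2818800 * (∑ j, x j * y j)^3 + 156600 * (∑ j, x j * y j)))
        + (1/492873297840) * (∑ x ∈ C, ∑ y ∈ C, (492873297840 * (∑ j, x j * y j)^7
            - 313646644080 * (∑ j, x j * y j)^5 + 50588168400 * (∑ j, x j * y j)^3
            - 1744419600 * (∑ j, x j * y j)))) := by
      rw [hS]
      rw [Finset.sum_congr rfl fun x _ => Finset.sum_congr rfl fun y _ => fcert_identity _]
      simp only [Finset.sum_add_distrib, ← Finset.mul_sum, Finset.sum_const, nsmul_eq_mul]
      rw [hNr]
      ring
    rw [e]
    have m1 := MomA C hunit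
    have m2 := MomB C hunit
    have m3 := MomC C hunit
    have m4 := MomD C hunit
    have m5 := MomE C hunit
    have m7 := MomF C hunit
    nlinarith [m1, m2, m3, m4, m5, m7]
  -- upper bound
  have hup : S ≤ Nr * (2284277760/3404825447) := by
    rw [hS]
    have hrow : ∀ x ∈ C, ∑ y ∈ C, fcert (∑ j, x j * y j) ≤ 2284277760/3404825447 := by
      intro x hx
      rw [← Finset.sum_erase_add C _ hx]
      have hdiag : (∑ j, x j * x j) = 1 := by
        rw [← hunit x hx]
        exact Finset.sum_congr rfl fun j _ => (sq (x j)).symm ▸ by ring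
      have hdv : fcert (∑ j, x j * x j) = 2284277760/3404825447 := by
        rw [hdiag]; unfold fcert; norm_num
      have herase : ∑ y ∈ C.erase x, fcert (∑ j, x j * y j) ≤ 0 := by
        refine Finset.sum_nonpos fun y hy => ?_
        have hyC : y ∈ C := Finset.mem_of_mem_erase hy
        have hxy : x ≠ y := fun h => (Finset.ne_of_mem_erase hy) h.symm
        have hmem := hI x hx y hyC hxy
        rw [hinner] at hmem
        obtain ⟨⟨ha, hb⟩, hnot⟩ := hmem
        rw [Set.mem_union] at hnot
        push_neg at hnot
        obtain ⟨hn1, hn2⟩ := hnot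
        rw [Set.mem_Ioo] at hn1 hn2
        push_neg at hn1 hn2
        refine fcert_nonpos ha hb ?_ ?_
        · by_cases hc : -13/23 < (∑ j, x j * y j)
          · exact Or.inr (hn1 hc)
          · exact Or.inl (le_of_not_gt hc)
        · by_cases hc : 5/23 < (∑ j, x j * y j)
          · exact Or.inr (hn2 hc)
          · exact Or.inl (le_of_not_gt hc)
      linarith
    calc ∑ x ∈ C, ∑ y ∈ C, fcert (∑ j, x j * y j)
        ≤ ∑ _x ∈ C, (2284277760/3404825447 : ℝ) := Finset.sum_le_sum hrow
      _ = Nr * (2284277760/3404825447) := by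
          rw [Finset.sum_const, nsmul_eq_mul, hNr]
  -- combine
  have hNle : Nr ≤ 48600 := by nlinarith [hlow, hup, hNr0]
  have : (C.card : ℝ) ≤ 48600 := hNle
  exact_mod_cast this
end

section
/- Let T be either of the open intervals (−1, −1/3) or (−1/3, 0). Then every finite set C ⊆ S^{21} ⊆ ℝ^{22} such that ⟨x,y⟩ ∈ [−1, 1/3] \ T for all distinct x, y ∈ C satisfies |C| ≤ 2816. -/
open scoped Classical
open MeasureTheory Finset

section Statement8Aux

/-- Factoring a double sum of separated products. -/
private lemma s8_pairc (c : ℝ) (u v : Fin 22 → ℝ) (F : Fin 22 → Fin 22 → ℝ)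
    (h : ∀ i j, F i j = c * (u i * v j)) :
    ∑ i, ∑ j, F i j = c * ((∑ i, u i) * (∑ j, v j)) := by
  simp only [h]
  rw [Finset.sum_mul_sum, Finset.mul_sum]
  refine Finset.sum_congr rfl fun i _ => ?_
  rw [Finset.mul_sum]

private lemma s8_tric (u v w : Fin 22 → ℝ) (F : Fin 22 → Fin 22 → Fin 22 → ℝ)
    (h : ∀ i j k, F i j k = u i * v j * w k) :
    ∑ i, ∑ j, ∑ k, F i j k = (∑ i, u i) * (∑ j, v j) * (∑ k, w k) := by
  simp only [h]
  calc ∑ i, ∑ j, ∑ k, u i * v j * w k = ∑ i, ∑ j, (u i * v j) * ∑ k, w k := by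
        simp [Finset.mul_sum]
    _ = (∑ i, ∑ j, u i * v j) * ∑ k, w k := by
        rw [Finset.sum_mul]
        exact Finset.sum_congr rfl fun i _ => (Finset.sum_mul _ _ _).symm
    _ = (∑ i, u i) * (∑ j, v j) * (∑ k, w k) := by rw [← Finset.sum_mul_sum]

private lemma s8_singlec (c : ℝ) (u : Fin 22 → ℝ) (F : Fin 22 → ℝ)
    (h : ∀ i, F i = c * u i) : ∑ i, F i = c * ∑ i, u i := by
  simp only [h]; rw [← Finset.mul_sum]

private lemma s8_sum_delta12 (G : Fin 22 → Fin 22 → Fin 22 → ℝ) :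
    ∑ i, ∑ j, ∑ k, (if i = j then G i j k else 0) = ∑ i, ∑ k, G i i k := by
  refine Finset.sum_congr rfl fun i _ => ?_
  rw [Finset.sum_comm]
  simp [Finset.sum_ite_eq]

/-- Pointwise degree-2 zonal kernel: the feature `x ⊗ x - id/22`. -/
private lemma s8_P2 (x y : Fin 22 → ℝ) (hx : ∑ i, x i * x i = 1)
    (hy : ∑ i, y i * y i = 1) :
    ∑ i, ∑ j, (x i * x j - if i = j then (1:ℝ)/22 else 0) *
      (y i * y j - if i = j then (1:ℝ)/22 else 0)
      = (∑ i, x i * y i)^2 - 1/22 := by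
  simp only [sub_mul, mul_sub, ite_mul, mul_ite, zero_mul, mul_zero,
    Finset.sum_sub_distrib, Finset.sum_ite_eq, Finset.mem_univ, if_true]
  have h1 : ∑ i : Fin 22, ∑ j : Fin 22, x i * x j * (y i * y j) = (∑ i, x i * y i)^2 := by
    rw [sq, Finset.sum_mul_sum]
    exact Finset.sum_congr rfl fun i _ => Finset.sum_congr rfl fun j _ => by ring
  rw [h1, ← Finset.mul_sum, hy, ← Finset.sum_mul, hx]
  simp

/-- Pointwise degree-3 zonal kernel: the feature `x ⊗ x ⊗ x - Sym(x ⊗ id)/24`. -/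
private lemma s8_P3 (x y : Fin 22 → ℝ) (hx : ∑ i, x i * x i = 1)
    (hy : ∑ i, y i * y i = 1) :
    ∑ i, ∑ j, ∑ k, (x i * x j * x k - (1/24) * ((if j = k then x i else 0) +
        (if i = k then x j else 0) + (if i = j then x k else 0))) *
      (y i * y j * y k - (1/24) * ((if j = k then y i else 0) +
        (if i = k then y j else 0) + (if i = j then y k else 0)))
      = (∑ i, x i * y i)^3 - (∑ i, x i * y i)/8 := by
  simp only [sub_mul, mul_sub, add_mul, mul_add, ite_mul, mul_ite, zero_mul, mul_zero,
    Finset.sum_sub_distrib, Finset.sum_add_distrib, Finset.sum_ite_eq, Finset.sum_ite_eq',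
    Finset.mem_univ, if_true, zero_add, add_zero]
  rw [s8_sum_delta12, s8_sum_delta12]
  simp only [sub_mul, mul_sub, ite_mul, mul_ite, zero_mul, mul_zero, if_pos rfl,
    Finset.sum_sub_distrib, Finset.sum_add_distrib, Finset.sum_ite_eq, Finset.sum_ite_eq',
    Finset.mem_univ, if_true]
  rw [s8_tric (fun i => x i * y i) (fun i => x i * y i) (fun i => x i * y i)
      (fun x_1 x_2 x_3 => x x_1 * x x_2 * x x_3 * (y x_1 * y x_2 * y x_3))
      (fun i j k => by ring)]
  rw [s8_pairc (1/24) (fun i => x i * y i) (fun j => y j * y j)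
      (fun x_1 x_2 => 1 / 24 * x x_1 * (y x_1 * y x_2 * y x_2)) (fun i j => by ring)]
  rw [s8_pairc (1/24) (fun i => y i * y i) (fun j => x j * y j)
      (fun x_1 x_2 => 1 / 24 * x x_2 * (y x_1 * y x_2 * y x_1)) (fun i j => by ring)]
  rw [s8_pairc (1/24) (fun i => y i * y i) (fun j => x j * y j)
      (fun i k => 1 / 24 * x k * (y i * y i * y k)) (fun i j => by ring)]
  rw [s8_pairc (1/24) (fun i => x i * y i) (fun j => x j * x j)
      (fun x_1 x_2 => x x_1 * x x_2 * x x_2 * (1 / 24 * y x_1)) (fun i j => by ring)]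
  rw [s8_pairc (1/576) (fun i => x i * y i) (fun _ => (1:ℝ))
      (fun x_1 x_2 => 1 / 24 * x x_1 * (1 / 24 * y x_1)) (fun i j => by ring)]
  rw [s8_singlec (1/576) (fun i => x i * y i)
      (fun x_1 => 1 / 24 * x x_1 * (1 / 24 * y x_1)) (fun i => by ring)]
  rw [s8_pairc (1/24) (fun i => x i * x i) (fun j => x j * y j)
      (fun x_1 x_2 => x x_1 * x x_2 * x x_1 * (1 / 24 * y x_2)) (fun i j => by ring)]
  rw [s8_pairc (1/24) (fun i => x i * x i) (fun j => x j * y j)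
      (fun x_1 x_2 => x x_1 * x x_1 * x x_2 * (1 / 24 * y x_2)) (fun i j => by ring)]
  rw [hx, hy]
  simp only [Finset.sum_const, Finset.card_univ, Fintype.card_fin, nsmul_eq_mul]
  push_cast
  ring

/-- Sum over all monomial features of degree m. -/
private lemma s8_mono_sum (m : ℕ) (x y : Fin 22 → ℝ) :
    ∑ f : Fin m → Fin 22, (∏ j, x (f j)) * (∏ j, y (f j)) = (∑ i, x i * y i) ^ m := by
  have h : (∑ i, x i * y i) ^ m = ∏ _j : Fin m, (∑ i, x i * y i) := by
    rw [Finset.prod_const, Finset.card_univ, Fintype.card_fin]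
  rw [h, Finset.prod_univ_sum]
  exact Finset.sum_congr rfl fun f _ => (Finset.prod_mul_distrib).symm

private lemma s8_feat_mul {α β : Type*} [Fintype α] [Fintype β]
    (A A' : α → ℝ) (B B' : β → ℝ) :
    ∑ z : α × β, (A z.1 * B z.2) * (A' z.1 * B' z.2)
      = (∑ a, A a * A' a) * (∑ b, B b * B' b) := by
  rw [Fintype.sum_prod_type, Finset.sum_mul_sum]
  exact Finset.sum_congr rfl fun a _ => Finset.sum_congr rfl fun b _ => by ring

/-- The sum of a positive-definite kernel over a finite configuration is nonnegative. -/
private lemma s8_sos {ι E : Type*} [Fintype ι] (C : Finset E) (W : E → ι → ℝ) :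
    0 ≤ ∑ x ∈ C, ∑ y ∈ C, ∑ i, W x i * W y i := by
  have h : ∑ x ∈ C, ∑ y ∈ C, ∑ i, W x i * W y i = ∑ i, (∑ x ∈ C, W x i)^2 := by
    calc ∑ x ∈ C, ∑ y ∈ C, ∑ i, W x i * W y i
        = ∑ x ∈ C, ∑ i, ∑ y ∈ C, W x i * W y i :=
          Finset.sum_congr rfl fun x _ => Finset.sum_comm
      _ = ∑ i, ∑ x ∈ C, ∑ y ∈ C, W x i * W y i := Finset.sum_comm
      _ = ∑ i, (∑ x ∈ C, W x i)^2 := by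
          refine Finset.sum_congr rfl fun i _ => ?_
          rw [sq, Finset.sum_mul_sum]
  rw [h]
  positivity

private lemma s8_prodfeat2 (m : ℕ) (x y : Fin 22 → ℝ) (hx : ∑ i, x i * x i = 1)
    (hy : ∑ i, y i * y i = 1) :
    ∑ z : (Fin 22 × Fin 22) × (Fin m → Fin 22),
      ((x z.1.1 * x z.1.2 - if z.1.1 = z.1.2 then (1:ℝ)/22 else 0) * ∏ j, x (z.2 j)) *
      ((y z.1.1 * y z.1.2 - if z.1.1 = z.1.2 then (1:ℝ)/22 else 0) * ∏ j, y (z.2 j))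
      = ((∑ i, x i * y i)^2 - 1/22) * (∑ i, x i * y i)^m := by
  rw [s8_feat_mul (fun p : Fin 22 × Fin 22 => x p.1 * x p.2 - if p.1 = p.2 then (1:ℝ)/22 else 0)
      (fun p : Fin 22 × Fin 22 => y p.1 * y p.2 - if p.1 = p.2 then (1:ℝ)/22 else 0)
      (fun f : Fin m → Fin 22 => ∏ j, x (f j)) (fun f : Fin m → Fin 22 => ∏ j, y (f j))]
  rw [s8_mono_sum]
  congr 1
  rw [Fintype.sum_prod_type]
  exact s8_P2 x y hx hy

private lemma s8_prodfeat3 (m : ℕ) (x y : Fin 22 → ℝ) (hx : ∑ i, x i * x i = 1)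
    (hy : ∑ i, y i * y i = 1) :
    ∑ z : (Fin 22 × Fin 22 × Fin 22) × (Fin m → Fin 22),
      ((x z.1.1 * x z.1.2.1 * x z.1.2.2 - (1/24) * ((if z.1.2.1 = z.1.2.2 then x z.1.1 else 0) +
          (if z.1.1 = z.1.2.2 then x z.1.2.1 else 0) +
          (if z.1.1 = z.1.2.1 then x z.1.2.2 else 0))) * ∏ j, x (z.2 j)) *
      ((y z.1.1 * y z.1.2.1 * y z.1.2.2 - (1/24) * ((if z.1.2.1 = z.1.2.2 then y z.1.1 else 0) +
          (if z.1.1 = z.1.2.2 then y z.1.2.1 else 0) +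
          (if z.1.1 = z.1.2.1 then y z.1.2.2 else 0))) * ∏ j, y (z.2 j))
      = ((∑ i, x i * y i)^3 - (∑ i, x i * y i)/8) * (∑ i, x i * y i)^m := by
  rw [s8_feat_mul
      (fun p : Fin 22 × Fin 22 × Fin 22 => x p.1 * x p.2.1 * x p.2.2 -
        (1/24) * ((if p.2.1 = p.2.2 then x p.1 else 0) +
          (if p.1 = p.2.2 then x p.2.1 else 0) + (if p.1 = p.2.1 then x p.2.2 else 0)))
      (fun p : Fin 22 × Fin 22 × Fin 22 => y p.1 * y p.2.1 * y p.2.2 -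
        (1/24) * ((if p.2.1 = p.2.2 then y p.1 else 0) +
          (if p.1 = p.2.2 then y p.2.1 else 0) + (if p.1 = p.2.1 then y p.2.2 else 0)))
      (fun f : Fin m → Fin 22 => ∏ j, x (f j)) (fun f : Fin m → Fin 22 => ∏ j, y (f j))]
  rw [s8_mono_sum]
  congr 1
  rw [Fintype.sum_prod_type]
  have h : ∀ a : Fin 22, ∑ p : Fin 22 × Fin 22, (fun p : Fin 22 × Fin 22 × Fin 22 =>
      (x p.1 * x p.2.1 * x p.2.2 - (1/24) * ((if p.2.1 = p.2.2 then x p.1 else 0) +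
        (if p.1 = p.2.2 then x p.2.1 else 0) + (if p.1 = p.2.1 then x p.2.2 else 0))) *
      (y p.1 * y p.2.1 * y p.2.2 - (1/24) * ((if p.2.1 = p.2.2 then y p.1 else 0) +
        (if p.1 = p.2.2 then y p.2.1 else 0) + (if p.1 = p.2.1 then y p.2.2 else 0)))) (a, p)
      = ∑ j : Fin 22, ∑ k : Fin 22,
        (x a * x j * x k - (1/24) * ((if j = k then x a else 0) +
          (if a = k then x j else 0) + (if a = j then x k else 0))) *
        (y a * y j * y k - (1/24) * ((if j = k then y a else 0) +
          (if a = k then y j else 0) + (if a = j then y k else 0))) := by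
    intro a
    rw [Fintype.sum_prod_type]
  calc ∑ a : Fin 22, ∑ p : Fin 22 × Fin 22, _ = _ := Finset.sum_congr rfl fun a _ => h a
    _ = _ := s8_P3 x y hx hy

/-- Nonnegativity of the degree (2+m) kernel sums. -/
private lemma s8_kerQ2 (m : ℕ) (C : Finset (EuclideanSpace ℝ (Fin 22)))
    (hC : ∀ x ∈ C, ∑ i, x i * x i = 1) :
    0 ≤ ∑ x ∈ C, ∑ y ∈ C,
      ((∑ i, x i * y i)^2 - 1/22) * (∑ i, x i * y i)^m := by
  have h := s8_sos C (fun x (z : (Fin 22 × Fin 22) × (Fin m → Fin 22)) =>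
    (x z.1.1 * x z.1.2 - if z.1.1 = z.1.2 then (1:ℝ)/22 else 0) * ∏ j, x (z.2 j))
  refine le_of_le_of_eq h (Finset.sum_congr rfl fun x hx => Finset.sum_congr rfl fun y hy => ?_)
  exact s8_prodfeat2 m x y (hC x hx) (hC y hy)

/-- Nonnegativity of the degree (3+m) kernel sums. -/
private lemma s8_kerQ3 (m : ℕ) (C : Finset (EuclideanSpace ℝ (Fin 22)))
    (hC : ∀ x ∈ C, ∑ i, x i * x i = 1) :
    0 ≤ ∑ x ∈ C, ∑ y ∈ C,
      ((∑ i, x i * y i)^3 - (∑ i, x i * y i)/8) * (∑ i, x i * y i)^m := by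
  have h := s8_sos C (fun x (z : (Fin 22 × Fin 22 × Fin 22) × (Fin m → Fin 22)) =>
    (x z.1.1 * x z.1.2.1 * x z.1.2.2 - (1/24) * ((if z.1.2.1 = z.1.2.2 then x z.1.1 else 0) +
      (if z.1.1 = z.1.2.2 then x z.1.2.1 else 0) +
      (if z.1.1 = z.1.2.1 then x z.1.2.2 else 0))) * ∏ j, x (z.2 j))
  refine le_of_le_of_eq h (Finset.sum_congr rfl fun x hx => Finset.sum_congr rfl fun y hy => ?_)
  exact s8_prodfeat3 m x y (hC x hx) (hC y hy)

end Statement8Aux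

theorem statement8 (T : Set ℝ)
    (hT : T = Set.Ioo (-1 : ℝ) (-1/3) ∨ T = Set.Ioo (-1/3 : ℝ) 0)
    (C : Finset (EuclideanSpace ℝ (Fin 22))) (hC : ∀ x ∈ C, ‖x‖ = 1)
    (hI : ∀ x ∈ C, ∀ y ∈ C, x ≠ y → (inner ℝ x y : ℝ) ∈ Set.Icc (-1 : ℝ) (1/3) \ T) :
    C.card ≤ 2816 := by
  classical
  -- unit-norm in coordinates
  have hC1 : ∀ x ∈ C, ∑ i, x i * x i = 1 := by
    intro x hx
    have h2 := real_inner_self_eq_norm_sq x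
    simp only [PiLp.inner_apply, RCLike.inner_apply, conj_trivial, hC x hx] at h2
    simpa using h2
  have hinner : ∀ x y : EuclideanSpace ℝ (Fin 22), (inner ℝ x y : ℝ) = ∑ i, x i * y i := by
    intro x y
    simp [PiLp.inner_apply, RCLike.inner_apply, conj_trivial, mul_comm]
  -- the constraint on inner products, in coordinates
  have hcon : ∀ x ∈ C, ∀ y ∈ C, x ≠ y →
      (-1 ≤ ∑ i, x i * y i ∧ (∑ i, x i * y i) ≤ 1/3 ∧ (∑ i, x i * y i) ∉ T) := by
    intro x hx y hy hxy
    have h := hI x hx y hy hxy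
    rw [Set.mem_diff, Set.mem_Icc, hinner x y] at h
    exact ⟨h.1.1, h.1.2, h.2⟩
  set N := C.card with hN
  have hNnn : (0:ℝ) ≤ (N:ℝ) := Nat.cast_nonneg N
  have hconst : ∑ _x ∈ C, ∑ _y ∈ C, (1:ℝ)/1584 = (N:ℝ)^2 * (1/1584) := by
    simp [Finset.sum_const, nsmul_eq_mul]
    ring
  -- final arithmetic step, common to both cases
  have final : (N:ℝ)^2 * (1/1584) ≤ (N:ℝ) * (16/9) → N ≤ 2816 := by
    intro h
    by_contra hlt
    push_neg at hlt
    have : (2817:ℝ) ≤ (N:ℝ) := by exact_mod_cast hlt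
    nlinarith
  rcases hT with hTA | hTB
  · -- Case A : T = Ioo (-1) (-1/3), polynomial t^2 (t+1) (t^2 - 1/9)
    -- sign of the polynomial on allowed inner products
    have hsign : ∀ x ∈ C, ∀ y ∈ C, x ≠ y →
        (∑ i, x i * y i)^2 * ((∑ i, x i * y i) + 1) * ((∑ i, x i * y i)^2 - 1/9) ≤ 0 := by
      intro x hx y hy hxy
      obtain ⟨h1, h2, h3⟩ := hcon x hx y hy hxy
      set t := ∑ i, x i * y i with ht
      rw [hTA, Set.mem_Ioo, not_and, not_lt] at h3
      rcases lt_or_ge (-1 : ℝ) t with hgt | hle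
      · -- then t ≥ -1/3
        have h4 : -(1/3 : ℝ) ≤ t := by
          have := h3 hgt; linarith
        have ha : (0:ℝ) ≤ t^2 * (t + 1) := mul_nonneg (sq_nonneg t) (by linarith)
        have hb : t^2 - 1/9 ≤ 0 := by nlinarith
        exact mul_nonpos_of_nonneg_of_nonpos ha hb
      · have ht1 : t = -1 := le_antisymm hle h1
        rw [ht1]; norm_num
    -- the LP lower bound
    have key : (N:ℝ)^2 * (1/1584) ≤ ∑ x ∈ C, ∑ y ∈ C,
        (∑ i, x i * y i)^2 * ((∑ i, x i * y i) + 1) * ((∑ i, x i * y i)^2 - 1/9) := by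
      have k0 := s8_kerQ2 0 C hC1
      have k3 := s8_kerQ2 3 C hC1
      have g1 := s8_kerQ3 1 C hC1
      have g2 := s8_kerQ3 2 C hC1
      have split : ∑ x ∈ C, ∑ y ∈ C,
          (∑ i, x i * y i)^2 * ((∑ i, x i * y i) + 1) * ((∑ i, x i * y i)^2 - 1/9)
          = (∑ _x ∈ C, ∑ _y ∈ C, (1:ℝ)/1584)
            + (1/72) * (∑ x ∈ C, ∑ y ∈ C, ((∑ i, x i * y i)^2 - 1/22) * (∑ i, x i * y i)^0)
            + (∑ x ∈ C, ∑ y ∈ C, ((∑ i, x i * y i)^3 - (∑ i, x i * y i)/8) * (∑ i, x i * y i)^1)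
            + (52/63) * (∑ x ∈ C, ∑ y ∈ C, ((∑ i, x i * y i)^3 - (∑ i, x i * y i)/8) * (∑ i, x i * y i)^2)
            + (11/63) * (∑ x ∈ C, ∑ y ∈ C, ((∑ i, x i * y i)^2 - 1/22) * (∑ i, x i * y i)^3) := by
        simp only [Finset.mul_sum, ← Finset.sum_add_distrib]
        refine Finset.sum_congr rfl fun x _ => Finset.sum_congr rfl fun y _ => ?_
        ring
      rw [split, hconst]
      linarith
    -- the upper bound from the diagonal
    have up : ∑ x ∈ C, ∑ y ∈ C,
        (∑ i, x i * y i)^2 * ((∑ i, x i * y i) + 1) * ((∑ i, x i * y i)^2 - 1/9)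
        ≤ (N:ℝ) * (16/9) := by
      have hsplit : ∀ x ∈ C, ∑ y ∈ C,
          (∑ i, x i * y i)^2 * ((∑ i, x i * y i) + 1) * ((∑ i, x i * y i)^2 - 1/9) ≤ 16/9 := by
        intro x hx
        rw [← Finset.add_sum_erase C _ hx]
        have hdiag : (∑ i, x i * x i)^2 * ((∑ i, x i * x i) + 1) * ((∑ i, x i * x i)^2 - 1/9)
            = 16/9 := by rw [hC1 x hx]; norm_num
        have hoff : ∑ y ∈ C.erase x,
            (∑ i, x i * y i)^2 * ((∑ i, x i * y i) + 1) * ((∑ i, x i * y i)^2 - 1/9) ≤ 0 := by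
          refine Finset.sum_nonpos fun y hy => ?_
          have hyC := Finset.mem_of_mem_erase hy
          have hne : x ≠ y := fun h => (Finset.ne_of_mem_erase hy) h.symm
          exact hsign x hx y hyC hne
        linarith
      calc ∑ x ∈ C, ∑ y ∈ C,
          (∑ i, x i * y i)^2 * ((∑ i, x i * y i) + 1) * ((∑ i, x i * y i)^2 - 1/9)
          ≤ ∑ _x ∈ C, (16/9 : ℝ) := Finset.sum_le_sum hsplit
        _ = (N:ℝ) * (16/9) := by simp [Finset.sum_const, nsmul_eq_mul, hN]
    exact final (le_trans key up)
  · -- Case B : T = Ioo (-1/3) 0, polynomial t (t+1) (t^2 - 1/9)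
    have hsign : ∀ x ∈ C, ∀ y ∈ C, x ≠ y →
        (∑ i, x i * y i) * ((∑ i, x i * y i) + 1) * ((∑ i, x i * y i)^2 - 1/9) ≤ 0 := by
      intro x hx y hy hxy
      obtain ⟨h1, h2, h3⟩ := hcon x hx y hy hxy
      set t := ∑ i, x i * y i with ht
      rw [hTB, Set.mem_Ioo, not_and, not_lt] at h3
      rcases lt_or_ge (-(1/3) : ℝ) t with hgt | hle
      · -- then t ≥ 0
        have h4 : (0:ℝ) ≤ t := by
          have := h3 (by linarith); linarith
        have ha : (0:ℝ) ≤ t * (t + 1) := mul_nonneg h4 (by linarith)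
        have hb : t^2 - 1/9 ≤ 0 := by nlinarith
        exact mul_nonpos_of_nonneg_of_nonpos ha hb
      · -- t ≤ -1/3
        have ha : t * (t + 1) ≤ 0 := mul_nonpos_of_nonpos_of_nonneg (by linarith) (by linarith)
        have hb : (0:ℝ) ≤ t^2 - 1/9 := by nlinarith
        exact mul_nonpos_of_nonpos_of_nonneg ha hb
    have key : (N:ℝ)^2 * (1/1584) ≤ ∑ x ∈ C, ∑ y ∈ C,
        (∑ i, x i * y i) * ((∑ i, x i * y i) + 1) * ((∑ i, x i * y i)^2 - 1/9) := by
      have k0 := s8_kerQ2 0 C hC1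
      have k1 := s8_kerQ2 1 C hC1
      have g0 := s8_kerQ3 0 C hC1
      have g1 := s8_kerQ3 1 C hC1
      have split : ∑ x ∈ C, ∑ y ∈ C,
          (∑ i, x i * y i) * ((∑ i, x i * y i) + 1) * ((∑ i, x i * y i)^2 - 1/9)
          = (∑ _x ∈ C, ∑ _y ∈ C, (1:ℝ)/1584)
            + (1/72) * (∑ x ∈ C, ∑ y ∈ C, ((∑ i, x i * y i)^2 - 1/22) * (∑ i, x i * y i)^0)
            + (52/63) * (∑ x ∈ C, ∑ y ∈ C, ((∑ i, x i * y i)^3 - (∑ i, x i * y i)/8) * (∑ i, x i * y i)^0)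
            + (11/63) * (∑ x ∈ C, ∑ y ∈ C, ((∑ i, x i * y i)^2 - 1/22) * (∑ i, x i * y i)^1)
            + (∑ x ∈ C, ∑ y ∈ C, ((∑ i, x i * y i)^3 - (∑ i, x i * y i)/8) * (∑ i, x i * y i)^1) := by
        simp only [Finset.mul_sum, ← Finset.sum_add_distrib]
        refine Finset.sum_congr rfl fun x _ => Finset.sum_congr rfl fun y _ => ?_
        ring
      rw [split, hconst]
      have g0' := s8_kerQ3 0 C hC1
      linarith
    have up : ∑ x ∈ C, ∑ y ∈ C,
        (∑ i, x i * y i) * ((∑ i, x i * y i) + 1) * ((∑ i, x i * y i)^2 - 1/9)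
        ≤ (N:ℝ) * (16/9) := by
      have hsplit : ∀ x ∈ C, ∑ y ∈ C,
          (∑ i, x i * y i) * ((∑ i, x i * y i) + 1) * ((∑ i, x i * y i)^2 - 1/9) ≤ 16/9 := by
        intro x hx
        rw [← Finset.add_sum_erase C _ hx]
        have hdiag : (∑ i, x i * x i) * ((∑ i, x i * x i) + 1) * ((∑ i, x i * x i)^2 - 1/9)
            = 16/9 := by rw [hC1 x hx]; norm_num
        have hoff : ∑ y ∈ C.erase x,
            (∑ i, x i * y i) * ((∑ i, x i * y i) + 1) * ((∑ i, x i * y i)^2 - 1/9) ≤ 0 := by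
          refine Finset.sum_nonpos fun y hy => ?_
          have hyC := Finset.mem_of_mem_erase hy
          have hne : x ≠ y := fun h => (Finset.ne_of_mem_erase hy) h.symm
          exact hsign x hx y hyC hne
        linarith
      calc ∑ x ∈ C, ∑ y ∈ C,
          (∑ i, x i * y i) * ((∑ i, x i * y i) + 1) * ((∑ i, x i * y i)^2 - 1/9)
          ≤ ∑ _x ∈ C, (16/9 : ℝ) := Finset.sum_le_sum hsplit
        _ = (N:ℝ) * (16/9) := by simp [Finset.sum_const, nsmul_eq_mul, hN]
    exact final (le_trans key up)
end

section
/- Every finite set C ⊆ S^{21} ⊆ ℝ^{22} such that ⟨x,y⟩ ∈ [−1, 7/22] \ (−4/11, −1/44) for all distinct x, y ∈ C satisfies |C| ≤ 2025. -/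
open scoped Classical
open MeasureTheory Finset

noncomputable def dd (i j : Fin 22) : ℝ := if i = j then 1 else 0

lemma sum_dd_mul (j : Fin 22) (g : Fin 22 → ℝ) : ∑ k : Fin 22, dd j k * g k = g j := by
  simp [dd, Finset.sum_ite_eq]

lemma dd_mul_self (i j : Fin 22) : dd i j * dd i j = dd i j := by
  unfold dd; by_cases h : i = j <;> simp [h]

lemma aux_sumsq {α β : Type*} [Fintype β] (s : Finset α) (a : α → β → ℝ) :
    ∑ x ∈ s, ∑ y ∈ s, ∑ p : β, a x p * a y p = ∑ p : β, (∑ x ∈ s, a x p)^2 := by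
  have h1 : ∀ x, (∑ y ∈ s, ∑ p : β, a x p * a y p) = ∑ p : β, a x p * ∑ y ∈ s, a y p := by
    intro x
    rw [Finset.sum_comm]
    exact Finset.sum_congr rfl fun p _ => (Finset.mul_sum _ _ _).symm
  simp_rw [h1]
  rw [Finset.sum_comm]
  exact Finset.sum_congr rfl fun p _ => by rw [← Finset.sum_mul, sq]

lemma sq_id (x y : EuclideanSpace ℝ (Fin 22)) :
    (∑ i, x i * y i)^2 = ∑ p : Fin 22 × Fin 22, (x p.1 * x p.2) * (y p.1 * y p.2) := by
  rw [sq, Finset.sum_mul_sum, Fintype.sum_prod_type]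
  exact Finset.sum_congr rfl fun i _ => Finset.sum_congr rfl fun j _ => by ring

lemma cube_id (x y : EuclideanSpace ℝ (Fin 22)) :
    (∑ i, x i * y i)^3 = ∑ p : Fin 22 × Fin 22 × Fin 22,
      (x p.1 * x p.2.1 * x p.2.2) * (y p.1 * y p.2.1 * y p.2.2) := by
  have h2 : (∑ i, x i * y i)^2 = ∑ q : Fin 22 × Fin 22, (x q.1 * y q.1) * (x q.2 * y q.2) := by
    rw [sq, Finset.sum_mul_sum, Fintype.sum_prod_type]
  have h3 : (∑ i, x i * y i)^3 = (∑ i, x i * y i) * (∑ i, x i * y i)^2 := by ring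
  rw [h3, h2, Finset.sum_mul_sum, Fintype.sum_prod_type]
  exact Finset.sum_congr rfl fun i _ => Finset.sum_congr rfl fun q _ => by ring

lemma key2 (M : Fin 22 → Fin 22 → ℝ) (N : ℝ) (h : ∑ i : Fin 22, M i i = N) :
    N^2 / 22 ≤ ∑ i : Fin 22, ∑ j : Fin 22, (M i j)^2 := by
  classical
  have h0 : (0:ℝ) ≤ ∑ i : Fin 22, ∑ j : Fin 22,
      (M i j - (N/22) * (if i = j then (1:ℝ) else 0))^2 := by positivity
  have hexp : ∑ i : Fin 22, ∑ j : Fin 22,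
      (M i j - (N/22) * (if i = j then (1:ℝ) else 0))^2
      = (∑ i : Fin 22, ∑ j : Fin 22, (M i j)^2) - N^2/22 := by
    have e0 : ∀ i j : Fin 22, (M i j - (N/22) * (if i = j then (1:ℝ) else 0))^2
          = (M i j)^2 - 2*(N/22)*(if i = j then M i j else 0)
            + (N/22)^2 * (if i = j then 1 else 0) := by
      intro i j; by_cases hij : i = j <;> simp [hij] <;> ring
    have e1 : ∀ i : Fin 22, ∑ j : Fin 22,
        (M i j - (N/22) * (if i = j then (1:ℝ) else 0))^2
        = (∑ j : Fin 22, (M i j)^2) - 2*(N/22)*M i i + (N/22)^2 := by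
      intro i
      rw [Finset.sum_congr rfl fun j _ => e0 i j]
      rw [Finset.sum_add_distrib, Finset.sum_sub_distrib]
      congr 1
      · congr 1
        rw [← Finset.mul_sum, Finset.sum_ite_eq]
        simp
      · rw [← Finset.mul_sum]
        simp
    rw [Finset.sum_congr rfl fun i _ => e1 i]
    rw [Finset.sum_add_distrib, Finset.sum_sub_distrib, ← Finset.mul_sum, h]
    simp
    ring
  linarith [hexp ▸ h0]

lemma key3 (A : Fin 22 → Fin 22 → Fin 22 → ℝ) (V : Fin 22 → ℝ)
    (h1 : ∀ i, ∑ j : Fin 22, A i j j = V i)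
    (h2 : ∀ j, ∑ i : Fin 22, A i j i = V j)
    (h3 : ∀ k, ∑ i : Fin 22, A i i k = V k) :
    (1/8) * ∑ i : Fin 22, (V i)^2
      ≤ ∑ i : Fin 22, ∑ j : Fin 22, ∑ k : Fin 22, (A i j k)^2 := by
  classical
  have h0 : (0:ℝ) ≤ ∑ i : Fin 22, ∑ j : Fin 22, ∑ k : Fin 22,
      (A i j k - (1/24) * (V i * dd j k + V j * dd i k + V k * dd i j))^2 := by positivity
  have epoint : ∀ i j k : Fin 22,
      (A i j k - (1/24) * (V i * dd j k + V j * dd i k + V k * dd i j))^2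
      = (A i j k)^2
        + (-1/12) * (dd j k * (A i j k * V i))
        + (-1/12) * (dd i k * (A i j k * V j))
        + (-1/12) * (dd i j * (A i j k * V k))
        + (1/576) * ((dd j k * dd j k) * (V i)^2)
        + (1/576) * ((dd i k * dd i k) * (V j)^2)
        + (1/576) * (dd i j * (dd i j * (V k)^2))
        + (2/576) * (dd j k * (dd i k * (V i * V j)))
        + (2/576) * (dd i j * (dd j k * (V i * V k)))
        + (2/576) * (dd i j * (dd i k * (V j * V k))) := by
    intro i j k; ring
  simp_rw [epoint, dd_mul_self] at h0
  simp_rw [Finset.sum_add_distrib, ← Finset.mul_sum, sum_dd_mul] at h0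
  have eU1 : ∑ x : Fin 22, ∑ y : Fin 22, A x y y * V x = ∑ i : Fin 22, (V i)^2 := by
    simp_rw [← Finset.sum_mul, h1, sq]
  have eU2 : ∑ x : Fin 22, ∑ y : Fin 22, A x y x * V y = ∑ i : Fin 22, (V i)^2 := by
    rw [Finset.sum_comm]
    simp_rw [← Finset.sum_mul, h2, sq]
  have eU3 : ∑ x : Fin 22, ∑ y : Fin 22, A x x y * V y = ∑ i : Fin 22, (V i)^2 := by
    rw [Finset.sum_comm]
    simp_rw [← Finset.sum_mul, h3, sq]
  have e5 : ∑ _x : Fin 22, ∑ _y : Fin 22, (V _x)^2 = 22 * ∑ i : Fin 22, (V i)^2 := by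
    simp [Finset.sum_const, Finset.card_univ, Finset.mul_sum, mul_comm]
  have e6 : ∑ _x : Fin 22, ∑ y : Fin 22, (V y)^2 = 22 * ∑ i : Fin 22, (V i)^2 := by
    simp [Finset.sum_const, Finset.card_univ]
  have e7 : ∑ x : Fin 22, dd x x * ∑ y : Fin 22, (V y)^2 = 22 * ∑ i : Fin 22, (V i)^2 := by
    simp [dd, Finset.sum_const, Finset.card_univ]
  have e8 : ∑ x : Fin 22, V x * V x = ∑ i : Fin 22, (V i)^2 := by
    simp_rw [sq]
  rw [eU1, eU2, eU3, e5, e6, e7, e8] at h0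
  linarith

theorem statement9 (C : Finset (EuclideanSpace ℝ (Fin 22))) (hC : ∀ x ∈ C, ‖x‖ = 1)
    (hI : ∀ x ∈ C, ∀ y ∈ C, x ≠ y → (inner ℝ x y : ℝ) ∈
      Set.Icc (-1 : ℝ) (7/22) \ Set.Ioo (-4/11 : ℝ) (-1/44)) :
    C.card ≤ 2025 := by
  classical
  set N : ℝ := (C.card : ℝ) with hN
  set V : Fin 22 → ℝ := fun i => ∑ x ∈ C, x i with hV
  set M : Fin 22 → Fin 22 → ℝ := fun i j => ∑ x ∈ C, x i * x j with hM
  set A : Fin 22 → Fin 22 → Fin 22 → ℝ := fun i j k => ∑ x ∈ C, x i * x j * x k with hA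
  have hunit : ∀ x ∈ C, ∑ i : Fin 22, x i * x i = 1 := by
    intro x hx
    have h2 : (inner ℝ x x : ℝ) = 1 := by rw [real_inner_self_eq_norm_sq, hC x hx]; norm_num
    simpa only [PiLp.inner_apply, RCLike.inner_apply, conj_trivial] using h2
  -- trace and contraction identities
  have htr : ∑ i : Fin 22, M i i = N := by
    simp only [hM]
    rw [Finset.sum_comm]
    rw [Finset.sum_congr rfl fun x hx => hunit x hx]
    simp [hN]
  have hc1 : ∀ i, ∑ j : Fin 22, A i j j = V i := by
    intro i
    simp only [hA, hV]
    rw [Finset.sum_comm]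
    refine Finset.sum_congr rfl fun x hx => ?_
    have : ∀ j : Fin 22, x i * x j * x j = x i * (x j * x j) := fun j => by ring
    simp_rw [this, ← Finset.mul_sum, hunit x hx, mul_one]
  have hc2 : ∀ j, ∑ i : Fin 22, A i j i = V j := by
    intro j
    simp only [hA, hV]
    rw [Finset.sum_comm]
    refine Finset.sum_congr rfl fun x hx => ?_
    have : ∀ i : Fin 22, x i * x j * x i = x j * (x i * x i) := fun i => by ring
    simp_rw [this, ← Finset.mul_sum, hunit x hx, mul_one]
  have hc3 : ∀ k, ∑ i : Fin 22, A i i k = V k := by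
    intro k
    simp only [hA, hV]
    rw [Finset.sum_comm]
    refine Finset.sum_congr rfl fun x hx => ?_
    have : ∀ i : Fin 22, x i * x i * x k = x k * (x i * x i) := fun i => by ring
    simp_rw [this, ← Finset.mul_sum, hunit x hx, mul_one]
  -- moment sum identities
  have e1 : ∑ x ∈ C, ∑ y ∈ C, (∑ i, x i * y i) = ∑ i : Fin 22, (V i)^2 := by
    simpa [hV] using aux_sumsq C (fun x i => x i)
  have e2 : ∑ x ∈ C, ∑ y ∈ C, (∑ i, x i * y i)^2 = ∑ i : Fin 22, ∑ j : Fin 22, (M i j)^2 := by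
    rw [Finset.sum_congr rfl fun x _ => Finset.sum_congr rfl fun y _ => sq_id x y]
    rw [aux_sumsq (β := Fin 22 × Fin 22) C (fun x p => x p.1 * x p.2), Fintype.sum_prod_type]
  have e3 : ∑ x ∈ C, ∑ y ∈ C, (∑ i, x i * y i)^3
      = ∑ i : Fin 22, ∑ j : Fin 22, ∑ k : Fin 22, (A i j k)^2 := by
    rw [Finset.sum_congr rfl fun x _ => Finset.sum_congr rfl fun y _ => cube_id x y]
    rw [aux_sumsq (β := Fin 22 × Fin 22 × Fin 22) C (fun x p => x p.1 * x p.2.1 * x p.2.2), Fintype.sum_prod_type]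
    simp_rw [Fintype.sum_prod_type]
    rfl
  -- pointwise bound off the diagonal
  have hFoff : ∀ x ∈ C, ∀ y ∈ C, x ≠ y →
      (∑ i, x i * y i)^3 + (3/44)*(∑ i, x i * y i)^2
        + (-111/968)*(∑ i, x i * y i) + (-7/2662) ≤ 0 := by
    intro x hx y hy hxy
    have hips : (inner ℝ x y : ℝ) = ∑ i, x i * y i := by
      simp [PiLp.inner_apply, RCLike.inner_apply, mul_comm]
    obtain ⟨hmem, hnot⟩ := hI x hx y hy hxy
    rw [hips] at hmem hnot
    set t := ∑ i, x i * y i with ht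
    obtain ⟨hl, hr⟩ := hmem
    have hfac : t^3 + (3/44)*t^2 + (-111/968)*t + (-7/2662)
        = (t + 4/11) * ((t + 1/44) * (t - 7/22)) := by ring
    rw [hfac]
    rcases le_or_gt t (-4/11) with hca | hca
    · have p1 : t + 4/11 ≤ 0 := by linarith
      have p2 : t + 1/44 ≤ 0 := by linarith
      have p3 : t - 7/22 ≤ 0 := by linarith
      have q : (0:ℝ) ≤ (t + 4/11) * (t + 1/44) := by nlinarith
      nlinarith [q, p3]
    · have hge : (-1/44 : ℝ) ≤ t := by
        by_contra hcon
        push_neg at hcon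
        exact hnot ⟨hca, hcon⟩
      have p1 : (0:ℝ) ≤ t + 4/11 := by linarith
      have p2 : (0:ℝ) ≤ t + 1/44 := by linarith
      have p3 : t - 7/22 ≤ 0 := by linarith
      have q : (0:ℝ) ≤ (t + 4/11) * (t + 1/44) := mul_nonneg p1 p2
      nlinarith [q, p3]
  have hdiag : ∀ x ∈ C, (∑ i, x i * x i)^3 + (3/44)*(∑ i, x i * x i)^2
      + (-111/968)*(∑ i, x i * x i) + (-7/2662) = 10125/10648 := by
    intro x hx; rw [hunit x hx]; norm_num
  have hupper : ∑ x ∈ C, ∑ y ∈ C, ((∑ i, x i * y i)^3 + (3/44)*(∑ i, x i * y i)^2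
      + (-111/968)*(∑ i, x i * y i) + (-7/2662)) ≤ N * (10125/10648) := by
    have hx1 : ∀ x ∈ C, ∑ y ∈ C, ((∑ i, x i * y i)^3 + (3/44)*(∑ i, x i * y i)^2
        + (-111/968)*(∑ i, x i * y i) + (-7/2662)) ≤ 10125/10648 := by
      intro x hx
      rw [← Finset.add_sum_erase _ _ hx]
      have hrest : ∑ y ∈ C.erase x, ((∑ i, x i * y i)^3 + (3/44)*(∑ i, x i * y i)^2
          + (-111/968)*(∑ i, x i * y i) + (-7/2662)) ≤ 0 :=
        Finset.sum_nonpos fun y hy => hFoff x hx y (Finset.mem_of_mem_erase hy)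
          (Ne.symm (Finset.ne_of_mem_erase hy))
      have hd := hdiag x hx
      linarith
    calc ∑ x ∈ C, ∑ y ∈ C, ((∑ i, x i * y i)^3 + (3/44)*(∑ i, x i * y i)^2
          + (-111/968)*(∑ i, x i * y i) + (-7/2662))
        ≤ ∑ _x ∈ C, (10125/10648 : ℝ) := Finset.sum_le_sum hx1
      _ = N * (10125/10648) := by simp [hN, Finset.sum_const, nsmul_eq_mul]
  have hsplit : ∑ x ∈ C, ∑ y ∈ C, ((∑ i, x i * y i)^3 + (3/44)*(∑ i, x i * y i)^2
      + (-111/968)*(∑ i, x i * y i) + (-7/2662))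
      = (∑ i : Fin 22, ∑ j : Fin 22, ∑ k : Fin 22, (A i j k)^2)
        + (3/44)*(∑ i : Fin 22, ∑ j : Fin 22, (M i j)^2)
        + (-111/968)*(∑ i : Fin 22, (V i)^2) + (-7/2662)*(N*N) := by
    simp_rw [Finset.sum_add_distrib, ← Finset.mul_sum, Finset.sum_const, nsmul_eq_mul]
    rw [e1, e2, e3]
    ring
  have I1 : (0:ℝ) ≤ ∑ i : Fin 22, (V i)^2 := by positivity
  have I2 := key2 M N htr
  have I3 := key3 A V hc1 hc2 hc3
  rw [hsplit] at hupper
  have hN0 : (0:ℝ) ≤ N := by simp [hN]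
  have hfin : N ≤ 2025 := by nlinarith [hupper, I1, I2, I3, hN0]
  have : (C.card : ℝ) ≤ 2025 := by rw [← hN]; exact hfin
  exact_mod_cast this
end

section
/- Let T be either (−3/5, −1/3) ∪ (1/5, 7/15) or (−3/5, −1/3) ∪ (−1/15, 1/5). Then every T-avoiding spherical 6-design C ⊆ S^{22} ⊆ ℝ^{23} satisfies |C| ≥ 47104. -/
open scoped Classical
open MeasureTheory Finset


/-- `C` is a spherical `τ`-design on the unit sphere `S^{n-1} ⊆ ℝ^n`: every polynomial in
`n` variables of total degree at most `τ` has the same average over `C` as over the sphere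
with its normalized surface measure. -/
def SphericalDesign (n τ : ℕ) (C : Finset (EuclideanSpace ℝ (Fin n))) : Prop :=
  ∀ p : MvPolynomial (Fin n) ℝ, p.totalDegree ≤ τ →
    (∑ x ∈ C, MvPolynomial.eval (fun i => x i) p) / (C.card : ℝ) =
      ⨍ x, MvPolynomial.eval (fun i => (x : EuclideanSpace ℝ (Fin n)) i) p
        ∂((volume : Measure (EuclideanSpace ℝ (Fin n))).toSphere)

open Set Metric Real
open scoped ENNReal

noncomputable section

abbrev E23 := EuclideanSpace ℝ (Fin 23)
abbrev σm : Measure (Metric.sphere (0 : E23) 1) := (volume : Measure E23).toSphere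

lemma Jval (k : ℕ) : ∫ r in Set.Ioi (0:ℝ), r ^ k * Real.exp (-r^2)
    = (1/2) * Real.Gamma ((k+1)/2) := by
  have h := integral_rpow_mul_exp_neg_rpow (p := 2) (q := (k:ℝ)) (by norm_num)
    (by have : (0:ℝ) ≤ k := Nat.cast_nonneg k; linarith)
  rw [← h]
  refine setIntegral_congr_fun measurableSet_Ioi (fun x hx => ?_)
  rw [Real.rpow_natCast x k]
  norm_num [Real.rpow_two]

lemma dimE23 : Module.finrank ℝ E23 = 23 := by simp

lemma polar (k : ℕ) (y : E23) :
    (∫ ω : Metric.sphere (0 : E23) 1, (inner ℝ (ω : E23) y : ℝ) ^ k ∂σm)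
      * (∫ r in Set.Ioi (0:ℝ), r ^ (22 + k) * Real.exp (-r ^ 2))
    = ∫ x : E23, (inner ℝ x y : ℝ) ^ k * Real.exp (-‖x‖ ^ 2) := by
  have hmp := (volume : Measure E23).measurePreserving_homeomorphUnitSphereProd
  rw [dimE23, show (23 - 1 : ℕ) = 22 from rfl] at hmp
  have hcomp := hmp.integral_comp (Homeomorph.measurableEmbedding _)
    (fun z : Metric.sphere (0:E23) 1 × Set.Ioi (0:ℝ) =>
      (inner ℝ (z.1 : E23) y : ℝ) ^ k * ((z.2 : ℝ) ^ k * Real.exp (-(z.2:ℝ) ^ 2)))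
  have hJ : ∫ (r : Set.Ioi (0:ℝ)), ((r:ℝ) ^ k * Real.exp (-(r:ℝ) ^ 2))
        ∂(Measure.volumeIoiPow 22)
      = ∫ r in Set.Ioi (0:ℝ), r ^ (22 + k) * Real.exp (-r ^ 2) := by
    simp only [Measure.volumeIoiPow, ENNReal.ofReal]
    rw [integral_withDensity_eq_integral_smul
        ((measurable_subtype_coe.pow_const _).real_toNNReal),
      integral_subtype_comap measurableSet_Ioi
        (fun a : ℝ => Real.toNNReal (a ^ 22) • (a ^ k * Real.exp (-a ^ 2)))]
    refine setIntegral_congr_fun measurableSet_Ioi (fun x hx => ?_)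
    rw [NNReal.smul_def, Real.coe_toNNReal _ (pow_nonneg (le_of_lt hx) _), smul_eq_mul,
      pow_add]
    ring
  rw [← hJ, ← integral_prod_mul (μ := σm) (ν := Measure.volumeIoiPow 22)
    (f := fun ω : Metric.sphere (0:E23) 1 => (inner ℝ (ω:E23) y : ℝ) ^ k)
    (g := fun r : Set.Ioi (0:ℝ) => (r:ℝ) ^ k * Real.exp (-(r:ℝ) ^ 2))]
  rw [show (σm.prod (Measure.volumeIoiPow 22)) =
    ((volume : Measure E23).toSphere.prod (Measure.volumeIoiPow 22)) from rfl]
  rw [← hcomp]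
  have h1 : ∫ x : E23, (inner ℝ x y : ℝ) ^ k * Real.exp (-‖x‖ ^ 2)
      = ∫ x : ({0}ᶜ : Set E23), (inner ℝ (x:E23) y : ℝ) ^ k * Real.exp (-‖(x:E23)‖ ^ 2)
          ∂((volume : Measure E23).comap Subtype.val) := by
    rw [integral_subtype_comap (measurableSet_singleton (0:E23)).compl
      (fun x => (inner ℝ x y : ℝ) ^ k * Real.exp (-‖x‖ ^ 2))]
    simp
  rw [h1]
  apply integral_congr_ae
  filter_upwards with x
  obtain ⟨x, hx⟩ := x
  have hx0 : x ≠ 0 := hx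
  have hnx : (0:ℝ) < ‖x‖ := norm_pos_iff.2 hx0
  simp only [homeomorphUnitSphereProd_apply_fst_coe, homeomorphUnitSphereProd_apply_snd_coe]
  rw [real_inner_smul_left, mul_pow, inv_pow]
  field_simp

lemma gauss_odd (k : ℕ) (hk : Odd k) (y : E23) :
    ∫ x : E23, (inner ℝ x y : ℝ) ^ k * Real.exp (-‖x‖ ^ 2) = 0 := by
  set f : E23 → ℝ := fun x => (inner ℝ x y : ℝ) ^ k * Real.exp (-‖x‖ ^ 2) with hf
  have h := (LinearIsometryEquiv.neg ℝ (E := E23)).measurePreserving.integral_comp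
    (LinearIsometryEquiv.neg ℝ (E := E23)).toHomeomorph.measurableEmbedding f
  have h2 : ∀ x : E23, f (-x) = - f x := by
    intro x
    simp only [hf, inner_neg_left, norm_neg]
    rw [hk.neg_pow]
    ring
  have h' : ∫ x : E23, - f x = ∫ x : E23, f x := by
    rw [← h]
    refine integral_congr_ae (Filter.Eventually.of_forall fun x => ?_)
    dsimp only
    rw [← h2]
    simp
  rw [integral_neg] at h'
  have : ∫ x : E23, f x = 0 := by linarith
  exact this

lemma gauss_even_aux (k : ℕ) (y : E23) (hy : ‖y‖ = 1) :
    ∫ x : E23, (inner ℝ x y : ℝ) ^ k * Real.exp (-‖x‖ ^ 2)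
      = (∫ t : ℝ, t ^ k * Real.exp (-t ^ 2)) * (∫ t : ℝ, Real.exp (-t ^ 2)) ^ 22 := by
  -- choose an orthonormal basis with b 0 = y
  have hcard : Module.finrank ℝ E23 = Fintype.card (Fin 23) := by simp
  have horth : Orthonormal ℝ (Set.restrict {0} (fun _ : Fin 23 => y)) := by
    constructor
    · rintro ⟨i, hi⟩; exact hy
    · rintro ⟨i, hi⟩ ⟨j, hj⟩ hij
      exact absurd (Subtype.ext ((Set.eq_of_mem_singleton hi).trans
        (Set.eq_of_mem_singleton hj).symm)) hij
  obtain ⟨b, hb⟩ := horth.exists_orthonormalBasis_extension_of_card_eq hcard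
  have hby : b 0 = y := hb 0 rfl
  -- replace inner with coordinate of b.repr
  have h1 : ∀ x : E23, (inner ℝ x y : ℝ) = (b.repr x) 0 := by
    intro x
    rw [← hby, ← b.repr.inner_map_map x (b 0), b.repr_self]
    simp [EuclideanSpace.inner_single_right]
  have h2 : ∀ x : E23, ‖x‖ = ‖b.repr x‖ := fun x => (b.repr.norm_map x).symm
  set H : E23 → ℝ := fun z => (z 0) ^ k * Real.exp (-‖z‖ ^ 2) with hH
  have h3 : ∫ x : E23, (inner ℝ x y : ℝ) ^ k * Real.exp (-‖x‖ ^ 2) = ∫ x : E23, H (b.repr x) := by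
    refine integral_congr_ae (Filter.Eventually.of_forall fun x => ?_)
    dsimp only
    rw [h1, h2]
  rw [h3, b.measurePreserving_repr.integral_comp
    b.repr.toHomeomorph.measurableEmbedding H]
  -- now to the pi measure
  have h4 := (EuclideanSpace.volume_preserving_symm_measurableEquiv_toLp (Fin 23)).integral_comp
    (MeasurableEquiv.toLp 2 (Fin 23 → ℝ)).symm.measurableEmbedding
    (fun z : Fin 23 → ℝ => ∏ i, ((if i = 0 then (z i) ^ k else 1) * Real.exp (-(z i) ^ 2)))
  have h5 : ∀ x : E23, H x =
      ∏ i, ((if i = (0 : Fin 23) then ((MeasurableEquiv.toLp 2 (Fin 23 → ℝ)).symm x i) ^ k else 1)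
        * Real.exp (-((MeasurableEquiv.toLp 2 (Fin 23 → ℝ)).symm x i) ^ 2)) := by
    intro x
    have hcoe : ∀ i, (MeasurableEquiv.toLp 2 (Fin 23 → ℝ)).symm x i = x i := fun i => rfl
    simp only [hcoe, hH]
    rw [Finset.prod_mul_distrib, Finset.prod_ite_eq' Finset.univ (0 : Fin 23)
      (fun i => (x i) ^ k)]
    rw [← Real.exp_sum]
    have : ∑ i, -(x i ^ 2) = -‖x‖ ^ 2 := by
      rw [EuclideanSpace.norm_eq]
      rw [Real.sq_sqrt (by positivity)]
      simp [Finset.sum_neg_distrib]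
    simp [this]
  have h6 : ∫ x : E23, H x = ∫ z : Fin 23 → ℝ,
      ∏ i, ((if i = (0:Fin 23) then (z i) ^ k else 1) * Real.exp (-(z i) ^ 2)) := by
    rw [← h4]
    exact integral_congr_ae (Filter.Eventually.of_forall h5)
  rw [h6, MeasureTheory.integral_fintype_prod_volume_eq_prod
    (f := fun (i : Fin 23) (t : ℝ) => (if i = 0 then t ^ k else 1) * Real.exp (-t ^ 2))]
  rw [← Finset.mul_prod_erase Finset.univ _ (Finset.mem_univ (0 : Fin 23))]
  simp only [if_pos rfl]
  congr 1
  have hterm : ∀ i ∈ Finset.univ.erase (0 : Fin 23),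
      (∫ x : ℝ, (if i = 0 then x ^ k else 1) * Real.exp (-x ^ 2))
        = ∫ t : ℝ, Real.exp (-t ^ 2) := by
    intro i hi
    simp only [if_neg (Finset.mem_erase.1 hi).1, one_mul]
  rw [Finset.prod_congr rfl hterm, Finset.prod_const,
    Finset.card_erase_of_mem (Finset.mem_univ _)]
  simp

lemma I_even (k : ℕ) (hk : Even k) :
    ∫ t : ℝ, t ^ k * Real.exp (-t ^ 2) = Real.Gamma ((k+1)/2) := by
  have h1 : ∀ t : ℝ, |t| ^ k * Real.exp (-|t| ^ 2) = t ^ k * Real.exp (-t ^ 2) := by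
    intro t; rw [hk.pow_abs, sq_abs]
  calc ∫ t : ℝ, t ^ k * Real.exp (-t ^ 2)
      = ∫ t : ℝ, |t| ^ k * Real.exp (-|t| ^ 2) :=
        (integral_congr_ae (Filter.Eventually.of_forall h1)).symm
    _ = 2 * ∫ t in Set.Ioi (0:ℝ), t ^ k * Real.exp (-t ^ 2) :=
        integral_comp_abs (f := fun t => t ^ k * Real.exp (-t ^ 2))
    _ = Real.Gamma ((k+1)/2) := by rw [Jval]; ring

lemma I0_val : ∫ t : ℝ, Real.exp (-t ^ 2) = Real.Gamma (1/2) := by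
  have := I_even 0 Even.zero
  simpa using this

def mom : ℕ → ℝ
  | 0 => 1 | 2 => 1/23 | 4 => 3/575 | 6 => 1/1035 | _ => 0

lemma moment (y : E23) (hy : ‖y‖ = 1) (k : ℕ) (hk : k ≤ 6) :
    ∫ ω : Metric.sphere (0 : E23) 1, (inner ℝ (ω : E23) y : ℝ) ^ k ∂σm
      = mom k * (σm Set.univ).toReal := by
  have hvpos : 0 < Real.Gamma (23/2) := Real.Gamma_pos_of_pos (by norm_num)
  set A := (σm Set.univ).toReal with hA
  have hS0 : ∫ ω : Metric.sphere (0 : E23) 1, (inner ℝ (ω : E23) y : ℝ) ^ 0 ∂σm = A := by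
    simp only [pow_zero, integral_const, smul_eq_mul, mul_one]
    rfl
  have g1 : Real.Gamma (3/2) = (1/2) * Real.Gamma (1/2) := by
    rw [show (3:ℝ)/2 = 1/2 + 1 by norm_num, Real.Gamma_add_one (by norm_num)]
  have g2 : Real.Gamma (5/2) = (3/2) * Real.Gamma (3/2) := by
    rw [show (5:ℝ)/2 = 3/2 + 1 by norm_num, Real.Gamma_add_one (by norm_num)]
  have g3 : Real.Gamma (7/2) = (5/2) * Real.Gamma (5/2) := by
    rw [show (7:ℝ)/2 = 5/2 + 1 by norm_num, Real.Gamma_add_one (by norm_num)]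
  have G1 : Real.Gamma (25/2) = (23/2) * Real.Gamma (23/2) := by
    rw [show (25:ℝ)/2 = 23/2 + 1 by norm_num, Real.Gamma_add_one (by norm_num)]
  have G2 : Real.Gamma (27/2) = (25/2) * Real.Gamma (25/2) := by
    rw [show (27:ℝ)/2 = 25/2 + 1 by norm_num, Real.Gamma_add_one (by norm_num)]
  have G3 : Real.Gamma (29/2) = (27/2) * Real.Gamma (27/2) := by
    rw [show (29:ℝ)/2 = 27/2 + 1 by norm_num, Real.Gamma_add_one (by norm_num)]
  have hAv : A * ((1/2) * Real.Gamma (23/2)) = Real.Gamma (1/2) ^ 23 := by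
    have h := polar 0 y
    rw [hS0, Jval 22, gauss_even_aux 0 y hy, I0_val] at h
    rw [show (((22:ℕ):ℝ) + 1)/2 = 23/2 by norm_num] at h
    have e2 : ∫ t : ℝ, t ^ 0 * Real.exp (-t ^ 2) = Real.Gamma (1/2) := by
      rw [← I0_val]
      exact integral_congr_ae (Filter.Eventually.of_forall (by intro t; simp))
    rw [e2] at h
    rw [h]; ring
  interval_cases k
  · rw [show mom 0 = (1:ℝ) from rfl, one_mul]; exact hS0
  · have h := polar 1 y
    rw [gauss_odd 1 ⟨0, rfl⟩ y, Jval 23] at h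
    have hpos : (0:ℝ) < (1/2) * Real.Gamma ((((23:ℕ):ℝ)+1)/2) := by
      have := Real.Gamma_pos_of_pos (show (0:ℝ) < (((23:ℕ):ℝ)+1)/2 by norm_num)
      linarith
    have h0 := (mul_eq_zero.1 h).resolve_right (ne_of_gt hpos)
    rw [h0, show mom 1 = (0:ℝ) from rfl, zero_mul]
  · have h := polar 2 y
    rw [show (22+2 : ℕ) = 24 from rfl, Jval 24, gauss_even_aux 2 y hy,
      I_even 2 ⟨1, rfl⟩, I0_val] at h
    rw [show ((((24:ℕ):ℝ))+1)/2 = 25/2 by norm_num,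
      show (((2:ℕ):ℝ)+1)/2 = 3/2 by norm_num, G1, g1] at h
    rw [show mom 2 = ((1:ℝ)/23) from rfl]
    have hpos : (0:ℝ) < (1/2) * ((23/2) * Real.Gamma (23/2)) := by nlinarith
    refine mul_right_cancel₀ (ne_of_gt hpos) ?_
    rw [h]
    linear_combination (-1/2) * hAv
  · have h := polar 3 y
    rw [gauss_odd 3 ⟨1, rfl⟩ y, Jval 25] at h
    have hpos : (0:ℝ) < (1/2) * Real.Gamma ((((25:ℕ):ℝ)+1)/2) := by
      have := Real.Gamma_pos_of_pos (show (0:ℝ) < (((25:ℕ):ℝ)+1)/2 by norm_num)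
      linarith
    have h0 := (mul_eq_zero.1 h).resolve_right (ne_of_gt hpos)
    rw [h0, show mom 3 = (0:ℝ) from rfl, zero_mul]
  · have h := polar 4 y
    rw [show (22+4 : ℕ) = 26 from rfl, Jval 26, gauss_even_aux 4 y hy,
      I_even 4 ⟨2, rfl⟩, I0_val] at h
    rw [show ((((26:ℕ):ℝ))+1)/2 = 27/2 by norm_num,
      show (((4:ℕ):ℝ)+1)/2 = 5/2 by norm_num, G2, G1, g2, g1] at h
    rw [show mom 4 = ((3:ℝ)/575) from rfl]
    have hpos : (0:ℝ) < (1/2) * ((25/2) * ((23/2) * Real.Gamma (23/2))) := by nlinarith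
    refine mul_right_cancel₀ (ne_of_gt hpos) ?_
    rw [h]
    linear_combination (-3/4) * hAv
  · have h := polar 5 y
    rw [gauss_odd 5 ⟨2, rfl⟩ y, Jval 27] at h
    have hpos : (0:ℝ) < (1/2) * Real.Gamma ((((27:ℕ):ℝ)+1)/2) := by
      have := Real.Gamma_pos_of_pos (show (0:ℝ) < (((27:ℕ):ℝ)+1)/2 by norm_num)
      linarith
    have h0 := (mul_eq_zero.1 h).resolve_right (ne_of_gt hpos)
    rw [h0, show mom 5 = (0:ℝ) from rfl, zero_mul]
  · have h := polar 6 y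
    rw [show (22+6 : ℕ) = 28 from rfl, Jval 28, gauss_even_aux 6 y hy,
      I_even 6 ⟨3, rfl⟩, I0_val] at h
    rw [show ((((28:ℕ):ℝ))+1)/2 = 29/2 by norm_num,
      show (((6:ℕ):ℝ)+1)/2 = 7/2 by norm_num, G3, G2, G1, g3, g2, g1] at h
    rw [show mom 6 = ((1:ℝ)/1035) from rfl]
    have hpos : (0:ℝ) < (1/2) * ((27/2) * ((25/2) * ((23/2) * Real.Gamma (23/2)))) := by
      nlinarith
    refine mul_right_cancel₀ (ne_of_gt hpos) ?_
    rw [h]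
    linear_combination (-15/8) * hAv

def Py (a : ℕ → ℝ) (y : E23) : MvPolynomial (Fin 23) ℝ :=
  ∑ k ∈ Finset.range 7, MvPolynomial.C (a k)
    * (∑ i, MvPolynomial.C (y i) * MvPolynomial.X i) ^ k

lemma Py_totalDegree (a : ℕ → ℝ) (y : E23) : (Py a y).totalDegree ≤ 6 := by
  refine (MvPolynomial.totalDegree_finset_sum _ _).trans (Finset.sup_le fun k hk => ?_)
  refine (MvPolynomial.totalDegree_mul _ _).trans ?_
  rw [MvPolynomial.totalDegree_C, zero_add]
  refine (MvPolynomial.totalDegree_pow _ _).trans ?_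
  have hL : (∑ i, MvPolynomial.C (y i) * MvPolynomial.X i : MvPolynomial (Fin 23) ℝ).totalDegree
      ≤ 1 := by
    refine (MvPolynomial.totalDegree_finset_sum _ _).trans (Finset.sup_le fun i _ => ?_)
    refine (MvPolynomial.totalDegree_mul _ _).trans ?_
    rw [MvPolynomial.totalDegree_C, zero_add, MvPolynomial.totalDegree_X]
  have hk7 : k ≤ 6 := Nat.lt_succ_iff.mp (Finset.mem_range.mp hk)
  calc k * _ ≤ k * 1 := Nat.mul_le_mul_left k hL
    _ ≤ 6 := by omega

lemma Py_eval (a : ℕ → ℝ) (y z : E23) :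
    MvPolynomial.eval (fun i => z i) (Py a y)
      = ∑ k ∈ Finset.range 7, a k * (inner ℝ z y : ℝ) ^ k := by
  have hinner : (inner ℝ z y : ℝ) = ∑ i, y i * z i := by
    rw [real_inner_comm]
    simp [PiLp.inner_apply, RCLike.inner_apply, conj_trivial]
    exact Finset.sum_congr rfl fun i _ => mul_comm _ _
  rw [Py]
  simp only [map_sum, map_mul, map_pow, MvPolynomial.eval_C, MvPolynomial.eval_X, hinner]

lemma Apos : 0 < (σm Set.univ).toReal := by
  rw [ENNReal.toReal_pos_iff]
  refine ⟨?_, measure_lt_top _ _⟩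
  rw [Measure.toSphere_apply_univ]
  have h1 : volume (Metric.ball (0:E23) 1) ≠ 0 :=
    (measure_ball_pos _ _ one_pos).ne'
  have h2 : ((Module.finrank ℝ E23 : ℕ) : ℝ≥0∞) ≠ 0 := by simp
  exact pos_iff_ne_zero.mpr (mul_ne_zero h2 h1)

instance : NeZero σm := by
  constructor
  rw [← Measure.measure_univ_ne_zero]
  intro h
  have := Apos
  rw [h] at this
  simp at this

lemma integrable_pow (y : E23) (k : ℕ) (c : ℝ) :
    Integrable (fun ω : Metric.sphere (0:E23) 1 => c * (inner ℝ (ω : E23) y : ℝ) ^ k) σm := by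
  have hcont : Continuous (fun ω : Metric.sphere (0:E23) 1 =>
      c * (inner ℝ (ω : E23) y : ℝ) ^ k) :=
    continuous_const.mul ((continuous_subtype_val.inner continuous_const).pow k)
  rw [← integrableOn_univ]
  exact hcont.continuousOn.integrableOn_compact isCompact_univ

lemma avg_poly (a : ℕ → ℝ) (y : E23) (hy : ‖y‖ = 1) :
    ⨍ ω : Metric.sphere (0:E23) 1,
        (∑ k ∈ Finset.range 7, a k * (inner ℝ (ω : E23) y : ℝ) ^ k) ∂σm
      = ∑ k ∈ Finset.range 7, a k * mom k := by
  rw [average_eq, integral_finset_sum _ (fun k _ => integrable_pow y k (a k))]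
  have h1 : ∀ k ∈ Finset.range 7,
      ∫ ω : Metric.sphere (0:E23) 1, a k * (inner ℝ (ω : E23) y : ℝ) ^ k ∂σm
        = a k * mom k * (σm Set.univ).toReal := by
    intro k hk
    rw [integral_const_mul, moment y hy k (Nat.lt_succ_iff.mp (Finset.mem_range.mp hk))]
    ring
  rw [Finset.sum_congr rfl h1, ← Finset.sum_mul, smul_eq_mul,
    mul_comm (∑ k ∈ Finset.range 7, a k * mom k) _]
  exact inv_mul_cancel_left₀ (ne_of_gt Apos) _

lemma design_nonempty (C : Finset E23) (hdes : SphericalDesign 23 6 C) : C.Nonempty := by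
  rcases C.eq_empty_or_nonempty with h | h
  · exfalso
    have h1 := hdes (MvPolynomial.C 1) (by rw [MvPolynomial.totalDegree_C]; omega)
    rw [h] at h1
    simp only [Finset.sum_empty, Finset.card_empty, Nat.cast_zero, div_zero] at h1
    have h2 : ⨍ x : Metric.sphere (0:E23) 1,
        MvPolynomial.eval (fun i => (x : E23) i) (MvPolynomial.C (1:ℝ)) ∂σm = 1 := by
      have : ∀ x : Metric.sphere (0:E23) 1,
          MvPolynomial.eval (fun i => (x : E23) i) (MvPolynomial.C (1:ℝ)) = 1 := by
        intro x; simp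
      rw [average_congr (Filter.Eventually.of_forall this), average_const]
    rw [h2] at h1
    norm_num at h1
  · exact h

lemma main_bound (C : Finset E23) (hC : ∀ x ∈ C, ‖x‖ = 1)
    (hdes : SphericalDesign 23 6 C) (a : ℕ → ℝ)
    (hpos : ∀ x ∈ C, ∀ y ∈ C, x ≠ y →
      0 ≤ ∑ k ∈ Finset.range 7, a k * (inner ℝ x y : ℝ) ^ k) :
    (∑ k ∈ Finset.range 7, a k * (1:ℝ) ^ k)
      ≤ (∑ k ∈ Finset.range 7, a k * mom k) * (C.card : ℝ) := by
  classical
  have hne := design_nonempty C hdes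
  have hNpos : (0:ℝ) < (C.card : ℝ) := by
    exact_mod_cast Finset.card_pos.mpr hne
  set m := ∑ k ∈ Finset.range 7, a k * mom k with hm
  -- per-row sums
  have hrow : ∀ y ∈ C, ∑ x ∈ C, (∑ k ∈ Finset.range 7, a k * (inner ℝ x y : ℝ) ^ k)
      = m * (C.card : ℝ) := by
    intro y hy
    have hdy := hdes (Py a y) (Py_totalDegree a y)
    have hL : ∑ x ∈ C, MvPolynomial.eval (fun i => x i) (Py a y)
        = ∑ x ∈ C, (∑ k ∈ Finset.range 7, a k * (inner ℝ x y : ℝ) ^ k) :=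
      Finset.sum_congr rfl (fun x _ => Py_eval a y x)
    have hR : ⨍ x : Metric.sphere (0:E23) 1,
        MvPolynomial.eval (fun i => (x : E23) i) (Py a y) ∂σm = m := by
      rw [average_congr (Filter.Eventually.of_forall (fun x : Metric.sphere (0:E23) 1 =>
        Py_eval a y (x : E23)))]
      exact avg_poly a y (hC y hy)
    rw [hL, hR] at hdy
    exact (div_eq_iff (ne_of_gt hNpos)).1 hdy
  -- total sum
  have htot : ∑ y ∈ C, ∑ x ∈ C, (∑ k ∈ Finset.range 7, a k * (inner ℝ x y : ℝ) ^ k)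
      = m * (C.card : ℝ) * (C.card : ℝ) := by
    rw [Finset.sum_congr rfl hrow, Finset.sum_const, nsmul_eq_mul]
    ring
  -- diagonal lower bound
  have hdiag : ∀ y ∈ C, (∑ k ∈ Finset.range 7, a k * (1:ℝ) ^ k)
      ≤ ∑ x ∈ C, (∑ k ∈ Finset.range 7, a k * (inner ℝ x y : ℝ) ^ k) := by
    intro y hy
    rw [← Finset.add_sum_erase C _ hy]
    have h1 : (inner ℝ y y : ℝ) = 1 := by
      rw [real_inner_self_eq_norm_mul_norm, hC y hy]; norm_num
    rw [h1]
    have h2 : 0 ≤ ∑ x ∈ C.erase y, (∑ k ∈ Finset.range 7, a k * (inner ℝ x y : ℝ) ^ k) := by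
      refine Finset.sum_nonneg fun x hx => ?_
      exact hpos x (Finset.mem_of_mem_erase hx) y hy (Finset.ne_of_mem_erase hx)
    linarith
  have hsum : (C.card : ℝ) * (∑ k ∈ Finset.range 7, a k * (1:ℝ) ^ k)
      ≤ m * (C.card : ℝ) * (C.card : ℝ) := by
    rw [← htot]
    calc (C.card : ℝ) * (∑ k ∈ Finset.range 7, a k * (1:ℝ) ^ k)
        = ∑ _y ∈ C, (∑ k ∈ Finset.range 7, a k * (1:ℝ) ^ k) := by
          rw [Finset.sum_const, nsmul_eq_mul]
      _ ≤ _ := Finset.sum_le_sum hdiag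
  nlinarith [hsum, hNpos]

def aT1 : ℕ → ℝ
  | 0 => 7/84375 | 1 => 578/253125 | 2 => 559/50625 | 3 => -4/45
  | 4 => -13/45 | 5 => 2/5 | 6 => 1 | _ => 0

def aT2 : ℕ → ℝ
  | 0 => -49/84375 | 1 => -1526/253125 | 2 => 2399/50625 | 3 => 52/675
  | 4 => -7/15 | 5 => -2/15 | 6 => 1 | _ => 0

lemma aT1_factor (t : ℝ) : ∑ k ∈ Finset.range 7, aT1 k * t ^ k
    = ((t+3/5)*(t+1/3)) * ((t+1/15)^2 * ((t-1/5)*(t-7/15))) := by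
  simp only [Finset.sum_range_succ, Finset.sum_range_zero, aT1]
  ring

lemma aT2_factor (t : ℝ) : ∑ k ∈ Finset.range 7, aT2 k * t ^ k
    = ((t+3/5)*(t+1/3)) * (((t+1/15)*(t-1/5)) * (t-7/15)^2) := by
  simp only [Finset.sum_range_succ, Finset.sum_range_zero, aT2]
  ring

lemma aT1_pos (t : ℝ) (hnot : t ∉ Set.Ioo (-3/5 : ℝ) (-1/3) ∪ Set.Ioo (1/5 : ℝ) (7/15)) :
    0 ≤ ∑ k ∈ Finset.range 7, aT1 k * t ^ k := by
  rw [aT1_factor]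
  have h1 : t ≤ -3/5 ∨ -1/3 ≤ t := by
    by_contra h
    push_neg at h
    exact hnot (Set.mem_union_left _ ⟨by linarith [h.1], by linarith [h.2]⟩)
  have h2 : t ≤ 1/5 ∨ 7/15 ≤ t := by
    by_contra h
    push_neg at h
    exact hnot (Set.mem_union_right _ ⟨by linarith [h.1], by linarith [h.2]⟩)
  rcases h1 with h1 | h1 <;> rcases h2 with h2 | h2
  · have hP1 : 0 ≤ (t+3/5)*(t+1/3) := by nlinarith
    have hP3 : 0 ≤ (t-1/5)*(t-7/15) := by nlinarith
    exact mul_nonneg hP1 (mul_nonneg (sq_nonneg _) hP3)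
  · linarith
  · have hP1 : 0 ≤ (t+3/5)*(t+1/3) := by nlinarith
    have hP3 : 0 ≤ (t-1/5)*(t-7/15) := by nlinarith
    exact mul_nonneg hP1 (mul_nonneg (sq_nonneg _) hP3)
  · have hP1 : 0 ≤ (t+3/5)*(t+1/3) := by nlinarith
    have hP3 : 0 ≤ (t-1/5)*(t-7/15) := by nlinarith
    exact mul_nonneg hP1 (mul_nonneg (sq_nonneg _) hP3)

lemma aT2_pos (t : ℝ) (hnot : t ∉ Set.Ioo (-3/5 : ℝ) (-1/3) ∪ Set.Ioo (-1/15 : ℝ) (1/5)) :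
    0 ≤ ∑ k ∈ Finset.range 7, aT2 k * t ^ k := by
  rw [aT2_factor]
  have h1 : t ≤ -3/5 ∨ -1/3 ≤ t := by
    by_contra h
    push_neg at h
    exact hnot (Set.mem_union_left _ ⟨by linarith [h.1], by linarith [h.2]⟩)
  have h2 : t ≤ -1/15 ∨ 1/5 ≤ t := by
    by_contra h
    push_neg at h
    exact hnot (Set.mem_union_right _ ⟨by linarith [h.1], by linarith [h.2]⟩)
  rcases h1 with h1 | h1 <;> rcases h2 with h2 | h2
  · have hP1 : 0 ≤ (t+3/5)*(t+1/3) := by nlinarith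
    have hQ : 0 ≤ (t+1/15)*(t-1/5) := by nlinarith
    exact mul_nonneg hP1 (mul_nonneg hQ (sq_nonneg _))
  · have hP1 : 0 ≤ (t+3/5)*(t+1/3) := by nlinarith
    have hQ : 0 ≤ (t+1/15)*(t-1/5) := by nlinarith
    exact mul_nonneg hP1 (mul_nonneg hQ (sq_nonneg _))
  · have hP1 : 0 ≤ (t+3/5)*(t+1/3) := by nlinarith
    have hQ : 0 ≤ (t+1/15)*(t-1/5) := by nlinarith
    exact mul_nonneg hP1 (mul_nonneg hQ (sq_nonneg _))
  · have hP1 : 0 ≤ (t+3/5)*(t+1/3) := by nlinarith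
    have hQ : 0 ≤ (t+1/15)*(t-1/5) := by nlinarith
    exact mul_nonneg hP1 (mul_nonneg hQ (sq_nonneg _))

theorem statement11 (T : Set ℝ)
    (hT : T = Set.Ioo (-3/5 : ℝ) (-1/3) ∪ Set.Ioo (1/5 : ℝ) (7/15) ∨
      T = Set.Ioo (-3/5 : ℝ) (-1/3) ∪ Set.Ioo (-1/15 : ℝ) (1/5))
    (C : Finset (EuclideanSpace ℝ (Fin 23))) (hC : ∀ x ∈ C, ‖x‖ = 1)
    (hdes : SphericalDesign 23 6 C)
    (havoid : ∀ x ∈ C, ∀ y ∈ C, x ≠ y → (inner ℝ x y : ℝ) ∉ T) :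
    47104 ≤ C.card := by
  have hN : (47104 : ℝ) ≤ (C.card : ℝ) := by
    rcases hT with hT | hT
    · have hb := main_bound C hC hdes aT1 (fun x hx y hy hxy => by
        have h := havoid x hx y hy hxy
        rw [hT] at h
        exact aT1_pos _ h)
      have hlhs : ∑ k ∈ Finset.range 7, aT1 k * (1:ℝ) ^ k = 262144/253125 := by
        simp only [Finset.sum_range_succ, Finset.sum_range_zero, aT1]
        norm_num
      have hrhs : ∑ k ∈ Finset.range 7, aT1 k * mom k = 128/5821875 := by
        simp only [Finset.sum_range_succ, Finset.sum_range_zero, aT1, mom]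
        norm_num
      rw [hlhs, hrhs] at hb
      linarith
    · have hb := main_bound C hC hdes aT2 (fun x hx y hy hxy => by
        have h := havoid x hx y hy hxy
        rw [hT] at h
        exact aT2_pos _ h)
      have hlhs : ∑ k ∈ Finset.range 7, aT2 k * (1:ℝ) ^ k = 131072/253125 := by
        simp only [Finset.sum_range_succ, Finset.sum_range_zero, aT2]
        norm_num
      have hrhs : ∑ k ∈ Finset.range 7, aT2 k * mom k = 64/5821875 := by
        simp only [Finset.sum_range_succ, Finset.sum_range_zero, aT2, mom]
        norm_num
      rw [hlhs, hrhs] at hb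
      linarith
  exact_mod_cast hN

end
end

section
/- Let T be any one of the sets (−1/2, −1/4) ∪ (1/4, 1/2), (−1/4, 0) ∪ (1/4, 1/2), or (−1/2, −1/4) ∪ (0, 1/4). Then every T-avoiding spherical 7-design C ⊆ S^{22} ⊆ ℝ^{23} satisfies |C| ≥ 93150. -/
open scoped Classical
open MeasureTheory Finset


section Aux
open MeasureTheory Real Metric


noncomputable def G (k : ℕ) : ℝ := ∫ t : ℝ, t ^ k * Real.exp (-t ^ 2)
noncomputable def R (m : ℕ) : ℝ := ∫ r in Set.Ioi (0:ℝ), r ^ m * Real.exp (-r ^ 2)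

lemma integrable_G (k : ℕ) : Integrable fun t : ℝ => t ^ k * Real.exp (-t ^ 2) := by
  have := integrable_rpow_mul_exp_neg_mul_sq (b := 1) one_pos
    (s := (k:ℝ)) (lt_of_lt_of_le neg_one_lt_zero (Nat.cast_nonneg k))
  simpa [Real.rpow_natCast, neg_one_mul] using this

lemma integrableOn_R (m : ℕ) :
    IntegrableOn (fun r : ℝ => r ^ m * Real.exp (-r ^ 2)) (Set.Ioi 0) :=
  (integrable_G m).integrableOn

lemma R_pos (m : ℕ) : 0 < R m := by
  rw [R, setIntegral_pos_iff_support_of_nonneg_ae]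
  · have h : (Function.support fun r : ℝ => r ^ m * Real.exp (-r ^ 2)) ∩ Set.Ioi 0 = Set.Ioi 0 := by
      rw [Set.inter_eq_right]
      intro x hx
      exact Function.mem_support.2 (mul_ne_zero (pow_ne_zero _ (ne_of_gt hx)) (exp_pos _).ne')
    rw [h, volume_Ioi]
    exact ENNReal.zero_lt_top
  · refine Filter.eventually_of_mem (self_mem_ae_restrict measurableSet_Ioi) fun x hx => ?_
    exact mul_nonneg (pow_nonneg (le_of_lt hx) _) (exp_pos _).le
  · exact integrableOn_R m

lemma R_rec (m : ℕ) : (m + 1 : ℝ) * R m = 2 * R (m + 2) := by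
  have key := integral_Ioi_of_hasDerivAt_of_tendsto'
      (f := fun r : ℝ => r ^ (m+1) * Real.exp (-r ^ 2))
      (f' := fun r : ℝ => (m+1:ℝ) * (r ^ m * Real.exp (-r ^ 2))
        - 2 * (r ^ (m+2) * Real.exp (-r^2)))
      (a := 0) (m := 0) ?_ ?_ ?_
  · have e1 : ∫ r in Set.Ioi (0:ℝ), ((m+1:ℝ) * (r ^ m * Real.exp (-r ^ 2))
        - 2 * (r ^ (m+2) * Real.exp (-r^2)))
        = (m+1:ℝ) * R m - 2 * R (m+2) := by
      rw [integral_sub ((integrableOn_R m).const_mul _) ((integrableOn_R (m+2)).const_mul _),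
        integral_const_mul, integral_const_mul]
      rfl
    rw [e1] at key
    simp at key
    linarith
  · intro x _
    have h1 : HasDerivAt (fun r : ℝ => r ^ (m+1)) ((m+1 : ℝ) * x ^ m) x := by
      simpa using (hasDerivAt_pow (m+1) x)
    have h2 : HasDerivAt (fun r : ℝ => Real.exp (-r ^ 2)) (Real.exp (-x^2) * (-(2*x))) x := by
      have h : HasDerivAt (fun r : ℝ => -r ^ 2) (-(2*x)) x := by
        have := (hasDerivAt_pow 2 x).neg
        simp at this
        exact this
      exact (Real.hasDerivAt_exp _).comp x h
    have := h1.mul h2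
    convert this using 1
    · rfl
    · rfl
    · ring
  · apply Integrable.sub
    · exact (integrableOn_R m).const_mul _
    · exact (integrableOn_R (m+2)).const_mul _
  · have h := (rpow_mul_exp_neg_mul_sq_isLittleO_exp_neg (b := 1) one_pos ((m:ℝ)+1))
    have h2 : Filter.Tendsto (fun x : ℝ => Real.exp (-(1/2) * x)) Filter.atTop (nhds 0) := by
      apply Real.tendsto_exp_comp_nhds_zero.mpr
      have : Filter.Tendsto (fun x : ℝ => (1/2) * x) Filter.atTop Filter.atTop :=
        (Filter.tendsto_const_mul_atTop_of_pos (by norm_num : (0:ℝ) < 1/2)).2 Filter.tendsto_id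
      exact (Filter.tendsto_neg_atTop_atBot.comp this).congr (fun x => by simp [Function.comp])
    have h3 := h.trans_tendsto h2
    refine h3.congr' ?_
    filter_upwards [Filter.eventually_ge_atTop (0:ℝ)] with x hx
    rw [show ((m:ℝ)+1) = ((m+1 : ℕ):ℝ) by push_cast; ring, Real.rpow_natCast x (m+1)]
    simp [neg_one_mul]



lemma G_eq (k : ℕ) : G k = ((-1 : ℝ) ^ k + 1) * R k := by
  have h1 : (∫ x in Set.Iic (0:ℝ), x ^ k * Real.exp (-x ^ 2)) = (-1 : ℝ) ^ k * R k := by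
    have h0 := integral_comp_neg_Ioi (0 : ℝ) (fun x => x ^ k * Real.exp (-x ^ 2))
    rw [neg_zero] at h0
    rw [← h0, R, ← integral_const_mul]
    apply setIntegral_congr_fun measurableSet_Ioi
    intro x _
    dsimp only
    rw [neg_sq, neg_pow]
    ring
  have h2 := intervalIntegral.integral_Iic_add_Ioi (b := (0:ℝ))
    ((integrable_G k).integrableOn) ((integrable_G k).integrableOn)
    (f := fun x : ℝ => x ^ k * Real.exp (-x ^ 2)) (μ := volume)
  rw [G, ← h2, h1, R]
  ring

abbrev Euc : Type := EuclideanSpace ℝ (Fin 23)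

lemma finrank_euc : Module.finrank ℝ Euc = 23 := finrank_euclideanSpace_fin

/-- Polar-coordinates evaluation of the Gaussian-weighted integral. -/
lemma gaussian_polar (a : Euc) (k : ℕ) :
    (∫ x : Euc, (inner ℝ a x : ℝ) ^ k * Real.exp (-‖x‖ ^ 2))
      = (∫ ω : sphere (0 : Euc) 1, (inner ℝ a (ω : Euc) : ℝ) ^ k
          ∂((volume : Measure Euc).toSphere)) * R (22 + k) := by
  have hdim : Module.finrank ℝ Euc - 1 = 22 := by rw [finrank_euc]
  calc
    ∫ x : Euc, (inner ℝ a x : ℝ) ^ k * Real.exp (-‖x‖ ^ 2)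
      = ∫ x : ({(0:Euc)}ᶜ : Set Euc), (inner ℝ a (x:Euc) : ℝ) ^ k * Real.exp (-‖(x:Euc)‖ ^ 2)
          ∂((volume : Measure Euc).comap (↑)) := by
        rw [integral_subtype_comap (measurableSet_singleton _).compl
          (fun x : Euc => (inner ℝ a x : ℝ) ^ k * Real.exp (-‖x‖ ^ 2)),
          restrict_compl_singleton]
    _ = ∫ p : sphere (0 : Euc) 1 × Set.Ioi (0:ℝ),
          ((inner ℝ a (p.1 : Euc) : ℝ) ^ k) * ((p.2 : ℝ) ^ k * Real.exp (-(p.2:ℝ) ^ 2))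
          ∂(((volume : Measure Euc).toSphere).prod
            (Measure.volumeIoiPow (Module.finrank ℝ Euc - 1))) := by
        rw [← (volume : Measure Euc).measurePreserving_homeomorphUnitSphereProd.integral_comp
          (Homeomorph.measurableEmbedding _)
          (fun p : sphere (0 : Euc) 1 × Set.Ioi (0:ℝ) =>
            ((inner ℝ a (p.1 : Euc) : ℝ) ^ k) * ((p.2 : ℝ) ^ k * Real.exp (-(p.2:ℝ) ^ 2)))]
        apply integral_congr_ae
        apply Filter.Eventually.of_forall
        intro x
        have hx : (x : Euc) ≠ 0 := x.2
        have hnx : ‖(x:Euc)‖ ≠ 0 := norm_ne_zero_iff.2 hx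
        simp only [homeomorphUnitSphereProd_apply_fst_coe, homeomorphUnitSphereProd_apply_snd_coe]
        rw [inner_smul_right, mul_pow]
        have h1 : ‖(x:Euc)‖⁻¹ ^ k * ‖(x:Euc)‖ ^ k = 1 := by
          rw [← mul_pow, inv_mul_cancel₀ hnx, one_pow]
        rw [show ‖(x:Euc)‖⁻¹ ^ k * (inner ℝ a (x:Euc) : ℝ) ^ k
              * (‖(x:Euc)‖ ^ k * Real.exp (-‖(x:Euc)‖ ^ 2))
            = (‖(x:Euc)‖⁻¹ ^ k * ‖(x:Euc)‖ ^ k)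
              * ((inner ℝ a (x:Euc) : ℝ) ^ k * Real.exp (-‖(x:Euc)‖ ^ 2)) by ring, h1, one_mul]
    _ = (∫ ω : sphere (0 : Euc) 1, (inner ℝ a (ω : Euc) : ℝ) ^ k
          ∂((volume : Measure Euc).toSphere))
        * ∫ r : Set.Ioi (0:ℝ), (r : ℝ) ^ k * Real.exp (-(r:ℝ) ^ 2)
          ∂(Measure.volumeIoiPow (Module.finrank ℝ Euc - 1)) :=
        integral_prod_mul (f := fun ω : sphere (0:Euc) 1 => (inner ℝ a (ω:Euc) : ℝ) ^ k)
          (g := fun r : Set.Ioi (0:ℝ) => (r:ℝ) ^ k * Real.exp (-(r:ℝ) ^ 2))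
    _ = (∫ ω : sphere (0 : Euc) 1, (inner ℝ a (ω : Euc) : ℝ) ^ k
          ∂((volume : Measure Euc).toSphere)) * R (22 + k) := by
        congr 1
        rw [hdim]
        simp only [Measure.volumeIoiPow, ENNReal.ofReal]
        rw [integral_withDensity_eq_integral_smul
          ((measurable_subtype_coe.pow_const _).real_toNNReal)]
        rw [integral_subtype_comap measurableSet_Ioi
          (fun r : ℝ => (r ^ 22).toNNReal • (r ^ k * Real.exp (-r ^ 2)))]
        rw [R]
        apply setIntegral_congr_fun measurableSet_Ioi
        intro x hx
        have hxx : (0:ℝ) ≤ x := le_of_lt hx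
        dsimp only
        rw [NNReal.smul_def, Real.coe_toNNReal _ (pow_nonneg hxx _), smul_eq_mul,
          ← mul_assoc, ← pow_add]



lemma gaussian_eval (a : Euc) (ha : ‖a‖ = 1) (k : ℕ) :
    (∫ x : Euc, (inner ℝ a x : ℝ) ^ k * Real.exp (-‖x‖ ^ 2)) = G k * G 0 ^ 22 := by
  classical
  set E₀ : Euc := EuclideanSpace.single (0 : Fin 23) (1:ℝ) with hE₀
  obtain ⟨e, he⟩ : ∃ e : Euc ≃ₗᵢ[ℝ] Euc, e E₀ = a :=
    ⟨Submodule.reflection (ℝ ∙ (E₀ - a))ᗮ, Submodule.reflection_sub (by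
      rw [hE₀, EuclideanSpace.norm_single, norm_one, ha])⟩
  have h1 := (e.measurePreserving).integral_comp e.toHomeomorph.measurableEmbedding
    (fun x : Euc => (inner ℝ a x : ℝ) ^ k * Real.exp (-‖x‖ ^ 2))
  rw [← h1]
  have h2 : ∀ x : Euc, (inner ℝ a (e x) : ℝ) ^ k * Real.exp (-‖e x‖ ^ 2)
      = (x 0) ^ k * Real.exp (-‖x‖ ^ 2) := by
    intro x
    rw [← he, e.inner_map_map, e.norm_map, hE₀, EuclideanSpace.inner_single_left]
    simp
  rw [show (fun x : Euc => (inner ℝ a (e x) : ℝ) ^ k * Real.exp (-‖e x‖ ^ 2))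
      = (fun x : Euc => (x 0) ^ k * Real.exp (-‖x‖ ^ 2)) from funext h2]
  -- now transfer to the product space
  set f : Fin 23 → ℝ → ℝ := fun i t =>
    if i = 0 then t ^ k * Real.exp (-t ^ 2) else Real.exp (-t ^ 2) with hf
  have h3 := (EuclideanSpace.volume_preserving_symm_measurableEquiv_toLp (Fin 23)).integral_comp
    (MeasurableEquiv.toLp 2 (Fin 23 → ℝ)).symm.measurableEmbedding
    (fun y : Fin 23 → ℝ => ∏ i, f i (y i))
  have h4 : ∀ x : Euc, (∏ i, f i ((MeasurableEquiv.toLp 2 (Fin 23 → ℝ)).symm x i))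
      = (x 0) ^ k * Real.exp (-‖x‖ ^ 2) := by
    intro x
    have hcoord : ∀ i, (MeasurableEquiv.toLp 2 (Fin 23 → ℝ)).symm x i = x i := fun i => rfl
    simp only [hcoord]
    have hnorm : ‖x‖ ^ 2 = ∑ i, (x i) ^ 2 := by
      rw [EuclideanSpace.norm_eq, Real.sq_sqrt (Finset.sum_nonneg fun i _ => sq_nonneg _)]
      congr 1; ext i; rw [Real.norm_eq_abs, sq_abs]
    have hexp : Real.exp (-‖x‖ ^ 2) = ∏ i, Real.exp (-(x i) ^ 2) := by
      rw [hnorm, ← Real.exp_sum]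
      congr 1
      rw [← Finset.sum_neg_distrib]
    rw [hexp]
    rw [← Finset.mul_prod_erase Finset.univ _ (Finset.mem_univ (0 : Fin 23)),
      ← Finset.mul_prod_erase Finset.univ (fun i => Real.exp (-(x i) ^ 2))
        (Finset.mem_univ (0 : Fin 23))]
    have hrest : ∏ i ∈ Finset.univ.erase (0 : Fin 23), f i (x i)
        = ∏ i ∈ Finset.univ.erase (0 : Fin 23), Real.exp (-(x i) ^ 2) := by
      apply Finset.prod_congr rfl
      intro i hi
      rw [hf]
      simp only [if_neg (Finset.mem_erase.1 hi).1]
    rw [hrest, hf]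
    simp only [reduceIte]
    ring
  rw [show (fun x : Euc => (x 0) ^ k * Real.exp (-‖x‖ ^ 2))
      = (fun x : Euc => ∏ i, f i ((MeasurableEquiv.toLp 2 (Fin 23 → ℝ)).symm x i))
      from (funext h4).symm]
  rw [h3, volume_pi, integral_fintype_prod_eq_prod]
  rw [← Finset.mul_prod_erase Finset.univ (fun i => ∫ t : ℝ, f i t)
    (Finset.mem_univ (0 : Fin 23))]
  have hG0 : G 0 = ∫ t : ℝ, Real.exp (-t ^ 2) := by
    rw [G]
    apply integral_congr_ae
    apply Filter.Eventually.of_forall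
    intro t
    dsimp only
    rw [pow_zero, one_mul]
  have hrest2 : ∏ i ∈ Finset.univ.erase (0 : Fin 23), (∫ t : ℝ, f i t)
      = G 0 ^ 22 := by
    have hone : ∀ i ∈ Finset.univ.erase (0 : Fin 23), (∫ t : ℝ, f i t) = G 0 := by
      intro i hi
      rw [hf]
      simp only [if_neg (Finset.mem_erase.1 hi).1]
      rw [hG0]
    rw [Finset.prod_congr rfl hone, Finset.prod_const,
      Finset.card_erase_of_mem (Finset.mem_univ _), Finset.card_univ]
    rfl
  rw [hrest2, hf]
  simp only [reduceIte]
  rw [show G k = ∫ t : ℝ, t ^ k * Real.exp (-t ^ 2) from rfl]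



noncomputable def S (a : Euc) (k : ℕ) : ℝ :=
  ∫ ω : sphere (0 : Euc) 1, (inner ℝ a (ω : Euc) : ℝ) ^ k ∂((volume : Measure Euc).toSphere)

lemma S_R (a : Euc) (ha : ‖a‖ = 1) (k : ℕ) : S a k * R (22 + k) = G k * G 0 ^ 22 := by
  rw [S, ← gaussian_polar a k, gaussian_eval a ha k]

lemma G0_pos : 0 < G 0 := by
  rw [G_eq]
  have := R_pos 0
  norm_num
  linarith

lemma S0_pos (a : Euc) (ha : ‖a‖ = 1) : 0 < S a 0 := by
  have h := S_R a ha 0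
  have h2 : 0 < G 0 * G 0 ^ 22 := mul_pos G0_pos (pow_pos G0_pos 22)
  rw [← h] at h2
  have := R_pos 22
  nlinarith

lemma S_odd (a : Euc) (ha : ‖a‖ = 1) (k : ℕ) (hk : Odd k) : S a k = 0 := by
  have h := S_R a ha k
  have hG : G k = 0 := by rw [G_eq, Odd.neg_one_pow hk]; ring
  rw [hG, zero_mul] at h
  exact (mul_eq_zero.mp h).resolve_right (R_pos _).ne'

lemma S_even_vals (a : Euc) (ha : ‖a‖ = 1) :
    S a 2 = S a 0 / 23 ∧ S a 4 = 3 * S a 0 / 575 ∧ S a 6 = S a 0 / 1035 := by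
  have e0 := S_R a ha 0
  have e2 := S_R a ha 2
  have e4 := S_R a ha 4
  have e6 := S_R a ha 6
  have g0 : G 0 = 2 * R 0 := by rw [G_eq]; norm_num
  have g2 : G 2 = 2 * R 2 := by rw [G_eq]; norm_num
  have g4 : G 4 = 2 * R 4 := by rw [G_eq]; norm_num
  have g6 : G 6 = 2 * R 6 := by rw [G_eq]; norm_num
  have r0 : R 0 = 2 * R 2 := by have h := R_rec 0; norm_num at h; linarith
  have r2 : 3 * R 2 = 2 * R 4 := by have h := R_rec 2; norm_num at h; linarith
  have r4 : 5 * R 4 = 2 * R 6 := by have h := R_rec 4; norm_num at h; linarith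
  have r22 : 23 * R 22 = 2 * R 24 := by have h := R_rec 22; norm_num at h; linarith
  have r24 : 25 * R 24 = 2 * R 26 := by have h := R_rec 24; norm_num at h; linarith
  have r26 : 27 * R 26 = 2 * R 28 := by have h := R_rec 26; norm_num at h; linarith
  have hR22 : R 22 ≠ 0 := (R_pos 22).ne'
  have norm0 : (22 + 0 : ℕ) = 22 := rfl
  rw [show (22 + 0 : ℕ) = 22 from rfl] at e0
  rw [show (22 + 2 : ℕ) = 24 from rfl] at e2
  rw [show (22 + 4 : ℕ) = 26 from rfl] at e4
  rw [show (22 + 6 : ℕ) = 28 from rfl] at e6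
  have inner2 : S a 2 * R 24 = G 0 / 2 * G 0 ^ 22 := by
    linear_combination e2 + G 0 ^ 22 * g2 - (G 0 ^ 22 / 2) * g0 - G 0 ^ 22 * r0
  have inner4 : S a 4 * R 26 = 3 * G 0 / 4 * G 0 ^ 22 := by
    linear_combination e4 + G 0 ^ 22 * g4 - G 0 ^ 22 * r2 - (3/2) * G 0 ^ 22 * r0
      - (3/4) * G 0 ^ 22 * g0
  have inner6 : S a 6 * R 28 = 15 * G 0 / 8 * G 0 ^ 22 := by
    linear_combination e6 + G 0 ^ 22 * g6 - G 0 ^ 22 * r4 - (5/2) * G 0 ^ 22 * r2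
      - (15/4) * G 0 ^ 22 * r0 - (15/8) * G 0 ^ 22 * g0
  have k2 : 23 * S a 2 = S a 0 := by
    apply mul_right_cancel₀ hR22
    linear_combination 2 * inner2 - e0 + S a 2 * r22
  have k4 : 575 * S a 4 = 3 * S a 0 := by
    apply mul_right_cancel₀ hR22
    linear_combination 4 * inner4 - 3 * e0 + 25 * S a 4 * r22 + 2 * S a 4 * r24
  have k6 : 15525 * S a 6 = 15 * S a 0 := by
    apply mul_right_cancel₀ hR22
    linear_combination 8 * inner6 - 15 * e0 + 675 * S a 6 * r22 + 54 * S a 6 * r24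
      + 4 * S a 6 * r26
  refine ⟨by linarith, by linarith, by linarith⟩

lemma norm_sphere_elt (ω : sphere (0:Euc) 1) : ‖(ω:Euc)‖ = 1 :=
  mem_sphere_zero_iff_norm.mp ω.2

lemma integrable_inner_pow (a : Euc) (ha : ‖a‖ = 1) (k : ℕ) :
    Integrable (fun ω : sphere (0:Euc) 1 => (inner ℝ a (ω:Euc) : ℝ) ^ k)
      ((volume : Measure Euc).toSphere) := by
  have hc : Continuous (fun ω : sphere (0:Euc) 1 => (inner ℝ a (ω:Euc) : ℝ) ^ k) :=
    (Continuous.inner continuous_const continuous_subtype_val).pow k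
  refine Integrable.mono' (integrable_const 1) hc.aestronglyMeasurable ?_
  refine Filter.Eventually.of_forall fun ω => ?_
  rw [Real.norm_eq_abs, abs_pow]
  have h1 : |(inner ℝ a (ω:Euc) : ℝ)| ≤ 1 := by
    have h := abs_real_inner_le_norm a (ω:Euc)
    rwa [ha, norm_sphere_elt, one_mul] at h
  exact pow_le_one₀ (abs_nonneg _) h1

lemma measure_sphere_toReal (a : Euc) (ha : ‖a‖ = 1) :
    (((volume : Measure Euc).toSphere) Set.univ).toReal = S a 0 := by
  have : S a 0 = ∫ _ : sphere (0:Euc) 1, (1:ℝ) ∂((volume : Measure Euc).toSphere) := by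
    rw [S]
    exact integral_congr_ae (Filter.Eventually.of_forall fun ω => by dsimp only; rw [pow_zero])
  rw [this, integral_const, smul_eq_mul, mul_one]
  rfl

lemma average_q (a : Euc) (ha : ‖a‖ = 1) (c : ℕ → ℝ) :
    (⨍ ω : sphere (0:Euc) 1, (∑ k ∈ Finset.range 8, c k * (inner ℝ a (ω:Euc) : ℝ) ^ k)
      ∂((volume : Measure Euc).toSphere))
    = c 0 + c 2 * (1/23) + c 4 * (3/575) + c 6 * (1/1035) := by
  have hint : (∫ ω : sphere (0:Euc) 1, (∑ k ∈ Finset.range 8, c k * (inner ℝ a (ω:Euc):ℝ)^k)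
      ∂((volume : Measure Euc).toSphere))
      = ∑ k ∈ Finset.range 8, c k * S a k := by
    rw [integral_finset_sum _ (fun k _ => ((integrable_inner_pow a ha k).const_mul (c k)))]
    exact Finset.sum_congr rfl fun k _ => by rw [integral_const_mul]; rfl
  rw [average_eq, hint, measureReal_def, measure_sphere_toReal a ha]
  obtain ⟨h2, h4, h6⟩ := S_even_vals a ha
  have o1 := S_odd a ha 1 (by decide)
  have o3 := S_odd a ha 3 (by decide)
  have o5 := S_odd a ha 5 (by decide)
  have o7 := S_odd a ha 7 (by decide)
  have hS0 : S a 0 ≠ 0 := (S0_pos a ha).ne'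
  have hexp : ∑ k ∈ Finset.range 8, c k * S a k
      = (c 0 + c 2 * (1/23) + c 4 * (3/575) + c 6 * (1/1035)) * S a 0 := by
    rw [Finset.sum_range_succ, Finset.sum_range_succ, Finset.sum_range_succ,
      Finset.sum_range_succ, Finset.sum_range_succ, Finset.sum_range_succ,
      Finset.sum_range_succ, Finset.sum_range_one, o1, o3, o5, o7, h2, h4, h6]
    have hS00 : S a 0 ^ 0 = 1 := by norm_num
    field_simp
    ring
  rw [hexp, smul_eq_mul]
  field_simp


noncomputable def Lpoly (a : Euc) : MvPolynomial (Fin 23) ℝ :=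
  ∑ i, MvPolynomial.C (a i) * MvPolynomial.X i

noncomputable def Ppoly (c : ℕ → ℝ) (a : Euc) : MvPolynomial (Fin 23) ℝ :=
  ∑ k ∈ Finset.range 8, MvPolynomial.C (c k) * (Lpoly a) ^ k

lemma eval_Lpoly (a x : Euc) :
    MvPolynomial.eval (fun i => x i) (Lpoly a) = (inner ℝ a x : ℝ) := by
  rw [Lpoly, map_sum, show (inner ℝ a x : ℝ) = ∑ i, a i * x i from by
    simp [PiLp.inner_apply, RCLike.inner_apply, mul_comm]]
  exact Finset.sum_congr rfl fun i _ => by simp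

lemma eval_Ppoly (c : ℕ → ℝ) (a x : Euc) :
    MvPolynomial.eval (fun i => x i) (Ppoly c a)
      = ∑ k ∈ Finset.range 8, c k * (inner ℝ a x : ℝ) ^ k := by
  rw [Ppoly, map_sum]
  exact Finset.sum_congr rfl fun k _ => by rw [map_mul, map_pow, eval_Lpoly]; simp

lemma deg_Ppoly (c : ℕ → ℝ) (a : Euc) : (Ppoly c a).totalDegree ≤ 7 := by
  refine le_trans (MvPolynomial.totalDegree_finset_sum _ _) (Finset.sup_le fun k hk => ?_)
  refine le_trans (MvPolynomial.totalDegree_mul _ _) ?_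
  rw [MvPolynomial.totalDegree_C, zero_add]
  refine le_trans (MvPolynomial.totalDegree_pow _ _) ?_
  have hL : (Lpoly a).totalDegree ≤ 1 := by
    refine le_trans (MvPolynomial.totalDegree_finset_sum _ _) (Finset.sup_le fun i _ => ?_)
    refine le_trans (MvPolynomial.totalDegree_mul _ _) ?_
    rw [MvPolynomial.totalDegree_C, zero_add, MvPolynomial.totalDegree_X]
  calc k * (Lpoly a).totalDegree ≤ k * 1 := Nat.mul_le_mul_left k hL
    _ = k := mul_one k
    _ ≤ 7 := Nat.lt_succ_iff.mp (Finset.mem_range.mp hk)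

noncomputable abbrev sphMeasure := (volume : Measure Euc).toSphere

lemma sph_neZero : NeZero ((volume : Measure Euc).toSphere) := by
  constructor
  intro h
  have h1 := measure_sphere_toReal (EuclideanSpace.single (0 : Fin 23) (1:ℝ))
    (by rw [EuclideanSpace.norm_single, norm_one])
  have h2 := S0_pos (EuclideanSpace.single (0 : Fin 23) (1:ℝ))
    (by rw [EuclideanSpace.norm_single, norm_one])
  rw [h] at h1
  simp at h1
  rw [← h1] at h2
  exact lt_irrefl _ h2

lemma design_nonempty_s12 (C : Finset Euc) (hdes : SphericalDesign 23 7 C) : 0 < C.card := by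
  by_contra h
  have hcard : C.card = 0 := Nat.eq_zero_of_not_pos h
  have h1 := hdes 1 (by rw [MvPolynomial.totalDegree_one]; norm_num)
  have hne : NeZero ((volume : Measure Euc).toSphere) := sph_neZero
  have h2 : (⨍ _x : sphere (0:Euc) 1, (1:ℝ) ∂((volume : Measure Euc).toSphere)) = 1 :=
    average_const _ 1
  simp only [map_one] at h1
  rw [h2, Finset.sum_const, hcard] at h1
  norm_num at h1

lemma master (c : ℕ → ℝ) (q0 : ℝ)
    (hq0 : c 0 + c 2 * (1/23) + c 4 * (3/575) + c 6 * (1/1035) = q0)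
    (hq0pos : 0 < q0)
    (C : Finset Euc) (hC : ∀ x ∈ C, ‖x‖ = 1) (hdes : SphericalDesign 23 7 C)
    (hpos : ∀ x ∈ C, ∀ y ∈ C, x ≠ y → 0 ≤ ∑ k ∈ Finset.range 8, c k * (inner ℝ x y : ℝ) ^ k)
    (hq1 : 93150 * q0 ≤ ∑ k ∈ Finset.range 8, c k) :
    93150 ≤ C.card := by
  have hcard := design_nonempty_s12 C hdes
  obtain ⟨x₀, hx₀⟩ := Finset.card_pos.mp hcard
  have ha : ‖x₀‖ = 1 := hC x₀ hx₀
  have hd := hdes (Ppoly c x₀) (deg_Ppoly c x₀)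
  have hL : (∑ x ∈ C, MvPolynomial.eval (fun i => x i) (Ppoly c x₀))
      = ∑ x ∈ C, ∑ k ∈ Finset.range 8, c k * (inner ℝ x₀ x : ℝ) ^ k :=
    Finset.sum_congr rfl fun x _ => eval_Ppoly c x₀ x
  have hR : (⨍ x : sphere (0:Euc) 1, MvPolynomial.eval (fun i => (x : Euc) i) (Ppoly c x₀)
      ∂sphMeasure) = q0 := by
    rw [← hq0, ← average_q x₀ ha c]
    rw [average_eq, average_eq]
    congr 1
    exact integral_congr_ae (Filter.Eventually.of_forall fun ω => eval_Ppoly c x₀ (ω : Euc))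
  rw [hL, hR] at hd
  have hcast : (C.card : ℝ) ≠ 0 := Nat.cast_ne_zero.mpr hcard.ne'
  rw [div_eq_iff hcast] at hd
  have hself : ∑ k ∈ Finset.range 8, c k * (inner ℝ x₀ x₀ : ℝ) ^ k
      = ∑ k ∈ Finset.range 8, c k := by
    refine Finset.sum_congr rfl fun k _ => ?_
    rw [real_inner_self_eq_norm_sq, ha, one_pow, one_pow, mul_one]
  have hsplit := Finset.add_sum_erase C
    (fun x => ∑ k ∈ Finset.range 8, c k * (inner ℝ x₀ x : ℝ) ^ k) hx₀
  have hrest : 0 ≤ ∑ x ∈ C.erase x₀, ∑ k ∈ Finset.range 8, c k * (inner ℝ x₀ x : ℝ) ^ k :=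
    Finset.sum_nonneg fun y hy => hpos x₀ hx₀ y (Finset.mem_of_mem_erase hy)
      (fun h => (Finset.mem_erase.mp hy).1 h.symm)
  have hfinal : (93150:ℝ) ≤ C.card := by
    have h1 : (93150:ℝ) * q0 ≤ q0 * (C.card : ℝ) := by
      rw [← hd]
      calc (93150:ℝ) * q0 ≤ ∑ k ∈ Finset.range 8, c k := hq1
        _ = ∑ k ∈ Finset.range 8, c k * (inner ℝ x₀ x₀ : ℝ) ^ k := hself.symm
        _ ≤ ∑ x ∈ C, ∑ k ∈ Finset.range 8, c k * (inner ℝ x₀ x : ℝ) ^ k := by linarith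
    have h2 : (93150:ℝ) * q0 ≤ (C.card : ℝ) * q0 := by linarith
    exact le_of_mul_le_mul_right h2 hq0pos
  exact_mod_cast hfinal


lemma case1_nonneg (t : ℝ) (h1 : -1 ≤ t) (h2 : t ≤ 1)
    (hA : t ≤ -(1/2) ∨ -(1/4) ≤ t) (hB : t ≤ 1/4 ∨ 1/2 ≤ t) :
    0 ≤ 1/64*t^2 + 1/64*t^3 - 5/16*t^4 - 5/16*t^5 + t^6 + t^7 := by
  rcases hA with hA|hA <;> rcases hB with hB|hB
  · nlinarith [mul_nonneg (mul_nonneg (mul_nonneg (mul_nonneg (mul_nonneg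
      (by linarith : (0:ℝ) ≤ t+1) (by linarith : (0:ℝ) ≤ -(t+1/2)))
      (by linarith : (0:ℝ) ≤ -(t+1/4))) (sq_nonneg t))
      (by linarith : (0:ℝ) ≤ -(t-1/4))) (by linarith : (0:ℝ) ≤ -(t-1/2))]
  · linarith
  · nlinarith [mul_nonneg (mul_nonneg (mul_nonneg (mul_nonneg (mul_nonneg
      (by linarith : (0:ℝ) ≤ t+1) (by linarith : (0:ℝ) ≤ t+1/2))
      (by linarith : (0:ℝ) ≤ t+1/4)) (sq_nonneg t))
      (by linarith : (0:ℝ) ≤ -(t-1/4))) (by linarith : (0:ℝ) ≤ -(t-1/2))]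
  · nlinarith [mul_nonneg (mul_nonneg (mul_nonneg (mul_nonneg (mul_nonneg
      (by linarith : (0:ℝ) ≤ t+1) (by linarith : (0:ℝ) ≤ t+1/2))
      (by linarith : (0:ℝ) ≤ t+1/4)) (sq_nonneg t))
      (by linarith : (0:ℝ) ≤ t-1/4)) (by linarith : (0:ℝ) ≤ t-1/2)]

lemma case2_nonneg (t : ℝ) (h1 : -1 ≤ t) (h2 : t ≤ 1)
    (hA : t ≤ -(1/4) ∨ 0 ≤ t) (hB : t ≤ 1/4 ∨ 1/2 ≤ t) :
    0 ≤ 1/128*t + 3/128*t^2 - 9/64*t^3 - 15/32*t^4 + 3/16*t^5 + 3/2*t^6 + t^7 := by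
  rcases hA with hA|hA <;> rcases hB with hB|hB
  · nlinarith [mul_nonneg (mul_nonneg (mul_nonneg (mul_nonneg (mul_nonneg
      (by linarith : (0:ℝ) ≤ t+1) (sq_nonneg (t+1/2)))
      (by linarith : (0:ℝ) ≤ -(t+1/4))) (by linarith : (0:ℝ) ≤ -t))
      (by linarith : (0:ℝ) ≤ -(t-1/4))) (by linarith : (0:ℝ) ≤ -(t-1/2))]
  · linarith
  · nlinarith [mul_nonneg (mul_nonneg (mul_nonneg (mul_nonneg (mul_nonneg
      (by linarith : (0:ℝ) ≤ t+1) (sq_nonneg (t+1/2)))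
      (by linarith : (0:ℝ) ≤ t+1/4)) (by linarith : (0:ℝ) ≤ t))
      (by linarith : (0:ℝ) ≤ -(t-1/4))) (by linarith : (0:ℝ) ≤ -(t-1/2))]
  · nlinarith [mul_nonneg (mul_nonneg (mul_nonneg (mul_nonneg (mul_nonneg
      (by linarith : (0:ℝ) ≤ t+1) (sq_nonneg (t+1/2)))
      (by linarith : (0:ℝ) ≤ t+1/4)) (by linarith : (0:ℝ) ≤ t))
      (by linarith : (0:ℝ) ≤ t-1/4)) (by linarith : (0:ℝ) ≤ t-1/2)]

lemma case3_nonneg (t : ℝ) (h1 : -1 ≤ t) (h2 : t ≤ 1)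
    (hA : t ≤ -(1/2) ∨ -(1/4) ≤ t) (hB : t ≤ 0 ∨ 1/4 ≤ t) :
    0 ≤ -1/128*t + 1/128*t^2 + 11/64*t^3 - 5/32*t^4 - 13/16*t^5 + 1/2*t^6 + t^7 := by
  rcases hA with hA|hA <;> rcases hB with hB|hB
  · nlinarith [mul_nonneg (mul_nonneg (mul_nonneg (mul_nonneg (mul_nonneg
      (by linarith : (0:ℝ) ≤ t+1) (by linarith : (0:ℝ) ≤ -(t+1/2)))
      (by linarith : (0:ℝ) ≤ -(t+1/4))) (by linarith : (0:ℝ) ≤ -t))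
      (by linarith : (0:ℝ) ≤ -(t-1/4))) (sq_nonneg (t-1/2))]
  · linarith
  · nlinarith [mul_nonneg (mul_nonneg (mul_nonneg (mul_nonneg (mul_nonneg
      (by linarith : (0:ℝ) ≤ t+1) (by linarith : (0:ℝ) ≤ t+1/2))
      (by linarith : (0:ℝ) ≤ t+1/4)) (by linarith : (0:ℝ) ≤ -t))
      (by linarith : (0:ℝ) ≤ -(t-1/4))) (sq_nonneg (t-1/2))]
  · nlinarith [mul_nonneg (mul_nonneg (mul_nonneg (mul_nonneg (mul_nonneg
      (by linarith : (0:ℝ) ≤ t+1) (by linarith : (0:ℝ) ≤ t+1/2))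
      (by linarith : (0:ℝ) ≤ t+1/4)) (by linarith : (0:ℝ) ≤ t))
      (by linarith : (0:ℝ) ≤ t-1/4)) (sq_nonneg (t-1/2))]


lemma master' (c0 c1 c2 c3 c4 c5 c6 c7 q0 : ℝ)
    (hq0 : c0 + c2 * (1/23) + c4 * (3/575) + c6 * (1/1035) = q0)
    (hq0pos : 0 < q0)
    (C : Finset Euc) (hC : ∀ x ∈ C, ‖x‖ = 1) (hdes : SphericalDesign 23 7 C)
    (hpos : ∀ x ∈ C, ∀ y ∈ C, x ≠ y → 0 ≤ c0 + c1 * (inner ℝ x y:ℝ) + c2 * (inner ℝ x y:ℝ)^2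
      + c3 * (inner ℝ x y:ℝ)^3 + c4 * (inner ℝ x y:ℝ)^4 + c5 * (inner ℝ x y:ℝ)^5
      + c6 * (inner ℝ x y:ℝ)^6 + c7 * (inner ℝ x y:ℝ)^7)
    (hq1 : 93150 * q0 ≤ c0 + c1 + c2 + c3 + c4 + c5 + c6 + c7) :
    93150 ≤ C.card := by
  set c : ℕ → ℝ := fun n =>
    if n = 0 then c0 else if n = 1 then c1 else if n = 2 then c2 else if n = 3 then c3
    else if n = 4 then c4 else if n = 5 then c5 else if n = 6 then c6 else c7 with hc
  have hsum : ∀ t : ℝ, ∑ k ∈ Finset.range 8, c k * t ^ k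
      = c0 + c1*t + c2*t^2 + c3*t^3 + c4*t^4 + c5*t^5 + c6*t^6 + c7*t^7 := by
    intro t
    rw [Finset.sum_range_succ, Finset.sum_range_succ, Finset.sum_range_succ,
      Finset.sum_range_succ, Finset.sum_range_succ, Finset.sum_range_succ,
      Finset.sum_range_succ, Finset.sum_range_one]
    norm_num [hc]
  apply master c q0 ?_ hq0pos C hC hdes ?_ ?_
  · have e0 : c 0 = c0 := by norm_num [hc]
    have e2 : c 2 = c2 := by norm_num [hc]
    have e4 : c 4 = c4 := by norm_num [hc]
    have e6 : c 6 = c6 := by norm_num [hc]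
    rw [e0, e2, e4, e6]
    exact hq0
  · intro x hx y hy hxy
    rw [hsum]
    exact hpos x hx y hy hxy
  · have h1 : (∑ k ∈ Finset.range 8, c k) = ∑ k ∈ Finset.range 8, c k * (1:ℝ) ^ k := by
      refine Finset.sum_congr rfl fun k _ => by rw [one_pow, mul_one]
    rw [h1, hsum]
    linarith [hq1]

lemma notIoo {a b t : ℝ} (h : t ∉ Set.Ioo a b) : t ≤ a ∨ b ≤ t := by
  rw [Set.mem_Ioo, not_and_or, not_lt, not_lt] at h
  exact h

end Aux

theorem statement12 (T : Set ℝ)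
    (hT : T = Set.Ioo (-1/2 : ℝ) (-1/4) ∪ Set.Ioo (1/4 : ℝ) (1/2) ∨
      T = Set.Ioo (-1/4 : ℝ) 0 ∪ Set.Ioo (1/4 : ℝ) (1/2) ∨
      T = Set.Ioo (-1/2 : ℝ) (-1/4) ∪ Set.Ioo (0 : ℝ) (1/4))
    (C : Finset (EuclideanSpace ℝ (Fin 23))) (hC : ∀ x ∈ C, ‖x‖ = 1)
    (hdes : SphericalDesign 23 7 C)
    (havoid : ∀ x ∈ C, ∀ y ∈ C, x ≠ y → (inner ℝ x y : ℝ) ∉ T) :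
    93150 ≤ C.card := by
  have hbounds : ∀ x ∈ C, ∀ y ∈ C, -1 ≤ (inner ℝ x y : ℝ) ∧ (inner ℝ x y : ℝ) ≤ 1 := by
    intro x hx y hy
    have h := abs_real_inner_le_norm x y
    rw [hC x hx, hC y hy, one_mul] at h
    exact abs_le.mp h
  rcases hT with hT1 | hT2 | hT3
  · apply master' 0 0 (1/64) (1/64) (-5/16) (-5/16) 1 1 (1/66240) (by norm_num)
      (by norm_num) C hC hdes ?_ (by norm_num)
    intro x hx y hy hxy
    obtain ⟨hb1, hb2⟩ := hbounds x hx y hy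
    have hav := havoid x hx y hy hxy
    rw [hT1, Set.mem_union, not_or] at hav
    obtain ⟨hu, hv⟩ := hav
    have hA := notIoo hu
    have hB := notIoo hv
    have := case1_nonneg (inner ℝ x y : ℝ) hb1 hb2
      (hA.imp (fun h => by linarith) (fun h => by linarith))
      (hB.imp (fun h => by linarith) (fun h => by linarith))
    linarith
  · apply master' 0 (1/128) (3/128) (-9/64) (-15/32) (3/16) (3/2) 1 (1/44160) (by norm_num)
      (by norm_num) C hC hdes ?_ (by norm_num)
    intro x hx y hy hxy
    obtain ⟨hb1, hb2⟩ := hbounds x hx y hy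
    have hav := havoid x hx y hy hxy
    rw [hT2, Set.mem_union, not_or] at hav
    obtain ⟨hu, hv⟩ := hav
    have hA := notIoo hu
    have hB := notIoo hv
    have := case2_nonneg (inner ℝ x y : ℝ) hb1 hb2
      (hA.imp (fun h => by linarith) (fun h => by linarith))
      (hB.imp (fun h => by linarith) (fun h => by linarith))
    linarith
  · apply master' 0 (-1/128) (1/128) (11/64) (-5/32) (-13/16) (1/2) 1 (1/132480) (by norm_num)
      (by norm_num) C hC hdes ?_ (by norm_num)
    intro x hx y hy hxy
    obtain ⟨hb1, hb2⟩ := hbounds x hx y hy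
    have hav := havoid x hx y hy hxy
    rw [hT3, Set.mem_union, not_or] at hav
    obtain ⟨hu, hv⟩ := hav
    have hA := notIoo hu
    have hB := notIoo hv
    have := case3_nonneg (inner ℝ x y : ℝ) hb1 hb2
      (hA.imp (fun h => by linarith) (fun h => by linarith))
      (hB.imp (fun h => by linarith) (fun h => by linarith))
    linarith
end

section
/- Let T = (−1/2, −1/5) ∪ (1/10, 2/5). Then every T-avoiding spherical 4-design C ⊆ S^{22} ⊆ ℝ^{23} satisfies |C| ≥ 11178. -/
open scoped Classical
open MeasureTheory Finset


section Aux
open Real Set Filter Metric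

local notation "E23" => EuclideanSpace ℝ (Fin 23)

noncomputable def J (k : ℕ) : ℝ := ∫ r in Ioi (0:ℝ), r ^ k * Real.exp (-r ^ 2)

lemma integrable_moment (k : ℕ) : Integrable (fun x : ℝ => x ^ k * Real.exp (-x ^ 2)) := by
  have h := integrable_rpow_mul_exp_neg_mul_sq (b := 1) one_pos
    (s := (k : ℝ)) (by exact_mod_cast neg_one_lt_zero.trans_le (Nat.cast_nonneg k))
  refine h.congr (Eventually.of_forall fun x => ?_)
  simp only [Real.rpow_natCast, neg_one_mul]

lemma tendsto_pow_exp_top (k : ℕ) :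
    Tendsto (fun x : ℝ => x ^ k * Real.exp (-x ^ 2)) atTop (nhds 0) := by
  have h := rpow_mul_exp_neg_mul_sq_isLittleO_exp_neg (b := 1) one_pos (k : ℝ)
  have h2 : Tendsto (fun x : ℝ => Real.exp (-(1/2) * x)) atTop (nhds 0) := by
    have h3 : Tendsto (fun x : ℝ => (-(1/2)) * x) atTop atBot :=
      Filter.Tendsto.const_mul_atTop_of_neg (by norm_num : (-(1/2) : ℝ) < 0) tendsto_id
    exact Real.tendsto_exp_atBot.comp h3
  have h4 := h.isBigO.trans_tendsto h2
  refine h4.congr' ?_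
  filter_upwards [eventually_ge_atTop (0:ℝ)] with x hx
  simp only [Real.rpow_natCast, neg_one_mul]

lemma tendsto_pow_exp_bot (k : ℕ) :
    Tendsto (fun x : ℝ => x ^ k * Real.exp (-x ^ 2)) atBot (nhds 0) := by
  have h := ((tendsto_pow_exp_top k).comp tendsto_neg_atBot_atTop).const_mul ((-1 : ℝ) ^ k)
  rw [mul_zero] at h
  refine h.congr fun x => ?_
  simp only [Function.comp]
  rw [neg_sq, ← mul_assoc, ← mul_pow]
  norm_num

lemma moment_rec (k : ℕ) :
    ∫ x : ℝ, x ^ (k + 2) * Real.exp (-x ^ 2)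
      = ((k + 1 : ℝ) / 2) * ∫ x : ℝ, x ^ k * Real.exp (-x ^ 2) := by
  have hderiv : ∀ x : ℝ, HasDerivAt (fun x : ℝ => (-(1/2) : ℝ) * (x ^ (k+1) * Real.exp (-x ^ 2)))
      (x ^ (k + 2) * Real.exp (-x ^ 2) - ((k + 1 : ℝ) / 2) * (x ^ k * Real.exp (-x ^ 2))) x := by
    intro x
    have h1 : HasDerivAt (fun x : ℝ => x ^ (k+1)) ((k+1 : ℝ) * x ^ k) x := by
      simpa using hasDerivAt_pow (k+1) x
    have h2 : HasDerivAt (fun x : ℝ => Real.exp (-x ^ 2)) (Real.exp (-x ^ 2) * (-(2*x))) x := by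
      have h3 : HasDerivAt (fun x : ℝ => -x ^ 2) (-(2*x)) x := by
        exact (hasDerivAt_pow 2 x).neg.congr_deriv (by norm_num)
      exact h3.exp
    have := (h1.mul h2).const_mul (-(1/2) : ℝ)
    exact this.congr_deriv (by ring)
  have hint : Integrable (fun x : ℝ =>
      x ^ (k + 2) * Real.exp (-x ^ 2) - ((k + 1 : ℝ) / 2) * (x ^ k * Real.exp (-x ^ 2))) :=
    (integrable_moment (k+2)).sub ((integrable_moment k).const_mul _)
  have htop : Tendsto (fun x : ℝ => (-(1/2) : ℝ) * (x ^ (k+1) * Real.exp (-x ^ 2))) atTop (nhds 0) := by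
    simpa using (tendsto_pow_exp_top (k+1)).const_mul (-(1/2) : ℝ)
  have hbot : Tendsto (fun x : ℝ => (-(1/2) : ℝ) * (x ^ (k+1) * Real.exp (-x ^ 2))) atBot (nhds 0) := by
    simpa using (tendsto_pow_exp_bot (k+1)).const_mul (-(1/2) : ℝ)
  have h0 := MeasureTheory.integral_of_hasDerivAt_of_tendsto hderiv hint hbot htop
  rw [sub_zero, MeasureTheory.integral_sub (integrable_moment (k+2))
    ((integrable_moment k).const_mul _), integral_const_mul] at h0
  linarith

lemma M0 : ∫ x : ℝ, x ^ 0 * Real.exp (-x ^ 2) = Real.sqrt π := by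
  simpa using integral_gaussian 1

lemma M1 : ∫ x : ℝ, x ^ 1 * Real.exp (-x ^ 2) = 0 := by
  have hderiv : ∀ x : ℝ, HasDerivAt (fun x : ℝ => (-(1/2) : ℝ) * Real.exp (-x ^ 2))
      (x ^ 1 * Real.exp (-x ^ 2)) x := by
    intro x
    have h3 : HasDerivAt (fun x : ℝ => -x ^ 2) (-(2*x)) x := by
      exact (hasDerivAt_pow 2 x).neg.congr_deriv (by norm_num)
    have := h3.exp.const_mul (-(1/2) : ℝ)
    exact this.congr_deriv (by ring)
  have htop : Tendsto (fun x : ℝ => (-(1/2) : ℝ) * Real.exp (-x ^ 2)) atTop (nhds 0) := by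
    have := (tendsto_pow_exp_top 0).const_mul (-(1/2) : ℝ)
    simpa using this
  have hbot : Tendsto (fun x : ℝ => (-(1/2) : ℝ) * Real.exp (-x ^ 2)) atBot (nhds 0) := by
    have := (tendsto_pow_exp_bot 0).const_mul (-(1/2) : ℝ)
    simpa using this
  have h0 := MeasureTheory.integral_of_hasDerivAt_of_tendsto hderiv (integrable_moment 1) hbot htop
  simpa using h0

lemma M2 : ∫ x : ℝ, x ^ 2 * Real.exp (-x ^ 2) = Real.sqrt π / 2 := by
  have := moment_rec 0; rw [M0] at this; rw [this]; ring

lemma M3 : ∫ x : ℝ, x ^ 3 * Real.exp (-x ^ 2) = 0 := by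
  have := moment_rec 1; rw [M1] at this; rw [this]; ring

lemma M4 : ∫ x : ℝ, x ^ 4 * Real.exp (-x ^ 2) = 3 * Real.sqrt π / 4 := by
  have := moment_rec 2; rw [M2] at this; rw [this]; ring





lemma Jpos (k : ℕ) : 0 < J k := by
  rw [J, setIntegral_pos_iff_support_of_nonneg_ae]
  · have : Ioi (0:ℝ) ⊆ (Function.support fun r : ℝ => r ^ k * Real.exp (-r ^ 2)) ∩ Ioi 0 := by
      intro r hr
      refine ⟨?_, hr⟩
      have hr0 : (0:ℝ) < r := hr
      have : (0:ℝ) < r ^ k * Real.exp (-r ^ 2) := by positivity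
      exact fun h => by simp [h] at this -- support
    calc (0:ENNReal) < volume (Ioi (0:ℝ)) := by simp
    _ ≤ _ := measure_mono this
  · filter_upwards [ae_restrict_mem measurableSet_Ioi] with r hr
    have hr0 : (0:ℝ) < r := hr
    positivity
  · exact (integrable_moment k).integrableOn

lemma Jrec (k : ℕ) : J (k + 2) = ((k + 1 : ℝ) / 2) * J k := by
  have hderiv : ∀ x ∈ Ioi (0:ℝ), HasDerivAt (fun x : ℝ => (-(1/2) : ℝ) * (x ^ (k+1) * Real.exp (-x ^ 2)))
      (x ^ (k + 2) * Real.exp (-x ^ 2) - ((k + 1 : ℝ) / 2) * (x ^ k * Real.exp (-x ^ 2))) x := by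
    intro x _
    have h1 : HasDerivAt (fun x : ℝ => x ^ (k+1)) ((k+1 : ℝ) * x ^ k) x := by
      simpa using hasDerivAt_pow (k+1) x
    have h3 : HasDerivAt (fun x : ℝ => -x ^ 2) (-(2*x)) x := by
      exact (hasDerivAt_pow 2 x).neg.congr_deriv (by norm_num)
    have := (h1.mul h3.exp).const_mul (-(1/2) : ℝ)
    exact this.congr_deriv (by ring)
  have hcont : ContinuousWithinAt (fun x : ℝ => (-(1/2) : ℝ) * (x ^ (k+1) * Real.exp (-x ^ 2)))
      (Ici 0) 0 := (Continuous.continuousWithinAt (by continuity))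
  have hint : IntegrableOn (fun x : ℝ =>
      x ^ (k + 2) * Real.exp (-x ^ 2) - ((k + 1 : ℝ) / 2) * (x ^ k * Real.exp (-x ^ 2))) (Ioi 0) :=
    ((integrable_moment (k+2)).sub ((integrable_moment k).const_mul _)).integrableOn
  have htop : Tendsto (fun x : ℝ => (-(1/2) : ℝ) * (x ^ (k+1) * Real.exp (-x ^ 2))) atTop (nhds 0) := by
    simpa using (tendsto_pow_exp_top (k+1)).const_mul (-(1/2) : ℝ)
  have h0 := MeasureTheory.integral_Ioi_of_hasDerivAt_of_tendsto hcont hderiv hint htop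
  rw [MeasureTheory.integral_sub ((integrable_moment (k+2)).integrableOn)
    (((integrable_moment k).const_mul _).integrableOn), MeasureTheory.integral_const_mul] at h0
  have h1 : (0:ℝ) - (-(1/2) : ℝ) * ((0:ℝ) ^ (k+1) * Real.exp (-(0:ℝ) ^ 2)) = 0 := by
    simp
  rw [h1] at h0
  rw [J, J]
  linarith






lemma polar_s13 (k : ℕ) (G : E23 → ℝ)
    (hom : ∀ (r : ℝ), 0 < r → ∀ x : E23, G (r • x) = r ^ k * G x) :
    (∫ ω : sphere (0:E23) 1, G ω ∂((volume : Measure E23).toSphere)) * J (22 + k)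
      = ∫ x : E23, G x * Real.exp (-‖x‖ ^ 2) := by
  have dimeq : Module.finrank ℝ E23 = 23 := finrank_euclideanSpace_fin
  have MP := (volume : Measure E23).measurePreserving_homeomorphUnitSphereProd
  rw [dimeq] at MP
  set F : sphere (0:E23) 1 × Ioi (0:ℝ) → ℝ :=
    fun p => G p.1 * ((p.2 : ℝ) ^ k * Real.exp (-(p.2 : ℝ) ^ 2)) with hF
  have step1 : ∫ p, F p ∂(((volume : Measure E23).toSphere).prod (.volumeIoiPow (23 - 1)))
      = ∫ x : ({(0:E23)}ᶜ : Set E23), F (homeomorphUnitSphereProd E23 x)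
          ∂((volume : Measure E23).comap Subtype.val) :=
    (MP.integral_comp (Homeomorph.measurableEmbedding _) F).symm
  have step2 : ∀ x : ({(0:E23)}ᶜ : Set E23),
      F (homeomorphUnitSphereProd E23 x) = G x.1 * Real.exp (-‖x.1‖ ^ 2) := by
    rintro ⟨x, hx⟩
    have hx0 : x ≠ 0 := hx
    have hn : (0:ℝ) < ‖x‖ := norm_pos_iff.2 hx0
    simp only [hF, homeomorphUnitSphereProd_apply_fst_coe, homeomorphUnitSphereProd_apply_snd_coe]
    rw [hom _ (inv_pos.2 hn)]
    field_simp
    rw [one_div, inv_pow, mul_comm, ← mul_assoc, mul_inv_cancel₀ (pow_ne_zero _ hn.ne'), one_mul]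
  have step3 : ∫ x : ({(0:E23)}ᶜ : Set E23), G x.1 * Real.exp (-‖x.1‖ ^ 2)
      ∂((volume : Measure E23).comap Subtype.val)
      = ∫ x : E23, G x * Real.exp (-‖x‖ ^ 2) := by
    rw [integral_subtype_comap (measurableSet_singleton (0:E23)).compl
      (fun x => G x * Real.exp (-‖x‖ ^ 2)), MeasureTheory.restrict_compl_singleton]
  have step4 : ∫ p, F p ∂(((volume : Measure E23).toSphere).prod (.volumeIoiPow (23 - 1)))
      = (∫ ω : sphere (0:E23) 1, G ω ∂((volume : Measure E23).toSphere))
        * ∫ r : Ioi (0:ℝ), (r : ℝ) ^ k * Real.exp (-(r:ℝ) ^ 2) ∂(Measure.volumeIoiPow (23-1)) :=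
    integral_prod_mul (fun ω : sphere (0:E23) 1 => G ω)
      (fun r : Ioi (0:ℝ) => (r : ℝ) ^ k * Real.exp (-(r:ℝ) ^ 2))
  have step5 : ∫ r : Ioi (0:ℝ), (r : ℝ) ^ k * Real.exp (-(r:ℝ) ^ 2) ∂(Measure.volumeIoiPow (23-1))
      = J (22 + k) := by
    simp only [Measure.volumeIoiPow, ENNReal.ofReal]
    rw [integral_withDensity_eq_integral_smul
      ((measurable_subtype_coe.pow_const _).real_toNNReal),
      integral_subtype_comap measurableSet_Ioi
        (fun a : ℝ => ((a ^ (23-1)).toNNReal : NNReal) • (a ^ k * Real.exp (-a ^ 2)))]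
    rw [J]
    refine setIntegral_congr_fun measurableSet_Ioi fun x hx => ?_
    have hx0 : (0:ℝ) < x := hx
    rw [NNReal.smul_def, Real.coe_toNNReal _ (by positivity)]
    rw [smul_eq_mul, ← mul_assoc, ← pow_add]
  rw [← step5, ← step4, step1]
  rw [← step3]
  exact integral_congr_ae (Eventually.of_forall step2)




lemma gauss_pi (k : ℕ) :
    ∫ c : E23, (c 0) ^ k * Real.exp (-‖c‖ ^ 2)
      = (∫ t : ℝ, t ^ k * Real.exp (-t ^ 2)) * (∫ t : ℝ, Real.exp (-t ^ 2)) ^ 22 := by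
  have hMP := (EuclideanSpace.volume_preserving_symm_measurableEquiv_toLp (Fin 23)).symm
  rw [← hMP.integral_comp (MeasurableEquiv.measurableEmbedding _)
    (fun c : E23 => (c 0) ^ k * Real.exp (-‖c‖ ^ 2))]
  have hcoord : ∀ (a : Fin 23 → ℝ),
      ((MeasurableEquiv.toLp 2 (Fin 23 → ℝ)).symm.symm a : E23) = fun i => a i := by
    intro a; rfl
  have hnorm : ∀ (a : Fin 23 → ℝ),
      ‖((MeasurableEquiv.toLp 2 (Fin 23 → ℝ)).symm.symm a : E23)‖ ^ 2 = ∑ i, (a i) ^ 2 := by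
    intro a
    rw [EuclideanSpace.norm_eq, Real.sq_sqrt (by positivity)]
    refine Finset.sum_congr rfl fun i _ => ?_
    rw [hcoord, Real.norm_eq_abs, sq_abs]
  have key : ∀ (a : Fin 23 → ℝ),
      (((MeasurableEquiv.toLp 2 (Fin 23 → ℝ)).symm.symm a : E23) 0) ^ k
        * Real.exp (-‖((MeasurableEquiv.toLp 2 (Fin 23 → ℝ)).symm.symm a : E23)‖ ^ 2)
      = ∏ i : Fin 23, ((a i) ^ (if i = 0 then k else 0) * Real.exp (-(a i) ^ 2)) := by
    intro a
    rw [hnorm, hcoord]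
    rw [Finset.prod_mul_distrib]
    rw [← Real.exp_sum]
    simp only [← Finset.sum_neg_distrib]
    congr 1
    rw [Finset.prod_congr rfl (fun i _ => ?_), Finset.prod_ite_eq' Finset.univ (0 : Fin 23)
      (fun i => (a i) ^ k)]
    · simp
    · split <;> simp_all
  rw [integral_congr_ae (Eventually.of_forall key)]
  rw [volume_pi, MeasureTheory.integral_fintype_prod_eq_prod (ι := Fin 23)
    (fun i t => t ^ (if i = 0 then k else 0) * Real.exp (-t ^ 2))]
  rw [Fin.prod_univ_succ]
  simp only [if_pos rfl, Fin.succ_ne_zero, if_neg, pow_zero, one_mul]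
  rw [Finset.prod_const]
  simp





lemma gauss_inner (y : E23) (hy : ‖y‖ = 1) (k : ℕ) :
    ∫ x : E23, (inner ℝ y x : ℝ) ^ k * Real.exp (-‖x‖ ^ 2)
      = (∫ t : ℝ, t ^ k * Real.exp (-t ^ 2)) * (∫ t : ℝ, Real.exp (-t ^ 2)) ^ 22 := by
  have hortho : Orthonormal ℝ (Set.restrict {0} (fun _ : Fin 23 => y)) := by
    rw [orthonormal_iff_ite]
    rintro ⟨i, hi⟩ ⟨j, hj⟩
    have hij : i = j := by
      rw [Set.mem_singleton_iff] at hi hj; rw [hi, hj]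
    subst hij
    rw [if_pos rfl]
    show inner ℝ y y = 1
    rw [real_inner_self_eq_norm_sq, hy]; norm_num
  obtain ⟨b, hb⟩ := hortho.exists_orthonormalBasis_extension_of_card_eq
    (by simp [finrank_euclideanSpace_fin])
  have hb0 : b 0 = y := hb 0 rfl
  have hMP := b.measurePreserving_repr_symm
  rw [← hMP.integral_comp (b.repr.symm.toHomeomorph.measurableEmbedding)
    (fun x : E23 => (inner ℝ y x : ℝ) ^ k * Real.exp (-‖x‖ ^ 2))]
  rw [← gauss_pi k]
  refine integral_congr_ae (Eventually.of_forall fun c => ?_)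
  simp only
  rw [LinearIsometryEquiv.norm_map]
  congr 2
  rw [← hb0, ← OrthonormalBasis.repr_apply_apply, LinearIsometryEquiv.apply_symm_apply]






lemma Mexp : ∫ t : ℝ, Real.exp (-t ^ 2) = Real.sqrt π := by
  rw [← M0]; simp

lemma sphere_moment (y : E23) (hy : ‖y‖ = 1) (k : ℕ) :
    (∫ ω : sphere (0:E23) 1, (inner ℝ y (ω : E23) : ℝ) ^ k ∂((volume : Measure E23).toSphere))
        * J (22 + k)
      = (∫ t : ℝ, t ^ k * Real.exp (-t ^ 2)) * Real.sqrt π ^ 22 := by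
  have h := polar_s13 k (fun x : E23 => (inner ℝ y x : ℝ) ^ k) ?_
  · rw [h, gauss_inner y hy k, Mexp]
  · intro r hr x
    show (inner ℝ y (r • x) : ℝ) ^ k = r ^ k * (inner ℝ y x : ℝ) ^ k
    rw [real_inner_smul_right, mul_pow]

lemma gaussE : ∫ x : E23, Real.exp (-‖x‖ ^ 2) = Real.sqrt π ^ 23 := by
  have hy : ‖(EuclideanSpace.single (0 : Fin 23) (1:ℝ) : E23)‖ = 1 := by
    rw [EuclideanSpace.norm_single]; norm_num
  have h := gauss_inner _ hy 0
  simp only [pow_zero, one_mul] at h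
  have hM0 : ∫ t : ℝ, t ^ 0 * Real.exp (-t ^ 2) = Real.sqrt π := M0
  simp only [pow_zero, one_mul] at hM0
  rw [h, hM0]
  ring

lemma sphere_univ_toReal :
    (((volume : Measure E23).toSphere) univ).toReal * J 22 = Real.sqrt π ^ 23 := by
  have h := polar_s13 0 (fun _ : E23 => (1:ℝ)) (by intro r hr x; rw [pow_zero, one_mul])
  simp only [integral_const, smul_eq_mul, mul_one, one_mul] at h
  have h22 : (22:ℕ) + 0 = 22 := rfl
  rw [h22] at h
  rw [← measureReal_def, h, gaussE]

lemma measure_sphere_pos : 0 < (((volume : Measure E23).toSphere) univ).toReal := by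
  have h := sphere_univ_toReal
  have hπ : (0:ℝ) < Real.sqrt π ^ 23 := by positivity
  nlinarith [Jpos 22, (((volume : Measure E23).toSphere) univ).toReal_nonneg]

lemma integrable_sphere_pow (y : E23) (k : ℕ) :
    Integrable (fun ω : sphere (0:E23) 1 => (inner ℝ y (ω : E23) : ℝ) ^ k)
      ((volume : Measure E23).toSphere) := by
  refine Continuous.integrable_of_hasCompactSupport ?_ (HasCompactSupport.of_compactSpace _)
  exact (Continuous.inner continuous_const continuous_subtype_val).pow k

lemma avg_f (y : E23) (hy : ‖y‖ = 1) :
    ⨍ ω : sphere (0:E23) 1,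
        (((inner ℝ y (ω : E23) : ℝ) + 1/2) * ((inner ℝ y (ω : E23) : ℝ) + 1/5) *
          ((inner ℝ y (ω : E23) : ℝ) - 1/10) * ((inner ℝ y (ω : E23) : ℝ) - 2/5))
        ∂((volume : Measure E23).toSphere) = 1/11500 := by
  set σ := (volume : Measure E23).toSphere with hσ
  set t : sphere (0:E23) 1 → ℝ := fun ω => (inner ℝ y (ω : E23) : ℝ) with ht
  have hint : ∀ k, Integrable (fun ω => t ω ^ k) σ := fun k => integrable_sphere_pow y k
  set c : Fin 5 → ℝ := ![1/250, -11/500, -21/100, 1/5, 1] with hc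
  have hexpand : ∀ ω : sphere (0:E23) 1,
      ((t ω + 1/2) * (t ω + 1/5) * (t ω - 1/10) * (t ω - 2/5))
        = ∑ i : Fin 5, c i * t ω ^ (i : ℕ) := by
    intro ω
    rw [Fin.sum_univ_five]
    simp only [hc]
    norm_num [Matrix.cons_val_zero, Matrix.cons_val_one]
    simp only [Matrix.cons_val]
    ring
  rw [average_eq, integral_congr_ae (Eventually.of_forall hexpand)]
  rw [integral_finset_sum Finset.univ
    (f := fun (i : Fin 5) (ω : sphere (0:E23) 1) => c i * t ω ^ (i : ℕ))
    (fun i _ => (hint (i:ℕ)).const_mul (c i))]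
  simp only [integral_const_mul]
  rw [Fin.sum_univ_five]
  simp only [show ((0:Fin 5):ℕ)=0 from rfl, show ((1:Fin 5):ℕ)=1 from rfl, show ((2:Fin 5):ℕ)=2 from rfl, show ((3:Fin 5):ℕ)=3 from rfl, show ((4:Fin 5):ℕ)=4 from rfl]
  have h1 := sphere_moment y hy 1
  have h2 := sphere_moment y hy 2
  have h3 := sphere_moment y hy 3
  have h4 := sphere_moment y hy 4
  have h0 := sphere_univ_toReal
  rw [M1, zero_mul] at h1
  rw [M2] at h2
  rw [M3, zero_mul] at h3
  rw [M4] at h4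
  have hJ22 := Jpos 22
  have hJ23 := Jpos 23
  have hJ25 := Jpos 25
  have hJ24 : J 24 = (23/2) * J 22 := by
    have h' := Jrec 22; norm_num at h'; exact h'
  have hJ26 : J 26 = (575/4) * J 22 := by
    have h26 := Jrec 24; have h24 := Jrec 22
    norm_num at h26 h24
    rw [h26, h24]; ring
  have hS1 : (∫ ω, t ω ^ 1 ∂σ) = 0 := by
    have h22 : (22:ℕ) + 1 = 23 := rfl
    rw [h22] at h1
    exact (mul_eq_zero.1 h1).resolve_right (ne_of_gt hJ23)
  have hS3 : (∫ ω, t ω ^ 3 ∂σ) = 0 := by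
    have h22 : (22:ℕ) + 3 = 25 := rfl
    rw [h22] at h3
    exact (mul_eq_zero.1 h3).resolve_right (ne_of_gt hJ25)
  set σu := (σ univ).toReal with hσu
  have hP : Real.sqrt π ^ 23 = Real.sqrt π ^ 22 * Real.sqrt π := by ring
  rw [hP] at h0
  have hS0 : (∫ ω, t ω ^ 0 ∂σ) = σu := by
    simp only [pow_zero]
    rw [integral_const]
    simp
    rfl
  have hS2 : (∫ ω, t ω ^ 2 ∂σ) = σu / 23 := by
    have e2 : (∫ ω, t ω ^ 2 ∂σ) * J 24 = Real.sqrt π / 2 * Real.sqrt π ^ 22 := h2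
    rw [hJ24] at e2
    have hne : J 22 ≠ 0 := ne_of_gt hJ22
    field_simp
    nlinarith [e2, h0]
  have hS4 : (∫ ω, t ω ^ 4 ∂σ) = 3 * σu / 575 := by
    have e4 : (∫ ω, t ω ^ 4 ∂σ) * J 26 = 3 * Real.sqrt π / 4 * Real.sqrt π ^ 22 := h4
    rw [hJ26] at e4
    have hne : J 22 ≠ 0 := ne_of_gt hJ22
    field_simp
    nlinarith [e4, h0]
  have hσupos : 0 < σu := measure_sphere_pos
  rw [hS0, hS1, hS2, hS3, hS4]
  simp only [hc, smul_eq_mul, measureReal_def, ← hσu]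
  norm_num [Matrix.cons_val_zero, Matrix.cons_val_one, Matrix.cons_val]
  simp only [Matrix.cons_val]
  field_simp
  ring







noncomputable def linPoly (y : E23) : MvPolynomial (Fin 23) ℝ :=
  ∑ i : Fin 23, MvPolynomial.C (y i) * MvPolynomial.X i

noncomputable def fPoly (y : E23) : MvPolynomial (Fin 23) ℝ :=
  (linPoly y + MvPolynomial.C (1/2)) * (linPoly y + MvPolynomial.C (1/5)) *
    (linPoly y + MvPolynomial.C (-(1/10))) * (linPoly y + MvPolynomial.C (-(2/5)))

lemma linPoly_totalDegree (y : E23) : (linPoly y).totalDegree ≤ 1 := by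
  refine le_trans (MvPolynomial.totalDegree_finset_sum _ _) ?_
  refine Finset.sup_le fun i _ => ?_
  refine le_trans (MvPolynomial.totalDegree_mul _ _) ?_
  rw [MvPolynomial.totalDegree_C, MvPolynomial.totalDegree_X]

lemma fac_totalDegree (y : E23) (a : ℝ) : (linPoly y + MvPolynomial.C a).totalDegree ≤ 1 := by
  refine le_trans (MvPolynomial.totalDegree_add _ _) ?_
  rw [MvPolynomial.totalDegree_C]
  simpa using linPoly_totalDegree y

lemma fPoly_totalDegree (y : E23) : (fPoly y).totalDegree ≤ 4 := by
  refine le_trans (MvPolynomial.totalDegree_mul _ _) ?_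
  have h3 : ((linPoly y + MvPolynomial.C (1/2)) * (linPoly y + MvPolynomial.C (1/5)) *
      (linPoly y + MvPolynomial.C (-(1/10)))).totalDegree ≤ 3 := by
    refine le_trans (MvPolynomial.totalDegree_mul _ _) ?_
    have h2 : ((linPoly y + MvPolynomial.C (1/2)) *
        (linPoly y + MvPolynomial.C (1/5))).totalDegree ≤ 2 := by
      refine le_trans (MvPolynomial.totalDegree_mul _ _) ?_
      have := fac_totalDegree y (1/2)
      have := fac_totalDegree y (1/5)
      omega
    have := fac_totalDegree y (-(1/10))
    omega
  have := fac_totalDegree y (-(2/5))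
  omega

lemma fPoly_eval (y x : E23) :
    MvPolynomial.eval (fun i => x i) (fPoly y)
      = ((inner ℝ y x : ℝ) + 1/2) * ((inner ℝ y x : ℝ) + 1/5) *
          ((inner ℝ y x : ℝ) - 1/10) * ((inner ℝ y x : ℝ) - 2/5) := by
  have hL : MvPolynomial.eval (fun i => x i) (linPoly y) = (inner ℝ y x : ℝ) := by
    rw [linPoly, map_sum]
    simp only [map_mul, MvPolynomial.eval_C, MvPolynomial.eval_X]
    rw [PiLp.inner_apply]
    simp [RCLike.inner_apply, conj_trivial]
    exact Finset.sum_congr rfl fun i _ => mul_comm _ _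
  simp only [fPoly, map_mul, map_add, MvPolynomial.eval_C, hL]
  ring







noncomputable def fval (t : ℝ) : ℝ := (t + 1/2) * (t + 1/5) * (t - 1/10) * (t - 2/5)

theorem statement13
    (C : Finset (EuclideanSpace ℝ (Fin 23))) (hC : ∀ x ∈ C, ‖x‖ = 1)
    (hdes : SphericalDesign 23 4 C)
    (havoid : ∀ x ∈ C, ∀ y ∈ C, x ≠ y →
      (inner ℝ x y : ℝ) ∉ Set.Ioo (-1/2 : ℝ) (-1/5) ∪ Set.Ioo (1/10 : ℝ) (2/5)) :
    11178 ≤ C.card := by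
  -- C is nonempty
  have hone := hdes 1 (by rw [MvPolynomial.totalDegree_one]; norm_num)
  simp only [map_one] at hone
  have hσ := measure_sphere_pos
  have havg1 : (⨍ _x : sphere (0:E23) 1, (1:ℝ)
      ∂((volume : Measure E23).toSphere)) = 1 := by
    rw [average_eq, integral_const, smul_eq_mul, smul_eq_mul, mul_one,
      inv_mul_cancel₀ (a := ((volume : Measure E23).toSphere).real univ) (ne_of_gt hσ)]
  rw [havg1] at hone
  have hcard : C.card ≠ 0 := by
    intro h
    rw [h] at hone
    simp at hone
  have hcardR : (0:ℝ) < (C.card : ℝ) := by positivity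
  -- design identity for each y ∈ C
  have hrow : ∀ y ∈ C, ∑ x ∈ C, fval (inner ℝ y x : ℝ) = (C.card : ℝ) / 11500 := by
    intro y hy
    have h := hdes (fPoly y) (fPoly_totalDegree y)
    have hL : (∑ x ∈ C, MvPolynomial.eval (fun i => x i) (fPoly y))
        = ∑ x ∈ C, fval (inner ℝ y x : ℝ) := by
      refine Finset.sum_congr rfl fun x _ => ?_
      rw [fPoly_eval, fval]
    have hR : (⨍ ω : sphere (0:E23) 1,
        MvPolynomial.eval (fun i => (ω : E23) i) (fPoly y)
          ∂((volume : Measure E23).toSphere)) = 1/11500 := by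
      rw [← avg_f y (hC y hy)]
      refine average_congr (Filter.Eventually.of_forall fun ω => ?_)
      exact fPoly_eval y ω
    rw [hL, hR] at h
    field_simp at h ⊢
    linarith
  -- total sum
  have htot : ∑ y ∈ C, ∑ x ∈ C, fval (inner ℝ y x : ℝ)
      = (C.card : ℝ) * ((C.card : ℝ) / 11500) := by
    rw [Finset.sum_congr rfl hrow, Finset.sum_const, nsmul_eq_mul]
  -- lower bound on total sum
  have hlow : (C.card : ℝ) * (243/250) ≤ ∑ y ∈ C, ∑ x ∈ C, fval (inner ℝ y x : ℝ) := by
    have hterm : ∀ y ∈ C, (243:ℝ)/250 ≤ ∑ x ∈ C, fval (inner ℝ y x : ℝ) := by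
      intro y hy
      rw [← Finset.sum_erase_add _ _ hy]
      have hdiag : fval (inner ℝ y y : ℝ) = 243/250 := by
        have h1 : (inner ℝ y y : ℝ) = 1 := by
          rw [real_inner_self_eq_norm_sq, hC y hy]; norm_num
        rw [fval, h1]; norm_num
      have hoff : (0:ℝ) ≤ ∑ x ∈ C.erase y, fval (inner ℝ y x : ℝ) := by
        refine Finset.sum_nonneg fun x hx => ?_
        obtain ⟨hxy, hxC⟩ := Finset.mem_erase.1 hx
        have hav := havoid y hy x hxC (Ne.symm hxy)
        set u : ℝ := (inner ℝ y x : ℝ) with hu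
        simp only [Set.mem_union, Set.mem_Ioo, not_or, not_and] at hav
        obtain ⟨ha, hb⟩ := hav
        rw [fval]
        have key : ∀ v : ℝ, (v ≤ -(1/2) ∨ (-(1/5) ≤ v ∧ v ≤ 1/10) ∨ (2:ℝ)/5 ≤ v) →
            0 ≤ (v + 1/2) * (v + 1/5) * (v - 1/10) * (v - 2/5) := by
          intro v hv
          have key2 : 0 ≤ ((v + 1/2) * (v + 1/5)) * ((v - 1/10) * (v - 2/5)) := by
            rcases hv with h'|⟨h1,h2⟩|h3
            · exact mul_nonneg (by nlinarith) (by nlinarith)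
            · exact mul_nonneg (by nlinarith) (by nlinarith)
            · exact mul_nonneg (by nlinarith) (by nlinarith)
          nlinarith [key2]
        refine key u ?_
        rcases le_or_gt u (-(1/2) : ℝ) with h'|h'
        · exact Or.inl h'
        · have h1 : -(1/5) ≤ u := by
            by_contra hcon
            push_neg at hcon
            have := ha (by linarith)
            linarith
          rcases le_or_gt u (1/10 : ℝ) with h2|h2
          · exact Or.inr (Or.inl ⟨h1, h2⟩)
          · have h3 : (2:ℝ)/5 ≤ u := by
              by_contra hcon
              push_neg at hcon
              have := hb h2
              linarith
            exact Or.inr (Or.inr h3)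
      linarith [hdiag, hoff]
    calc (C.card : ℝ) * (243/250) = ∑ _y ∈ C, (243:ℝ)/250 := by
          rw [Finset.sum_const, nsmul_eq_mul]
      _ ≤ _ := Finset.sum_le_sum hterm
  rw [htot] at hlow
  have hfin : (11178 : ℝ) ≤ (C.card : ℝ) := by
    have h2 := (mul_le_mul_iff_right₀ hcardR).1 hlow
    linarith
  exact_mod_cast hfin

end Aux
end
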